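/- arXiv:2412.10162 — 9 statements merged into one kernel-verified Lean document; each statement's English description precedes it below -/
import Mathlib

section
/- Let v₁, v₂ be two unit vectors in ℓ²(ℕ) with disjoint supports (supp(v₁) ∩ supp(v₂) = ∅, which in particular makes them orthonormal). Let x ∈ ℓ²(ℕ) and define the alternating projection sequences by b⁰ := x, aⁿ⁺¹ := bⁿ − ⟨bⁿ, v₁⟩v₁ − ⟨bⁿ, v₂⟩v₂ (the orthogonal projection of bⁿ onto A := (span{v₁,v₂})^⊥), and bⁿ⁺¹ := (aⁿ⁺¹)⁺ (the coordinatewise positive part, which is the metric projection of aⁿ⁺¹ onto the cone B := (ℓ²(ℕ))⁺). Then there exists y ∈ ℓ²(ℕ) with ⟨y, v₁⟩ = ⟨y, v₂⟩ = 0 and yₙ ≥ 0 for all n, such that both sequences (aⁿ) and (bⁿ) converge in norm to y. -/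
open scoped RealInnerProductSpace
open Filter Topology
open scoped ENNReal

namespace AltProjAux

noncomputable section

local notation "E" => lp (fun _ : ℕ => ℝ) 2

lemma inner_coord (f g : E) : ⟪f, g⟫ = ∑' k, f k * g k := by
  rw [lp.inner_eq_tsum]; simp [RCLike.inner_apply]; exact tsum_congr (fun k => mul_comm _ _)

lemma summable_mul_coord (f g : E) : Summable (fun k => f k * g k) := by
  have := lp.summable_inner (𝕜 := ℝ) f g
  have h2 : Summable fun i => g i * f i := by simpa [RCLike.inner_apply] using this
  exact h2.congr (fun k => mul_comm _ _)

lemma norm_sq_eq (f : E) : ‖f‖ ^ 2 = ∑' k, (f k) ^ 2 := by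
  rw [← real_inner_self_eq_norm_sq, inner_coord]; simp [sq]

lemma norm_le_of_coord (f g : E) (h : ∀ k, |f k| ≤ |g k|) : ‖f‖ ≤ ‖g‖ := by
  have h2 : ‖f‖ ^ 2 ≤ ‖g‖ ^ 2 := by
    rw [norm_sq_eq, norm_sq_eq]
    refine Summable.tsum_le_tsum (fun k => ?_) ?_ ?_
    · rw [← sq_abs (f k), ← sq_abs (g k)]
      exact pow_le_pow_left₀ (abs_nonneg _) (h k) 2
    · simpa [sq] using summable_mul_coord f f
    · simpa [sq] using summable_mul_coord g g
  nlinarith [norm_nonneg f, norm_nonneg g]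

lemma inner_zero_of_disj (u w : E) (hdisj : ∀ k, u k ≠ 0 → w k = 0) : ⟪w, u⟫ = 0 := by
  rw [inner_coord]
  have : ∀ k, w k * u k = 0 := by
    intro k
    by_cases h : u k = 0
    · rw [h, mul_zero]
    · rw [hdisj k h, zero_mul]
  simp_rw [this]
  exact tsum_zero

lemma inner_pos_step (u w bb aa bb' : E)
    (hu : ⟪u, u⟫ = 1) (hdisj : ∀ k, u k ≠ 0 → w k = 0)
    (hbpos : ∀ k, 0 ≤ bb k)
    (haa : aa = bb - ⟪bb, u⟫ • u - ⟪bb, w⟫ • w)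
    (hbb' : ∀ k, bb' k = max (aa k) 0)
    (hc : 0 ≤ ⟪bb, u⟫) : 0 ≤ ⟪bb', u⟫ := by
  have huw : ⟪w, u⟫ = 0 := inner_zero_of_disj u w hdisj
  have hau : ⟪aa, u⟫ = 0 := by
    rw [haa, inner_sub_left, inner_sub_left, real_inner_smul_left, real_inner_smul_left,
      hu, huw]
    ring
  have coordaa : ∀ k, aa k = bb k - ⟪bb, u⟫ * u k - ⟪bb, w⟫ * w k := by
    intro k
    rw [haa, lp.coeFn_sub, Pi.sub_apply, lp.coeFn_sub, Pi.sub_apply,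
      lp.coeFn_smul, Pi.smul_apply, lp.coeFn_smul, Pi.smul_apply, smul_eq_mul, smul_eq_mul]
  have key : ⟪aa, u⟫ ≤ ⟪bb', u⟫ := by
    rw [inner_coord, inner_coord]
    refine Summable.tsum_le_tsum (fun k => ?_) (summable_mul_coord aa u) (summable_mul_coord bb' u)
    rcases lt_trichotomy (u k) 0 with h | h | h
    · have hw : w k = 0 := hdisj k (ne_of_lt h)
      have haak : 0 ≤ aa k := by
        rw [coordaa k, hw, mul_zero, sub_zero]
        nlinarith [hbpos k, mul_nonneg hc (neg_nonneg.mpr h.le)]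
      rw [hbb' k, max_eq_left haak]
    · rw [h, mul_zero, mul_zero]
    · exact mul_le_mul_of_nonneg_right (by rw [hbb' k]; exact le_max_left _ _) h.le
  linarith [hau ▸ key]

lemma tendsto_of_coord_monotone (b : ℕ → E) (M : ℝ) (hM : ∀ n, ‖b n‖ ≤ M)
    (hmono : ∀ k, Monotone (fun n => b n k) ∨ Antitone (fun n => b n k)) :
    ∃ y : E, (∀ k, Tendsto (fun n => b n k) atTop (𝓝 (y k))) ∧ Tendsto b atTop (𝓝 y) := by
  have hbd : ∀ k n, |b n k| ≤ M := by
    intro k n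
    have h1 : ‖b n k‖ ≤ ‖b n‖ := lp.norm_apply_le_norm (by norm_num) (b n) k
    rw [Real.norm_eq_abs] at h1
    exact h1.trans (hM n)
  have hex : ∀ k, ∃ L, Tendsto (fun n => b n k) atTop (𝓝 L) := by
    intro k
    rcases hmono k with hm | hm
    · refine ⟨_, tendsto_atTop_ciSup hm ⟨M, ?_⟩⟩
      rintro x ⟨n, rfl⟩
      exact (le_abs_self _).trans (hbd k n)
    · refine ⟨_, tendsto_atTop_ciInf hm ⟨-M, ?_⟩⟩
      rintro x ⟨n, rfl⟩
      exact (abs_le.mp (hbd k n)).1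
  choose yf hy using hex
  have hmem : Memℓp yf 2 := by
    apply memℓp_gen' (C := M ^ 2)
    intro s
    have hrw : ∀ t : ℝ, t ^ (2 : ℝ≥0∞).toReal = t ^ 2 := by
      intro t
      rw [show ((2 : ℝ≥0∞).toReal) = ((2 : ℕ) : ℝ) by norm_num, Real.rpow_natCast]
    have hle : ∀ n : ℕ, ∑ k ∈ s, ‖b n k‖ ^ 2 ≤ M ^ 2 := by
      intro n
      have h1 : ∑ k ∈ s, ‖b n k‖ ^ 2 ≤ ∑' k, (b n k) ^ 2 := by
        refine Summable.sum_le_tsum s (fun k _ => sq_nonneg _) ?_ |>.trans_eq' ?_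
        · simpa [sq] using summable_mul_coord (b n) (b n)
        · simp [Real.norm_eq_abs, sq_abs]
      rw [← norm_sq_eq] at h1
      exact h1.trans (pow_le_pow_left₀ (norm_nonneg _) (hM n) 2)
    have htends : Tendsto (fun n => ∑ k ∈ s, ‖b n k‖ ^ 2) atTop (𝓝 (∑ k ∈ s, ‖yf k‖ ^ 2)) :=
      tendsto_finset_sum s (fun k _ => ((hy k).norm).pow 2)
    have := le_of_tendsto htends (Eventually.of_forall hle)
    calc ∑ k ∈ s, ‖yf k‖ ^ (2 : ℝ≥0∞).toReal = ∑ k ∈ s, ‖yf k‖ ^ 2 := by simp_rw [hrw]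
      _ ≤ M ^ 2 := this
  set y : E := ⟨yf, hmem⟩ with hydef
  have hyk : ∀ k, y k = yf k := fun k => rfl
  refine ⟨y, fun k => by rw [hyk]; exact hy k, ?_⟩
  have hdom : ∀ n k, (b n k - yf k) ^ 2 ≤ (b 0 k - yf k) ^ 2 := by
    intro n k
    rcases hmono k with hm | hm
    · have h1 : b n k ≤ yf k := hm.ge_of_tendsto (hy k) n
      have h2 : b 0 k ≤ b n k := hm (Nat.zero_le n)
      nlinarith
    · have h1 : yf k ≤ b n k := hm.le_of_tendsto (hy k) n
      have h2 : b n k ≤ b 0 k := hm (Nat.zero_le n)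
      nlinarith
  have hbound_summable : Summable (fun k => (b 0 k - yf k) ^ 2) := by
    have : ∀ k, (b 0 k - yf k) ^ 2 = ((b 0 - y) k) * ((b 0 - y) k) := by
      intro k
      rw [lp.coeFn_sub, Pi.sub_apply, hyk, sq]
    simp_rw [this]
    exact summable_mul_coord (b 0 - y) (b 0 - y)
  have key : Tendsto (fun n => ∑' k, (b n k - yf k) ^ 2) atTop (𝓝 0) := by
    have h0 : (0:ℝ) = ∑' _ : ℕ, (0:ℝ) := by simp
    rw [h0]
    refine tendsto_tsum_of_dominated_convergence hbound_summable (fun k => ?_) ?_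
    · have : Tendsto (fun n => b n k - yf k) atTop (𝓝 0) := by
        simpa using (hy k).sub (tendsto_const_nhds (x := yf k))
      simpa using this.pow 2
    · refine Eventually.of_forall (fun n k => ?_)
      rw [Real.norm_eq_abs, abs_of_nonneg (sq_nonneg _)]
      exact hdom n k
  have hnorm_eq : ∀ n, ‖b n - y‖ ^ 2 = ∑' k, (b n k - yf k) ^ 2 := by
    intro n
    rw [norm_sq_eq]
    congr 1
  rw [tendsto_iff_norm_sub_tendsto_zero]
  have h2 : Tendsto (fun n => ‖b n - y‖ ^ 2) atTop (𝓝 0) := by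
    simpa [hnorm_eq] using key
  simpa [Real.sqrt_sq (norm_nonneg _), Real.sqrt_zero] using h2.sqrt

end

end AltProjAux

set_option maxHeartbeats 1000000 in
open AltProjAux in
/-- Alternating projections in ℓ²(ℕ) onto the orthogonal complement of the span
of two unit vectors with disjoint supports and onto the nonnegative cone converge in norm. -/
theorem alternating_projections_disjoint_supports_l2
    (v₁ v₂ : lp (fun _ : ℕ => ℝ) 2)
    (hv₁ : ‖v₁‖ = 1) (hv₂ : ‖v₂‖ = 1)
    (hdisj : {k : ℕ | v₁ k ≠ 0} ∩ {k : ℕ | v₂ k ≠ 0} = ∅)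
    (x : lp (fun _ : ℕ => ℝ) 2)
    (a b : ℕ → lp (fun _ : ℕ => ℝ) 2)
    (hb0 : b 0 = x)
    (ha : ∀ n : ℕ, a (n + 1) = b n - ⟪b n, v₁⟫ • v₁ - ⟪b n, v₂⟫ • v₂)
    (hb : ∀ (n : ℕ) (k : ℕ), (b (n + 1)) k = max ((a (n + 1)) k) 0) :
    ∃ y : lp (fun _ : ℕ => ℝ) 2,
      ⟪y, v₁⟫ = 0 ∧ ⟪y, v₂⟫ = 0 ∧ (∀ k : ℕ, 0 ≤ y k) ∧
      Tendsto a atTop (nhds y) ∧ Tendsto b atTop (nhds y) := by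
  classical
  -- pointwise disjointness
  have hdisj' : ∀ k, v₁ k ≠ 0 → v₂ k = 0 := by
    intro k h1
    by_contra h2
    have hk : k ∈ ({k : ℕ | v₁ k ≠ 0} ∩ {k : ℕ | v₂ k ≠ 0}) := ⟨h1, h2⟩
    rw [hdisj] at hk
    exact hk
  have hdisj'' : ∀ k, v₂ k ≠ 0 → v₁ k = 0 := by
    intro k h2
    by_contra h1
    exact h2 (hdisj' k h1)
  have hv₁i : ⟪v₁, v₁⟫ = 1 := by rw [real_inner_self_eq_norm_sq, hv₁, one_pow]
  have hv₂i : ⟪v₂, v₂⟫ = 1 := by rw [real_inner_self_eq_norm_sq, hv₂, one_pow]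
  have h21 : ⟪v₂, v₁⟫ = 0 := inner_zero_of_disj v₁ v₂ hdisj'
  have h12 : ⟪v₁, v₂⟫ = 0 := inner_zero_of_disj v₂ v₁ hdisj''
  -- positivity of b (n+1)
  have hpos : ∀ n k, 0 ≤ b (n + 1) k := fun n k => by rw [hb n k]; exact le_max_right _ _
  -- sign branches for the coefficients
  have hsign₁ : (∀ n, 0 ≤ ⟪b (n + 1), v₁⟫) ∨ (∀ n, ⟪b (n + 1), v₁⟫ ≤ 0) := by
    rcases le_total 0 (⟪b 1, v₁⟫) with h | h
    · left
      intro n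
      induction n with
      | zero => exact h
      | succ m ih =>
        exact inner_pos_step v₁ v₂ (b (m + 1)) (a (m + 2)) (b (m + 2)) hv₁i hdisj'
          (hpos m) (ha (m + 1)) (hb (m + 1)) ih
    · right
      intro n
      induction n with
      | zero => exact h
      | succ m ih =>
        have hneg := inner_pos_step (-v₁) v₂ (b (m + 1)) (a (m + 2)) (b (m + 2))
          (by rw [inner_neg_neg, hv₁i])
          (fun k hk => hdisj' k (by simpa [lp.coeFn_neg, Pi.neg_apply, neg_ne_zero] using hk))
          (hpos m)
          (by rw [ha (m + 1), inner_neg_right]; rw [neg_smul, smul_neg, neg_neg])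
          (hb (m + 1))
          (by rw [inner_neg_right]; linarith)
        rw [inner_neg_right] at hneg
        linarith
  have hsign₂ : (∀ n, 0 ≤ ⟪b (n + 1), v₂⟫) ∨ (∀ n, ⟪b (n + 1), v₂⟫ ≤ 0) := by
    rcases le_total 0 (⟪b 1, v₂⟫) with h | h
    · left
      intro n
      induction n with
      | zero => exact h
      | succ m ih =>
        exact inner_pos_step v₂ v₁ (b (m + 1)) (a (m + 2)) (b (m + 2)) hv₂i hdisj''
          (hpos m) (by rw [ha (m + 1), sub_right_comm]) (hb (m + 1)) ih
    · right
      intro n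
      induction n with
      | zero => exact h
      | succ m ih =>
        have hneg := inner_pos_step (-v₂) v₁ (b (m + 1)) (a (m + 2)) (b (m + 2))
          (by rw [inner_neg_neg, hv₂i])
          (fun k hk => hdisj'' k (by simpa [lp.coeFn_neg, Pi.neg_apply, neg_ne_zero] using hk))
          (hpos m)
          (by rw [ha (m + 1), sub_right_comm, inner_neg_right]; rw [neg_smul, smul_neg, neg_neg])
          (hb (m + 1))
          (by rw [inner_neg_right]; linarith)
        rw [inner_neg_right] at hneg
        linarith
  -- coordinate form of the recursion
  have hcoord : ∀ n k, a (n + 1) k = b n k - ⟪b n, v₁⟫ * v₁ k - ⟪b n, v₂⟫ * v₂ k := by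
    intro n k
    rw [ha n, lp.coeFn_sub, Pi.sub_apply, lp.coeFn_sub, Pi.sub_apply,
      lp.coeFn_smul, Pi.smul_apply, lp.coeFn_smul, Pi.smul_apply, smul_eq_mul, smul_eq_mul]
  -- coordinatewise monotonicity of the shifted sequence
  have hmono : ∀ k, Monotone (fun n => b (n + 1) k) ∨ Antitone (fun n => b (n + 1) k) := by
    intro k
    have hd : (∀ n, ⟪b (n + 1), v₁⟫ * v₁ k + ⟪b (n + 1), v₂⟫ * v₂ k ≤ 0) ∨
        (∀ n, 0 ≤ ⟪b (n + 1), v₁⟫ * v₁ k + ⟪b (n + 1), v₂⟫ * v₂ k) := by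
      by_cases h1 : v₁ k = 0
      · by_cases h2 : v₂ k = 0
        · left; intro n; simp [h1, h2]
        · rcases hsign₂ with hs | hs
          · rcases lt_or_gt_of_ne h2 with hv | hv
            · left; intro n
              have := mul_nonneg (hs n) (neg_nonneg.mpr hv.le)
              simp only [h1, mul_zero, zero_add]
              nlinarith
            · right; intro n
              have := mul_nonneg (hs n) hv.le
              simp only [h1, mul_zero, zero_add]
              linarith
          · rcases lt_or_gt_of_ne h2 with hv | hv
            · right; intro n
              have := mul_nonneg (neg_nonneg.mpr (hs n)) (neg_nonneg.mpr hv.le)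
              simp only [h1, mul_zero, zero_add]
              nlinarith
            · left; intro n
              have := mul_nonneg (neg_nonneg.mpr (hs n)) hv.le
              simp only [h1, mul_zero, zero_add]
              nlinarith
      · have h2 : v₂ k = 0 := hdisj' k h1
        rcases hsign₁ with hs | hs
        · rcases lt_or_gt_of_ne h1 with hv | hv
          · left; intro n
            have := mul_nonneg (hs n) (neg_nonneg.mpr hv.le)
            simp only [h2, mul_zero, add_zero]
            nlinarith
          · right; intro n
            have := mul_nonneg (hs n) hv.le
            simp only [h2, mul_zero, add_zero]
            linarith
        · rcases lt_or_gt_of_ne h1 with hv | hv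
          · right; intro n
            have := mul_nonneg (neg_nonneg.mpr (hs n)) (neg_nonneg.mpr hv.le)
            simp only [h2, mul_zero, add_zero]
            nlinarith
          · left; intro n
            have := mul_nonneg (neg_nonneg.mpr (hs n)) hv.le
            simp only [h2, mul_zero, add_zero]
            nlinarith
    have hstep : ∀ n, b (n + 2) k =
        max (b (n + 1) k - (⟪b (n + 1), v₁⟫ * v₁ k + ⟪b (n + 1), v₂⟫ * v₂ k)) 0 := by
      intro n
      rw [hb (n + 1) k, hcoord (n + 1) k]
      ring_nf
    rcases hd with hd | hd
    · left
      apply monotone_nat_of_le_succ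
      intro n
      have h := hstep n
      have hdn := hd n
      calc b (n + 1) k ≤ b (n + 1) k - (⟪b (n + 1), v₁⟫ * v₁ k + ⟪b (n + 1), v₂⟫ * v₂ k) := by
            linarith
        _ ≤ max (b (n + 1) k - (⟪b (n + 1), v₁⟫ * v₁ k + ⟪b (n + 1), v₂⟫ * v₂ k)) 0 :=
            le_max_left _ _
        _ = b (n + 2) k := h.symm
    · right
      apply antitone_nat_of_succ_le
      intro n
      have h := hstep n
      have hdn := hd n
      have h0 := hpos n k
      rw [h]
      apply max_le _ h0
      linarith
  -- norm bookkeeping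
  have hanorm : ∀ n, ‖a (n + 1)‖ ^ 2 = ‖b n‖ ^ 2 - ⟪b n, v₁⟫ ^ 2 - ⟪b n, v₂⟫ ^ 2 := by
    intro n
    rw [← real_inner_self_eq_norm_sq, ← real_inner_self_eq_norm_sq, ha n]
    simp only [inner_sub_left, inner_sub_right, real_inner_smul_left, real_inner_smul_right,
      hv₁i, hv₂i, h12, h21]
    rw [real_inner_comm v₁ (b n), real_inner_comm v₂ (b n)]
    ring
  have hbnormle : ∀ n, ‖b (n + 1)‖ ≤ ‖a (n + 1)‖ := by
    intro n
    apply norm_le_of_coord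
    intro k
    rw [hb n k, abs_of_nonneg (le_max_right _ _)]
    exact max_le (le_abs_self _) (abs_nonneg _)
  have hnormdec : ∀ n, ‖b (n + 1)‖ ≤ ‖b n‖ := by
    intro n
    have h2 := hanorm n
    have h3 : ‖b (n + 1)‖ ^ 2 ≤ ‖a (n + 1)‖ ^ 2 :=
      pow_le_pow_left₀ (norm_nonneg _) (hbnormle n) 2
    nlinarith [norm_nonneg (b (n + 1)), norm_nonneg (b n),
      sq_nonneg (⟪b n, v₁⟫), sq_nonneg (⟪b n, v₂⟫)]
  have hMb : ∀ n, ‖b n‖ ≤ ‖b 0‖ := by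
    intro n
    induction n with
    | zero => exact le_refl _
    | succ m ih => exact (hnormdec m).trans ih
  -- convergence of b
  obtain ⟨y, hyc, hyt⟩ := tendsto_of_coord_monotone (fun n => b (n + 1)) (‖b 0‖)
    (fun n => hMb (n + 1)) hmono
  have hbt : Tendsto b atTop (𝓝 y) := (tendsto_add_atTop_iff_nat 1).mp hyt
  -- nonnegativity of y
  have hynn : ∀ k, 0 ≤ y k := fun k =>
    ge_of_tendsto (hyc k) (Eventually.of_forall (fun n => hpos n k))
  -- the coefficients tend to 0
  have hnormt : Tendsto (fun n => ‖b n‖ ^ 2) atTop (𝓝 (‖y‖ ^ 2)) := (hbt.norm).pow 2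
  have hdifft : Tendsto (fun n => ‖b n‖ ^ 2 - ‖b (n + 1)‖ ^ 2) atTop (𝓝 0) := by
    have hshift : Tendsto (fun n => ‖b (n + 1)‖ ^ 2) atTop (𝓝 (‖y‖ ^ 2)) :=
      (tendsto_add_atTop_iff_nat 1).mpr hnormt
    simpa using hnormt.sub hshift
  have hcsq : ∀ n, ⟪b n, v₁⟫ ^ 2 + ⟪b n, v₂⟫ ^ 2 ≤ ‖b n‖ ^ 2 - ‖b (n + 1)‖ ^ 2 := by
    intro n
    have h2 := hanorm n
    have h3 : ‖b (n + 1)‖ ^ 2 ≤ ‖a (n + 1)‖ ^ 2 :=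
      pow_le_pow_left₀ (norm_nonneg _) (hbnormle n) 2
    linarith
  have hc₁L : Tendsto (fun n => ⟪b n, v₁⟫) atTop (𝓝 (⟪y, v₁⟫)) :=
    hbt.inner tendsto_const_nhds
  have hc₂L : Tendsto (fun n => ⟪b n, v₂⟫) atTop (𝓝 (⟪y, v₂⟫)) :=
    hbt.inner tendsto_const_nhds
  have hsqz : Tendsto (fun n => ⟪b n, v₁⟫ ^ 2 + ⟪b n, v₂⟫ ^ 2) atTop (𝓝 0) := by
    refine tendsto_of_tendsto_of_tendsto_of_le_of_le tendsto_const_nhds hdifft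
      (fun n => by positivity) hcsq
  have hsum0 : ⟪y, v₁⟫ ^ 2 + ⟪y, v₂⟫ ^ 2 = 0 := by
    have := (hc₁L.pow 2).add (hc₂L.pow 2)
    exact tendsto_nhds_unique this hsqz
  have hyv₁ : ⟪y, v₁⟫ = 0 := by nlinarith [sq_nonneg (⟪y, v₁⟫), sq_nonneg (⟪y, v₂⟫)]
  have hyv₂ : ⟪y, v₂⟫ = 0 := by nlinarith [sq_nonneg (⟪y, v₁⟫), sq_nonneg (⟪y, v₂⟫)]
  -- convergence of a
  have hat : Tendsto a atTop (𝓝 y) := by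
    apply (tendsto_add_atTop_iff_nat 1).mp
    have hc₁0 : Tendsto (fun n => ⟪b n, v₁⟫) atTop (𝓝 (0 : ℝ)) := hyv₁ ▸ hc₁L
    have hc₂0 : Tendsto (fun n => ⟪b n, v₂⟫) atTop (𝓝 (0 : ℝ)) := hyv₂ ▸ hc₂L
    have h : Tendsto (fun n => b n - ⟪b n, v₁⟫ • v₁ - ⟪b n, v₂⟫ • v₂) atTop
        (𝓝 (y - (0 : ℝ) • v₁ - (0 : ℝ) • v₂)) :=
      (hbt.sub (hc₁0.smul tendsto_const_nhds)).sub (hc₂0.smul tendsto_const_nhds)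
    simp only [zero_smul, sub_zero] at h
    exact h.congr (fun n => (ha n).symm)
  exact ⟨y, hyv₁, hyv₂, hynn, hat, hbt⟩
end

section
/- Let N ≥ 2 and let v₁, …, v_N be unit vectors in ℓ²(ℕ) with pairwise disjoint supports (supp(vᵢ) ∩ supp(vⱼ) = ∅ for i ≠ j, which makes them orthonormal). Let x ∈ ℓ²(ℕ) and define the alternating projection sequences by b⁰ := x, aⁿ⁺¹ := bⁿ − Σᵢ₌₁^N ⟨bⁿ, vᵢ⟩vᵢ, and bⁿ⁺¹ := (aⁿ⁺¹)⁺ (coordinatewise positive part). Then there exists y ∈ ℓ²(ℕ) with ⟨y, vᵢ⟩ = 0 for all i = 1,…,N and yₙ ≥ 0 for all n, such that both sequences (aⁿ) and (bⁿ) converge in norm to y. -/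
open scoped RealInnerProductSpace ENNReal
open Filter

section Aux

lemma l2_hasSum (f g : lp (fun _ : ℕ => ℝ) 2) : HasSum (fun k => f k * g k) ⟪f, g⟫ := by
  have := lp.hasSum_inner (𝕜 := ℝ) f g
  simpa [RCLike.inner_apply, starRingEnd_apply, mul_comm] using this

lemma l2_summable (f g : lp (fun _ : ℕ => ℝ) 2) : Summable (fun k => f k * g k) :=
  (l2_hasSum f g).summable

lemma l2_inner_tsum (f g : lp (fun _ : ℕ => ℝ) 2) : ⟪f, g⟫ = ∑' k, f k * g k :=
  (l2_hasSum f g).tsum_eq.symm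

lemma l2_normsq (f : lp (fun _ : ℕ => ℝ) 2) : ‖f‖ ^ 2 = ∑' k, f k * f k := by
  rw [← real_inner_self_eq_norm_sq]; exact l2_inner_tsum f f

lemma l2_apply_le (f : lp (fun _ : ℕ => ℝ) 2) (k : ℕ) : |f k| ≤ ‖f‖ := by
  simpa using lp.norm_apply_le_norm (by norm_num) f k

lemma mem_l2_of_summable_sq {f : ℕ → ℝ} (h : Summable fun k => f k * f k) :
    Memℓp f 2 := by
  apply memℓp_gen
  have h2 : (2 : ℝ≥0∞).toReal = ((2:ℕ):ℝ) := by simp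
  have heq : (fun k : ℕ => ‖f k‖ ^ (2 : ℝ≥0∞).toReal) = fun k => f k * f k := by
    funext k
    rw [h2, Real.rpow_natCast]
    simp [sq, abs_mul_abs_self]
  rw [heq]; exact h

lemma max_sq_le (x : ℝ) : max x 0 * max x 0 ≤ x * x := by
  rcases le_total x 0 with h | h
  · rw [max_eq_right h]; nlinarith
  · rw [max_eq_left h]

end Aux

set_option maxHeartbeats 1000000 in
/-- Alternating projections in ℓ²(ℕ) onto the orthogonal complement of the span
of N ≥ 2 unit vectors with pairwise disjoint supports and onto the nonnegative cone
converge in norm. -/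
theorem alternating_projections_pairwise_disjoint_supports_l2
    (N : ℕ) (hN : 2 ≤ N)
    (v : Fin N → lp (fun _ : ℕ => ℝ) 2)
    (hv : ∀ i, ‖v i‖ = 1)
    (hdisj : ∀ i j : Fin N, i ≠ j → {k : ℕ | v i k ≠ 0} ∩ {k : ℕ | v j k ≠ 0} = ∅)
    (x : lp (fun _ : ℕ => ℝ) 2)
    (a b : ℕ → lp (fun _ : ℕ => ℝ) 2)
    (hb0 : b 0 = x)
    (ha : ∀ n : ℕ, a (n + 1) = b n - ∑ i : Fin N, ⟪b n, v i⟫ • v i)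
    (hb : ∀ (n : ℕ) (k : ℕ), (b (n + 1)) k = max ((a (n + 1)) k) 0) :
    ∃ y : lp (fun _ : ℕ => ℝ) 2,
      (∀ i : Fin N, ⟪y, v i⟫ = 0) ∧ (∀ k : ℕ, 0 ≤ y k) ∧
      Tendsto a atTop (nhds y) ∧ Tendsto b atTop (nhds y) := by
  classical
  set t : ℕ → Fin N → ℝ := fun n i => ⟪b n, v i⟫ with ht
  -- disjoint supports pointwise
  have hdisj' : ∀ (i j : Fin N), i ≠ j → ∀ k, v i k ≠ 0 → v j k = 0 := by
    intro i j hij k hik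
    by_contra hjk
    have : k ∈ ({k : ℕ | v i k ≠ 0} ∩ {k : ℕ | v j k ≠ 0}) := ⟨hik, hjk⟩
    rw [hdisj i j hij] at this
    exact this
  -- orthonormality
  have horto : Orthonormal ℝ v := by
    rw [orthonormal_iff_ite]
    intro i j
    by_cases hij : i = j
    · subst hij
      simp only [if_pos rfl]
      rw [real_inner_self_eq_norm_sq, hv i]; norm_num
    · simp only [if_neg hij]
      rw [l2_inner_tsum]
      have : ∀ k : ℕ, v i k * v j k = 0 := by
        intro k
        by_cases hik : v i k = 0
        · simp [hik]
        · simp [hdisj' i j hij k hik]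
      simp [this]
  -- coordinate formula for a (n+1)
  have hak : ∀ n k, a (n + 1) k = b n k - ∑ i : Fin N, t n i * v i k := by
    intro n k
    rw [ha n, lp.coeFn_sub, Pi.sub_apply]
    congr 1
    rw [lp.coeFn_sum, Finset.sum_apply]
    apply Finset.sum_congr rfl
    intro i _
    rw [lp.coeFn_smul, Pi.smul_apply, smul_eq_mul]
  -- nonnegativity of b (n+1)
  have hbpos : ∀ n k, 0 ≤ b (n + 1) k := by
    intro n k
    rw [hb n k]; exact le_max_right _ _
  -- orthogonality of a (n+1) to each v i
  have hao : ∀ n i, ⟪a (n + 1), v i⟫ = 0 := by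
    intro n i
    rw [ha n, inner_sub_left, sum_inner]
    have : ∀ j : Fin N, j ∈ Finset.univ →
        ⟪(⟪b n, v j⟫ : ℝ) • v j, v i⟫ = if j = i then t n i else 0 := by
      intro j _
      rw [real_inner_smul_left]
      by_cases hji : j = i
      · subst hji
        rw [if_pos rfl, real_inner_self_eq_norm_sq, hv j]
        norm_num [ht]
      · rw [if_neg hji, horto.2 hji, mul_zero]
    rw [Finset.sum_congr rfl this, Finset.sum_ite_eq' Finset.univ i (fun _ => t n i)]
    simp [ht]
  -- the coordinate-sum collapses on the support of v i
  have hcollapse : ∀ n (i : Fin N) k, v i k ≠ 0 →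
      (∑ j : Fin N, t n j * v j k) = t n i * v i k := by
    intro n i k hik
    apply Finset.sum_eq_single i
    · intro j _ hji
      rw [hdisj' i j (Ne.symm hji) k hik, mul_zero]
    · intro h; exact absurd (Finset.mem_univ i) h
  -- key formula: t (n+1) i as a tsum of the clipped parts
  have htsum : ∀ n i, t (n + 1) i = ∑' k, (max (a (n+1) k) 0 - a (n+1) k) * v i k := by
    intro n i
    have h1 : t (n + 1) i = ⟪b (n+1) - a (n+1), v i⟫ := by
      rw [inner_sub_left, hao n i, sub_zero]
    rw [h1, l2_inner_tsum]
    congr 1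
    funext k
    rw [lp.coeFn_sub, Pi.sub_apply, hb n k]
  -- sign preservation
  have hsignstep : ∀ n (i : Fin N), 1 ≤ n →
      (0 ≤ t n i → 0 ≤ t (n + 1) i) ∧ (t n i ≤ 0 → t (n + 1) i ≤ 0) := by
    intro n i hn
    obtain ⟨m, rfl⟩ : ∃ m, n = m + 1 := ⟨n - 1, (Nat.succ_pred_eq_of_pos hn).symm⟩
    constructor
    · intro hti
      rw [htsum]
      apply tsum_nonneg
      intro k
      by_cases hik : v i k = 0
      · simp [hik]
      rcases le_or_gt 0 (a (m + 1 + 1) k) with hka | hka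
      · rw [max_eq_left hka, sub_self, zero_mul]
      · have hform : a (m + 1 + 1) k = b (m+1) k - t (m+1) i * v i k := by
          rw [hak, hcollapse (m+1) i k hik]
        have hb1 : 0 ≤ b (m + 1) k := hbpos m k
        have hka' : b (m+1) k - t (m+1) i * v i k < 0 := hform ▸ hka
        have h2 : 0 < t (m+1) i * v i k := by linarith
        have hvik : 0 < v i k := by
          rcases lt_or_ge 0 (v i k) with h | h
          · exact h
          · exfalso; nlinarith
        have hnn : 0 ≤ max (a (m+1+1) k) 0 - a (m+1+1) k := by
          rw [max_eq_right hka.le]; linarith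
        positivity
    · intro hti
      rw [htsum]
      apply tsum_nonpos
      intro k
      by_cases hik : v i k = 0
      · simp [hik]
      rcases le_or_gt 0 (a (m + 1 + 1) k) with hka | hka
      · rw [max_eq_left hka, sub_self, zero_mul]
      · have hform : a (m + 1 + 1) k = b (m+1) k - t (m+1) i * v i k := by
          rw [hak, hcollapse (m+1) i k hik]
        have hb1 : 0 ≤ b (m + 1) k := hbpos m k
        have hka' : b (m+1) k - t (m+1) i * v i k < 0 := hform ▸ hka
        have h2 : 0 < t (m+1) i * v i k := by linarith
        have hvik : v i k < 0 := by
          rcases lt_or_ge (v i k) 0 with h | h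
          · exact h
          · exfalso; nlinarith
        have hpos : 0 ≤ max (a (m+1+1) k) 0 - a (m+1+1) k := by
          rw [max_eq_right hka.le]; linarith
        exact mul_nonpos_of_nonneg_of_nonpos hpos hvik.le
  -- constant sign along each i
  have hsgn : ∀ i : Fin N, (∀ n, 1 ≤ n → 0 ≤ t n i) ∨ (∀ n, 1 ≤ n → t n i ≤ 0) := by
    intro i
    rcases le_total 0 (t 1 i) with h | h
    · left
      intro n hn
      induction n, hn using Nat.le_induction with
      | base => exact h
      | succ n hn ih => exact (hsignstep n i hn).1 ih
    · right
      intro n hn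
      induction n, hn using Nat.le_induction with
      | base => exact h
      | succ n hn ih => exact (hsignstep n i hn).2 ih
  -- coordinatewise monotonicity of the shifted sequence g n = b (n+1)
  have hmono : ∀ k : ℕ, Monotone (fun n => b (n + 1) k) ∨ Antitone (fun n => b (n + 1) k) := by
    intro k
    by_cases hk : ∀ i : Fin N, v i k = 0
    · left
      apply monotone_nat_of_le_succ
      intro n
      have : a (n + 1 + 1) k = b (n + 1) k := by
        rw [hak]
        simp [hk]
      rw [hb (n+1) k, this, max_eq_left (hbpos n k)]
    · push_neg at hk
      obtain ⟨i, hik⟩ := hk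
      have hstep : ∀ n, b (n + 1 + 1) k = max (b (n+1) k - t (n+1) i * v i k) 0 := by
        intro n
        rw [hb (n+1) k, hak, hcollapse (n+1) i k hik]
      rcases hsgn i with hpos | hneg
      · rcases hik.lt_or_gt with hv0 | hv0
        · -- v i k < 0, t ≥ 0: increasing
          left
          apply monotone_nat_of_le_succ
          intro n
          rw [hstep n]
          have h1 : 0 ≤ t (n+1) i := hpos (n+1) (Nat.le_add_left 1 n)
          have : b (n+1) k ≤ b (n+1) k - t (n+1) i * v i k := by nlinarith
          exact this.trans (le_max_left _ _)
        · -- v i k > 0, t ≥ 0: decreasing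
          right
          apply antitone_nat_of_succ_le
          intro n
          rw [hstep n]
          have h1 : 0 ≤ t (n+1) i := hpos (n+1) (Nat.le_add_left 1 n)
          apply max_le _ (hbpos n k)
          nlinarith
      · rcases hik.lt_or_gt with hv0 | hv0
        · right
          apply antitone_nat_of_succ_le
          intro n
          rw [hstep n]
          have h1 : t (n+1) i ≤ 0 := hneg (n+1) (Nat.le_add_left 1 n)
          apply max_le _ (hbpos n k)
          nlinarith
        · left
          apply monotone_nat_of_le_succ
          intro n
          rw [hstep n]
          have h1 : t (n+1) i ≤ 0 := hneg (n+1) (Nat.le_add_left 1 n)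
          have : b (n+1) k ≤ b (n+1) k - t (n+1) i * v i k := by nlinarith
          exact this.trans (le_max_left _ _)
  -- norm comparisons
  have hnba : ∀ n, ‖b (n+1)‖ ≤ ‖a (n+1)‖ := by
    intro n
    have hsq : ‖b (n+1)‖^2 ≤ ‖a (n+1)‖^2 := by
      rw [l2_normsq, l2_normsq]
      apply Summable.tsum_le_tsum _ (l2_summable _ _) (l2_summable _ _)
      intro k
      rw [hb n k]
      exact max_sq_le _
    exact le_of_pow_le_pow_left₀ two_ne_zero (norm_nonneg _) hsq
  have hab : ∀ n, ‖a (n+1)‖ ≤ ‖b n‖ := by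
    intro n
    have hsum : b n = a (n+1) + ∑ i : Fin N, t n i • v i := by
      rw [ha n, sub_add_cancel]
    have hinner : ⟪a (n+1), ∑ i : Fin N, t n i • v i⟫ = 0 := by
      rw [inner_sum]
      apply Finset.sum_eq_zero
      intro i _
      rw [real_inner_smul_right, hao n i, mul_zero]
    have hsq : ‖b n‖^2 = ‖a (n+1)‖^2 + ‖∑ i : Fin N, t n i • v i‖^2 := by
      rw [hsum, norm_add_sq_real, hinner]; ring
    have h2 : ‖a (n+1)‖^2 ≤ ‖b n‖^2 := by nlinarith [sq_nonneg ‖∑ i : Fin N, t n i • v i‖]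
    exact le_of_pow_le_pow_left₀ two_ne_zero (norm_nonneg _) h2
  have hC : ∀ n, ‖b (n+1)‖ ≤ ‖b 1‖ := by
    intro n
    induction n with
    | zero => exact le_refl _
    | succ n ih => exact ((hnba (n+1)).trans (hab (n+1))).trans ih
  have hkb : ∀ n k, b (n+1) k ≤ ‖b 1‖ :=
    fun n k => (le_abs_self _).trans ((l2_apply_le _ k).trans (hC n))
  -- pointwise limits
  have hlim : ∀ k, ∃ l, Tendsto (fun n => b (n+1) k) atTop (nhds l) := by
    intro k
    rcases hmono k with hm | hm
    · exact ⟨_, tendsto_atTop_ciSup hm ⟨‖b 1‖, by rintro z ⟨n, rfl⟩; exact hkb n k⟩⟩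
    · exact ⟨_, tendsto_atTop_ciInf hm ⟨0, by rintro z ⟨n, rfl⟩; exact hbpos n k⟩⟩
  choose y0 hy0 using hlim
  have hy0nonneg : ∀ k, 0 ≤ y0 k := fun k =>
    ge_of_tendsto' (hy0 k) (fun n => hbpos n k)
  have hbd : ∀ n k, b (n+1) k ≤ b 1 k + y0 k := by
    intro n k
    rcases hmono k with hm | hm
    · have h1 : b (n+1) k ≤ y0 k := hm.ge_of_tendsto (hy0 k) n
      have h2 : (0:ℝ) ≤ b 1 k := hbpos 0 k
      linarith
    · have h1 : b (n+1) k ≤ b (0+1) k := hm (Nat.zero_le n)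
      have h2 : b (0+1) k = b 1 k := rfl
      linarith [hy0nonneg k]
  -- summability of the squares of y0
  have hC2 : ∀ n (s : Finset ℕ), ∑ k ∈ s, b (n+1) k * b (n+1) k ≤ ‖b 1‖^2 := by
    intro n s
    have h1 : ∑ k ∈ s, b (n+1) k * b (n+1) k ≤ ∑' k, b (n+1) k * b (n+1) k :=
      Summable.sum_le_tsum s (fun k _ => mul_self_nonneg _) (l2_summable _ _)
    rw [← l2_normsq] at h1
    have h2 : ‖b (n+1)‖^2 ≤ ‖b 1‖^2 := by nlinarith [hC n, norm_nonneg (b (n+1))]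
    linarith
  have hy0sum : Summable (fun k => y0 k * y0 k) := by
    apply summable_of_sum_le (fun k => mul_self_nonneg (y0 k))
    intro s
    have hlim' : Tendsto (fun n => ∑ k ∈ s, b (n+1) k * b (n+1) k) atTop
        (nhds (∑ k ∈ s, y0 k * y0 k)) := by
      apply tendsto_finset_sum
      intro k _
      exact (hy0 k).mul (hy0 k)
    exact le_of_tendsto hlim' (Filter.Eventually.of_forall fun n => hC2 n s)
  set y : lp (fun _ : ℕ => ℝ) 2 := ⟨y0, mem_l2_of_summable_sq hy0sum⟩ with hy
  have hyk : ∀ k, (y : ℕ → ℝ) k = y0 k := fun k => rfl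
  -- dominated convergence: b (n+1) → y in norm
  have hDsum : Summable (fun k => (b 1 k + y0 k) * (b 1 k + y0 k)) := by
    have h1 : Summable (fun k : ℕ => 2*(b 1 k * b 1 k) + 2*(y0 k * y0 k)) :=
      ((l2_summable (b 1) (b 1)).mul_left 2).add (hy0sum.mul_left 2)
    apply h1.of_nonneg_of_le (fun k => mul_self_nonneg _)
    intro k; nlinarith [sq_nonneg (b 1 k - y0 k)]
  have habs : ∀ n k, |b (n+1) k - y0 k| ≤ b 1 k + y0 k := by
    intro n k
    rw [abs_sub_le_iff]
    constructor
    · linarith [hbd n k, hy0nonneg k]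
    · linarith [hbpos n k, hbpos 0 k, hy0nonneg k]
  have hnormconv : Tendsto (fun n => ∑' k, (b (n+1) k - y0 k) * (b (n+1) k - y0 k))
      atTop (nhds 0) := by
    have key := tendsto_tsum_of_dominated_convergence
      (f := fun (n : ℕ) (k : ℕ) => (b (n+1) k - y0 k) * (b (n+1) k - y0 k))
      (g := fun _ : ℕ => (0:ℝ))
      (bound := fun k => (b 1 k + y0 k) * (b 1 k + y0 k)) (𝓕 := atTop) hDsum ?_ ?_
    · simpa using key
    · intro k
      have h1 : Tendsto (fun n => b (n+1) k - y0 k) atTop (nhds 0) := by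
        simpa using (hy0 k).sub (tendsto_const_nhds (x := y0 k))
      simpa using h1.mul h1
    · apply Filter.Eventually.of_forall
      intro n k
      have h0 := habs n k
      have hD0 : (0:ℝ) ≤ b 1 k + y0 k := by linarith [hbpos 0 k, hy0nonneg k]
      rw [Real.norm_eq_abs, abs_mul]
      exact mul_le_mul h0 h0 (abs_nonneg _) hD0
  have hby : Tendsto (fun n => b (n+1)) atTop (nhds y) := by
    rw [tendsto_iff_norm_sub_tendsto_zero]
    have hsq : ∀ n, ‖b (n+1) - y‖^2 = ∑' k, (b (n+1) k - y0 k) * (b (n+1) k - y0 k) := by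
      intro n
      rw [l2_normsq]
      congr 1
    have h2 : Tendsto (fun n => ‖b (n+1) - y‖^2) atTop (nhds 0) :=
      hnormconv.congr (fun n => (hsq n).symm)
    have h3 : Tendsto (fun n => Real.sqrt (‖b (n+1) - y‖^2)) atTop (nhds (Real.sqrt 0)) :=
      (Real.continuous_sqrt.tendsto 0).comp h2
    rw [Real.sqrt_zero] at h3
    exact h3.congr (fun n => Real.sqrt_sq (norm_nonneg _))
  have hbtend : Tendsto b atTop (nhds y) := (tendsto_add_atTop_iff_nat 1).mp hby
  -- limit of the inner products
  have hti : ∀ i : Fin N, Tendsto (fun n => t n i) atTop (nhds ⟪y, v i⟫) :=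
    fun i => Filter.Tendsto.inner (𝕜 := ℝ) hbtend tendsto_const_nhds
  set τ : Fin N → ℝ := fun i => ⟪y, v i⟫ with hτdef
  set P : lp (fun _ : ℕ => ℝ) 2 := ∑ i : Fin N, τ i • v i with hPdef
  have haty : Tendsto (fun n => a (n+1)) atTop (nhds (y - P)) := by
    have h1 : Tendsto (fun n => b n - ∑ i : Fin N, t n i • v i) atTop (nhds (y - P)) := by
      apply Tendsto.sub hbtend
      rw [hPdef]
      apply tendsto_finset_sum
      intro i _
      exact (hti i).smul tendsto_const_nhds
    exact h1.congr (fun n => (ha n).symm)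
  -- coordinatewise limit of a and the max identity
  have hcoordA : ∀ k, Tendsto (fun n => a (n+1) k) atTop (nhds ((y - P) k)) := by
    intro k
    have h1 : Tendsto (fun n => ‖a (n+1) - (y - P)‖) atTop (nhds 0) :=
      tendsto_iff_norm_sub_tendsto_zero.mp haty
    have h2 : Tendsto (fun n => a (n+1) k - (y - P) k) atTop (nhds 0) := by
      apply squeeze_zero_norm _ h1
      intro n
      have h3 := l2_apply_le (a (n+1) - (y - P)) k
      rw [lp.coeFn_sub, Pi.sub_apply] at h3
      simpa using h3
    have h4 := h2.add (tendsto_const_nhds (x := (y - P) k))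
    simpa using h4
  have hmax : ∀ k, y0 k = max ((y - P) k) 0 := by
    intro k
    have h1 : Tendsto (fun n => b (n+1+1) k) atTop (nhds (y0 k)) :=
      (hy0 k).comp (tendsto_add_atTop_nat 1)
    have h2 : Tendsto (fun n => max (a (n+1+1) k) 0) atTop (nhds (max ((y - P) k) 0)) :=
      ((hcoordA k).comp (tendsto_add_atTop_nat 1)).max tendsto_const_nhds
    have h3 : Tendsto (fun n => b (n+1+1) k) atTop (nhds (max ((y - P) k) 0)) :=
      h2.congr (fun n => (hb (n+1) k).symm)
    exact tendsto_nhds_unique h1 h3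
  -- Pythagoras and conclusion that inner products vanish
  have hyP : ‖y‖^2 ≤ ‖y - P‖^2 := by
    rw [l2_normsq, l2_normsq]
    apply Summable.tsum_le_tsum _ (l2_summable _ _) (l2_summable _ _)
    intro k
    calc (y : ℕ → ℝ) k * y k
        = max ((y-P) k) 0 * max ((y-P) k) 0 := by rw [hyk k, hmax k]
      _ ≤ (y-P) k * (y-P) k := max_sq_le _
  have hinnerP : ⟪y, P⟫ = ∑ i : Fin N, τ i * τ i := by
    rw [hPdef, inner_sum]
    apply Finset.sum_congr rfl
    intro i _
    rw [real_inner_smul_right]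
  have hPP : ‖P‖^2 = ∑ i : Fin N, τ i * τ i := by
    rw [← real_inner_self_eq_norm_sq, hPdef, sum_inner]
    apply Finset.sum_congr rfl
    intro i _
    rw [real_inner_smul_left, horto.inner_right_sum τ (Finset.mem_univ i)]
  have hnormsub : ‖y - P‖^2 = ‖y‖^2 - ∑ i : Fin N, τ i * τ i := by
    rw [norm_sub_sq_real, hinnerP, hPP]; ring
  have hτ0 : ∀ i, τ i = 0 := by
    have hsum0 : ∑ i : Fin N, τ i * τ i ≤ 0 := by linarith
    intro i
    have hnn : ∀ j ∈ Finset.univ, (0:ℝ) ≤ τ j * τ j := fun j _ => mul_self_nonneg _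
    have h5 := (Finset.sum_eq_zero_iff_of_nonneg hnn).mp
      (le_antisymm hsum0 (Finset.sum_nonneg hnn)) i (Finset.mem_univ i)
    exact mul_self_eq_zero.mp h5
  have hPzero : P = 0 := by
    rw [hPdef]
    apply Finset.sum_eq_zero
    intro i _
    rw [hτ0 i, zero_smul]
  rw [hPzero, sub_zero] at haty
  exact ⟨y, fun i => hτ0 i, fun k => hy0nonneg k,
    (tendsto_add_atTop_iff_nat 1).mp haty, hbtend⟩
end

section
/- Let (Y, μ) be a measure space, X := L²(Y, μ) the real Hilbert space of square-integrable functions, and let f₁, …, f_N ∈ X be unit vectors that are pairwise disjoint with respect to the lattice structure, i.e. |fᵢ| ⊓ |fⱼ| = 0 for i ≠ j (which makes them orthonormal). Let g ∈ X and define the alternating projection sequences by b⁰ := g, aⁿ⁺¹ := bⁿ − Σᵢ₌₁^N ⟨bⁿ, fᵢ⟩fᵢ, and bⁿ⁺¹ := (aⁿ⁺¹)⁺ (the positive part in the lattice L²(Y,μ), i.e. the class of the pointwise maximum with 0, which is the metric projection onto the cone of μ-a.e. nonnegative functions). Then there exists h ∈ X with ⟨h, fᵢ⟩ = 0 for all i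 = 1,…,N and h ≥ 0 μ-almost everywhere, such that both sequences (aⁿ) and (bⁿ) converge in norm to h. -/
open scoped RealInnerProductSpace
open Filter MeasureTheory

set_option maxHeartbeats 2000000

theorem coeFn_finsetSum' {Y ι : Type*} [MeasurableSpace Y] {μ : Measure Y} (s : Finset ι)
    (g : ι → Lp ℝ 2 μ) : ⇑(∑ i ∈ s, g i) =ᵐ[μ] fun y => ∑ i ∈ s, g i y := by
  classical
  induction s using Finset.induction_on with
  | empty => simp only [Finset.sum_empty]; exact Lp.coeFn_zero ℝ 2 μ
  | @insert i s hi ih =>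
    simp only [Finset.sum_insert hi]
    filter_upwards [Lp.coeFn_add (g i) (∑ j ∈ s, g j), ih] with y h1 h2
    rw [h1, Pi.add_apply, h2]

theorem innerL2'' {Y : Type*} [MeasurableSpace Y] {μ : Measure Y} (x z : Lp ℝ 2 μ) :
    ⟪x, z⟫ = ∫ s, x s * z s ∂μ := by
  rw [L2.inner_def]; simp [RCLike.inner_apply, conj_trivial, mul_comm]

theorem integrableMul'' {Y : Type*} [MeasurableSpace Y] {μ : Measure Y} (x z : Lp ℝ 2 μ) :
    Integrable (fun y => x y * z y) μ := by
  have := L2.integrable_inner (𝕜 := ℝ) x z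
  simpa [RCLike.inner_apply, conj_trivial, mul_comm] using this

/-- Alternating projections in L²(Y, μ) onto the orthogonal complement of the span
of N pairwise lattice-disjoint unit vectors and onto the cone of a.e. nonnegative functions
converge in norm. -/
theorem alternating_projections_disjoint_L2
    {Y : Type*} [MeasurableSpace Y] (μ : Measure Y)
    (N : ℕ) (f : Fin N → Lp ℝ 2 μ)
    (hf : ∀ i, ‖f i‖ = 1)
    (hdisj : ∀ i j : Fin N, i ≠ j → |f i| ⊓ |f j| = 0)
    (g : Lp ℝ 2 μ)
    (a b : ℕ → Lp ℝ 2 μ)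
    (hb0 : b 0 = g)
    (ha : ∀ n : ℕ, a (n + 1) = b n - ∑ i : Fin N, ⟪b n, f i⟫ • f i)
    (hb : ∀ n : ℕ, b (n + 1) = a (n + 1) ⊔ 0) :
    ∃ h : Lp ℝ 2 μ,
      (∀ i : Fin N, ⟪h, f i⟫ = 0) ∧ 0 ≤ h ∧
      Tendsto a atTop (nhds h) ∧ Tendsto b atTop (nhds h) := by
  classical
  have innerL2' : ∀ x z : Lp ℝ 2 μ, ⟪x, z⟫ = ∫ s, x s * z s ∂μ := fun x z => innerL2'' x z
  have integrableMul' : ∀ x z : Lp ℝ 2 μ, Integrable (fun y => x y * z y) μ :=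
    fun x z => integrableMul'' x z
  set c : ℕ → Fin N → ℝ := fun n i => ⟪b n, f i⟫ with hcdef
  -- disjoint supports a.e.
  have hsupp : ∀ i j : Fin N, i ≠ j → ∀ᵐ y ∂μ, f i y = 0 ∨ f j y = 0 := by
    intro i j hij
    have h0 : ⇑(|f i| ⊓ |f j|) =ᵐ[μ] ⇑(0 : Lp ℝ 2 μ) := by rw [hdisj i j hij]
    filter_upwards [h0, Lp.coeFn_inf |f i| |f j|, Lp.coeFn_abs (f i), Lp.coeFn_abs (f j),
      Lp.coeFn_zero (E := ℝ) (p := 2) (μ := μ)] with y h1 h2 h3 h4 h5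
    have hmin : min |f i y| |f j y| = 0 := by
      rw [← h3, ← h4, ← Pi.inf_apply, ← h2, h1, h5, Pi.zero_apply]
    rcases min_eq_iff.mp hmin with ⟨h6, _⟩ | ⟨h6, _⟩
    · exact Or.inl (abs_eq_zero.mp h6)
    · exact Or.inr (abs_eq_zero.mp h6)
  have horth : ∀ i j : Fin N, i ≠ j → ⟪f i, f j⟫ = 0 := by
    intro i j hij
    rw [innerL2']
    apply integral_eq_zero_of_ae
    filter_upwards [hsupp i j hij] with y hy
    rcases hy with h | h <;> simp [h]
  have hnorm1 : ∀ i, ⟪f i, f i⟫ = (1:ℝ) := fun i => by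
    rw [real_inner_self_eq_norm_sq, hf i]; norm_num
  have hao : ∀ n i, ⟪a (n+1), f i⟫ = 0 := by
    intro n i
    rw [ha n, inner_sub_left, sum_inner]
    simp only [real_inner_smul_left]
    rw [Finset.sum_eq_single i]
    · rw [hnorm1 i, mul_one]; exact sub_self _
    · intro j _ hj; rw [horth j i hj, mul_zero]
    · intro hmem; exact absurd (Finset.mem_univ i) hmem
  -- pointwise recurrence
  have hrec : ∀ n, ∀ᵐ y ∂μ, b (n+1) y = max (b n y - ∑ i, c n i * f i y) 0 ∧
      a (n+1) y = b n y - ∑ i, c n i * f i y := by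
    intro n
    have hsm : ∀ᵐ y ∂μ, ∀ i : Fin N, (⟪b n, f i⟫ • f i) y = c n i * f i y :=
      ae_all_iff.2 fun i => by
        filter_upwards [Lp.coeFn_smul (⟪b n, f i⟫ : ℝ) (f i)] with y h
        rw [h, Pi.smul_apply, smul_eq_mul]
    have h1 : ⇑(a (n+1)) =ᵐ[μ] fun y => b n y - ∑ i, c n i * f i y := by
      rw [ha n]
      filter_upwards [Lp.coeFn_sub (b n) (∑ i, ⟪b n, f i⟫ • f i),
        coeFn_finsetSum' Finset.univ (fun i => ⟪b n, f i⟫ • f i), hsm] with y k1 k2 k3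
      rw [k1, Pi.sub_apply, k2]
      exact congrArg _ (Finset.sum_congr rfl fun i _ => k3 i)
    have h2 : ⇑(b (n+1)) =ᵐ[μ] fun y => max (a (n+1) y) 0 := by
      rw [hb n]
      filter_upwards [Lp.coeFn_sup (a (n+1)) 0, Lp.coeFn_zero (E := ℝ) (p := 2) (μ := μ)]
        with y k1 k2
      rw [k1, Pi.sup_apply, k2, Pi.zero_apply]
    filter_upwards [h1, h2] with y k1 k2
    exact ⟨by rw [k2, k1], k1⟩
  have hbn0 : ∀ n, ∀ᵐ y ∂μ, 0 ≤ b (n+1) y := fun n => by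
    filter_upwards [hrec n] with y hy
    rw [hy.1]; exact le_max_right _ _
  have hsuppAll : ∀ i : Fin N, ∀ᵐ y ∂μ, ∀ j, j ≠ i → f i y ≠ 0 → f j y = 0 := by
    intro i
    rw [ae_all_iff]
    intro j
    by_cases hij : j = i
    · subst hij; exact Eventually.of_forall fun y hj => absurd rfl hj
    · filter_upwards [hsupp i j (Ne.symm hij)] with y hy hne hfi
      rcases hy with h | h
      · exact absurd h hfi
      · exact h
  -- c (n+2) as an integral of the nonneg part
  have hcneg : ∀ n i, c (n+2) i = ∫ y, (b (n+2) y - a (n+2) y) * f i y ∂μ := by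
    intro n i
    have h1 : c (n+2) i = ⟪b (n+2) - a (n+2), f i⟫ := by
      rw [inner_sub_left, hao (n+1) i, sub_zero, hcdef]
    rw [h1, innerL2']
    exact integral_congr_ae (by
      filter_upwards [Lp.coeFn_sub (b (n+2)) (a (n+2))] with y k1
      rw [k1, Pi.sub_apply])
  have hkey : ∀ n i, (0 ≤ c (n+1) i * c (n+2) i) ∧ (c (n+1) i = 0 → c (n+2) i = 0) := by
    intro n i
    have hae : ∀ᵐ y ∂μ, 0 ≤ c (n+1) i * ((b (n+2) y - a (n+2) y) * f i y) ∧
        (c (n+1) i = 0 → (b (n+2) y - a (n+2) y) * f i y = 0) := by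
      filter_upwards [hrec (n+1), hbn0 n, hsuppAll i] with y hy hb0' hsup
      obtain ⟨hy1, hy2⟩ := hy
      rw [hy1, hy2]
      set A := b (n+1) y - ∑ j, c (n+1) j * f j y with hA
      by_cases hF : f i y = 0
      · rw [hF]; simp
      by_cases hAneg : A < 0
      · have hsum : ∑ j, c (n+1) j * f j y = c (n+1) i * f i y :=
          Finset.sum_eq_single i (fun j _ hj => by rw [hsup j hj hF, mul_zero]) (fun hmem =>
            absurd (Finset.mem_univ i) hmem)
        have hpos : 0 < c (n+1) i * f i y := by
          rw [hA, hsum] at hAneg; linarith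
        have hmax : max A 0 = 0 := max_eq_right hAneg.le
        constructor
        · rw [hmax, zero_sub]
          have : 0 < -A := by linarith
          calc (0:ℝ) ≤ (-A) * (c (n+1) i * f i y) := le_of_lt (mul_pos this hpos)
            _ = c (n+1) i * (-A * f i y) := by ring
        · intro hc0; rw [hc0] at hpos; simp at hpos
      · have hmax : max A 0 = A := max_eq_left (not_lt.mp hAneg)
        rw [hmax, sub_self, zero_mul]
        simp
    constructor
    · have h1 := integral_nonneg_of_ae (hae.mono fun y hy => hy.1)
      rwa [integral_const_mul, ← hcneg n i] at h1
    · intro hc0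
      rw [hcneg n i]
      apply integral_eq_zero_of_ae
      filter_upwards [hae] with y hy
      exact hy.2 hc0
  -- sign function
  set σ : Fin N → ℝ := fun i => if c 1 i < 0 then -1 else 1 with hσdef
  have hσ1 : ∀ i, σ i = 1 ∨ σ i = -1 := fun i => by
    by_cases h : c 1 i < 0 <;> simp [hσdef, h]
  have hσsq : ∀ i, σ i * σ i = 1 := fun i => by
    rcases hσ1 i with h | h <;> rw [h] <;> norm_num
  have hσne : ∀ i, σ i ≠ 0 := fun i => by
    rcases hσ1 i with h | h <;> rw [h] <;> norm_num
  have hσc : ∀ n i, 0 ≤ σ i * c (n+1) i := by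
    intro n i
    induction n with
    | zero =>
      by_cases h : c 1 i < 0
      · simp only [hσdef, if_pos h]; nlinarith
      · simp only [hσdef, if_neg h]; rw [one_mul]; exact not_lt.mp h
    | succ m ih =>
      rcases eq_or_ne (c (m+1) i) 0 with h0 | h0
      · rw [(hkey m i).2 h0, mul_zero]
      · have h1 := (hkey m i).1
        rcases hσ1 i with hs | hs
        · rw [hs, one_mul] at ih ⊢
          have hpos : 0 < c (m+1) i := lt_of_le_of_ne ih (Ne.symm h0)
          by_contra hneg
          push_neg at hneg
          nlinarith
        · rw [hs] at ih ⊢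
          have hneg : c (m+1) i < 0 := by
            rcases lt_or_eq_of_le (by nlinarith : c (m+1) i ≤ 0) with h | h
            · exact h
            · exact absurd h h0
          by_contra hcon
          push_neg at hcon
          nlinarith
  -- the vector v = Σ (σ i • f i)⁻ and scalars t i
  set v : Lp ℝ 2 μ := ∑ i, ((-(σ i • f i)) ⊔ 0) with hvdef
  have hterm : ∀ i : Fin N, ∀ᵐ y ∂μ, ((-(σ i • f i)) ⊔ 0) y = max (-(σ i * f i y)) 0 := by
    intro i
    filter_upwards [Lp.coeFn_sup (-(σ i • f i)) 0, Lp.coeFn_zero (E := ℝ) (p := 2) (μ := μ),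
      Lp.coeFn_neg (σ i • f i), Lp.coeFn_smul (σ i) (f i)] with y k1 k2 k3 k4
    rw [k1, Pi.sup_apply, k2, Pi.zero_apply, k3, Pi.neg_apply, k4, Pi.smul_apply,
      smul_eq_mul]
  have hvpt : ∀ᵐ y ∂μ, v y = ∑ i, max (-(σ i * f i y)) 0 := by
    filter_upwards [coeFn_finsetSum' Finset.univ (fun i => (-(σ i • f i)) ⊔ 0),
      ae_all_iff.2 hterm] with y k1 k2
    rw [hvdef, k1]
    exact Finset.sum_congr rfl fun i _ => k2 i
  have hv0 : ∀ᵐ y ∂μ, 0 ≤ v y := by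
    filter_upwards [hvpt] with y k1
    rw [k1]
    exact Finset.sum_nonneg fun i _ => le_max_right _ _
  set t : Fin N → ℝ := fun i => ⟪(-(σ i • f i)) ⊔ 0, (-(σ i • f i)) ⊔ 0⟫ with htdef
  have ht0 : ∀ i, 0 ≤ t i := fun i => real_inner_self_nonneg
  have ht_int : ∀ i, t i = ∫ y, max (-(σ i * f i y)) 0 * max (-(σ i * f i y)) 0 ∂μ := by
    intro i
    have hti : t i = ⟪(-(σ i • f i)) ⊔ 0, (-(σ i • f i)) ⊔ 0⟫ := rfl
    rw [hti, innerL2']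
    exact integral_congr_ae (by filter_upwards [hterm i] with y k1; rw [k1])
  have htzero : ∀ i, t i = 0 → ∀ᵐ y ∂μ, 0 ≤ σ i * f i y := by
    intro i h
    have h2 : ((-(σ i • f i)) ⊔ 0 : Lp ℝ 2 μ) = 0 := inner_self_eq_zero.mp h
    have h3 : ⇑((-(σ i • f i)) ⊔ 0 : Lp ℝ 2 μ) =ᵐ[μ] ⇑(0 : Lp ℝ 2 μ) := by rw [h2]
    filter_upwards [h3, hterm i, Lp.coeFn_zero (E := ℝ) (p := 2) (μ := μ)] with y k1 k2 k3
    have hmax0 : max (-(σ i * f i y)) 0 = 0 := by rw [← k2, k1, k3, Pi.zero_apply]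
    have h4 : -(σ i * f i y) ≤ 0 := by
      by_contra hcon; push_neg at hcon
      rw [max_eq_left hcon.le] at hmax0; linarith
    linarith
  have hfv : ∀ i, ⟪f i, v⟫ = -(σ i * t i) := by
    intro i
    rw [innerL2', ht_int]
    rw [show -(σ i * ∫ y, max (-(σ i * f i y)) 0 * max (-(σ i * f i y)) 0 ∂μ)
        = ∫ y, -(σ i) * (max (-(σ i * f i y)) 0 * max (-(σ i * f i y)) 0) ∂μ by
      rw [integral_const_mul]; ring]
    apply integral_congr_ae
    filter_upwards [hsuppAll i, hvpt] with y k1 k2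
    rw [k2]
    by_cases hF : f i y = 0
    · simp [hF]
    · have hsum : ∑ j, max (-(σ j * f j y)) 0 = max (-(σ i * f i y)) 0 :=
        Finset.sum_eq_single i (fun j _ hj => by rw [k1 j hj hF]; simp)
          (fun hmem => absurd (Finset.mem_univ i) hmem)
      rw [hsum]
      rcases le_or_gt (σ i * f i y) 0 with hw | hw
      · rw [max_eq_left (by linarith)]
        have hσ2 := hσsq i
        linear_combination (σ i * f i y * f i y) * hσ2
      · rw [max_eq_right (by linarith)]
        ring
  -- norm monotonicity
  have hmono : ∀ n, ‖b (n+1)‖ ≤ ‖b n‖ := by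
    intro n
    set p : Lp ℝ 2 μ := ∑ i, (⟪b n, f i⟫ : ℝ) • f i with hp
    have hba : b n = a (n+1) + p := by rw [ha n]; abel
    have hor : ⟪a (n+1), p⟫ = 0 := by
      rw [hp, inner_sum]
      refine Finset.sum_eq_zero fun i _ => ?_
      rw [real_inner_smul_right, hao n i, mul_zero]
    have hpyth : ‖b n‖^2 = ‖a (n+1)‖^2 + ‖p‖^2 := by
      rw [hba, @norm_add_sq_real, hor]; ring
    have h1 : ‖a (n+1)‖ ≤ ‖b n‖ := by nlinarith [norm_nonneg (a (n+1)), norm_nonneg (b n)]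
    have h2 : ‖b (n+1)‖ ≤ ‖a (n+1)‖ := by
      have e1 : ‖b (n+1)‖^2 = ∫ y, b (n+1) y * b (n+1) y ∂μ := by
        rw [← real_inner_self_eq_norm_sq, innerL2']
      have e2 : ‖a (n+1)‖^2 = ∫ y, a (n+1) y * a (n+1) y ∂μ := by
        rw [← real_inner_self_eq_norm_sq, innerL2']
      have e3 : ∫ y, b (n+1) y * b (n+1) y ∂μ ≤ ∫ y, a (n+1) y * a (n+1) y ∂μ := by
        refine integral_mono_ae (integrableMul' _ _) (integrableMul' _ _) ?_
        filter_upwards [hrec n] with y hy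
        rw [hy.1, hy.2]
        rcases le_or_gt (b n y - ∑ i, c n i * f i y) 0 with hc | hc
        · rw [max_eq_right hc]; nlinarith
        · rw [max_eq_left hc.le]
      nlinarith [norm_nonneg (b (n+1)), norm_nonneg (a (n+1)), e1, e2, e3]
    exact h2.trans h1
  have hnormb : ∀ n, ‖b (n+1)‖ ≤ ‖b 1‖ := by
    intro n
    induction n with
    | zero => exact le_rfl
    | succ m ih => exact (hmono (m+1)).trans ih
  have ha' : ∀ n : ℕ, a (n + 1) = b n - ∑ i : Fin N, c n i • f i := fun n => by
    rw [ha n, hcdef]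
  -- telescoping estimate
  have hmstep : ∀ n, ⟪b (n+1), v⟫ + ∑ i, σ i * c (n+1) i * t i ≤ ⟪b (n+2), v⟫ := by
    intro n
    have hsplit : b (n+2) - b (n+1) = (b (n+2) - a (n+2)) + (a (n+2) - b (n+1)) := by abel
    have h1 : 0 ≤ ⟪b (n+2) - a (n+2), v⟫ := by
      rw [innerL2']
      apply integral_nonneg_of_ae
      filter_upwards [hrec (n+1), hv0, Lp.coeFn_sub (b (n+2)) (a (n+2))] with y hy hvy hsub
      rw [hsub, Pi.sub_apply, hy.1, hy.2]
      have : b (n+1) y - ∑ i, c (n+1) i * f i y ≤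
          max (b (n+1) y - ∑ i, c (n+1) i * f i y) 0 := le_max_left _ _
      exact mul_nonneg (by linarith) hvy
    have h2 : ⟪a (n+2) - b (n+1), v⟫ = ∑ i, σ i * c (n+1) i * t i := by
      have e1 : a (n+2) - b (n+1) = -(∑ i, c (n+1) i • f i) := by rw [ha' (n+1)]; abel
      rw [e1, inner_neg_left, sum_inner]
      rw [← Finset.sum_neg_distrib]
      refine Finset.sum_congr rfl fun i _ => ?_
      rw [real_inner_smul_left, hfv i]
      ring
    have h3 : ⟪b (n+2), v⟫ - ⟪b (n+1), v⟫ = ⟪b (n+2) - b (n+1), v⟫ := by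
      rw [inner_sub_left]
    rw [hsplit, inner_add_left, h2] at h3
    linarith
  have hC : ∀ M, ∑ n ∈ Finset.range M, (∑ i, σ i * c (n+1) i * t i) ≤ 2 * (‖b 1‖ * ‖v‖) := by
    intro M
    have htel : ∑ n ∈ Finset.range M, (⟪b (n+2), v⟫ - ⟪b (n+1), v⟫) = ⟪b (M+1), v⟫ - ⟪b 1, v⟫ :=
      Finset.sum_range_sub (fun k => ⟪b (k+1), v⟫) M
    have h1 : ∑ n ∈ Finset.range M, (∑ i, σ i * c (n+1) i * t i) ≤
        ∑ n ∈ Finset.range M, (⟪b (n+2), v⟫ - ⟪b (n+1), v⟫) :=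
      Finset.sum_le_sum fun n _ => by linarith [hmstep n]
    have h2 : ∀ k, |(⟪b (k+1), v⟫ : ℝ)| ≤ ‖b 1‖ * ‖v‖ := fun k =>
      (abs_real_inner_le_norm _ _).trans
        (mul_le_mul_of_nonneg_right (hnormb k) (norm_nonneg v))
    have h3 := abs_le.mp (h2 M)
    have h4 := abs_le.mp (h2 0)
    rw [htel] at h1
    linarith
  have hsummable : ∀ i, t i ≠ 0 → Summable (fun n => σ i * c (n+1) i) := by
    intro i hti
    have htpos : 0 < t i := (ht0 i).lt_of_ne (Ne.symm hti)
    apply summable_of_sum_range_le (c := 2 * (‖b 1‖ * ‖v‖) / t i) (fun n => hσc n i)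
    intro M
    rw [le_div_iff₀ htpos]
    calc (∑ n ∈ Finset.range M, σ i * c (n+1) i) * t i
        = ∑ n ∈ Finset.range M, σ i * c (n+1) i * t i := by rw [Finset.sum_mul]
      _ ≤ ∑ n ∈ Finset.range M, (∑ j, σ j * c (n+1) j * t j) :=
          Finset.sum_le_sum fun n _ =>
            Finset.single_le_sum (f := fun j => σ j * c (n+1) j * t j)
              (fun j _ => mul_nonneg (hσc n j) (ht0 j)) (Finset.mem_univ i)
      _ ≤ 2 * (‖b 1‖ * ‖v‖) := hC M
  set T : Finset (Fin N) := Finset.univ.filter (fun i => t i ≠ 0) with hT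
  set K : ℕ → ℝ := fun n => ∑ i ∈ T, σ i * c (n+1) i with hK
  have hK0 : ∀ n, 0 ≤ K n := fun n => Finset.sum_nonneg fun i _ => hσc n i
  have hKsum : Summable K := by
    rw [hK]
    have hgen : ∀ (s : Finset (Fin N)), (∀ i ∈ s, Summable fun n => σ i * c (n+1) i) →
        Summable (fun n => ∑ i ∈ s, σ i * c (n+1) i) := by
      intro s
      induction s using Finset.induction_on with
      | empty => intro _; simpa using summable_zero
      | @insert i s hi ih =>
        intro hmem
        simp only [Finset.sum_insert hi]
        exact (hmem i (Finset.mem_insert_self i s)).add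
          (ih fun j hj => hmem j (Finset.mem_insert_of_mem hj))
    exact hgen T fun i hiT => hsummable i (by
      rw [hT] at hiT; exact (Finset.mem_filter.mp hiT).2)
  set S : ℝ := ∑' n, K n with hS
  have hKpart : ∀ M, ∑ n ∈ Finset.range M, K n ≤ S := fun M =>
    hKsum.sum_le_tsum _ (fun n _ => hK0 n)
  have hS0 : 0 ≤ S := tsum_nonneg hK0
  have hsingle : ∀ n i, t i ≠ 0 → σ i * c (n+1) i ≤ K n := by
    intro n i hti
    exact Finset.single_le_sum (f := fun j => σ j * c (n+1) j)
      (fun j _ => hσc n j) (by rw [hT]; exact Finset.mem_filter.mpr ⟨Finset.mem_univ i, hti⟩)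
  -- pointwise convergence and domination
  set Dfun : Y → ℝ := fun y => b 1 y + S * ∑ i, max (-(σ i * f i y)) 0 with hDdef
  have hDnn : ∀ y, b 1 y ≤ Dfun y := fun y => le_add_of_nonneg_right
    (mul_nonneg hS0 (Finset.sum_nonneg fun i _ => le_max_right _ _))
  have hptwise : ∀ᵐ y ∂μ, (∀ n, 0 ≤ b (n+1) y ∧ b (n+1) y ≤ Dfun y) ∧
      ∃ L, Tendsto (fun n => b (n+1) y) atTop (nhds L) := by
    have hall1 : ∀ᵐ y ∂μ, ∀ n, b (n+1) y = max (b n y - ∑ i, c n i * f i y) 0 :=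
      ae_all_iff.2 fun n => (hrec n).mono fun y hy => hy.1
    have hall2 : ∀ᵐ y ∂μ, ∀ i : Fin N, ∀ j, j ≠ i → f i y ≠ 0 → f j y = 0 :=
      ae_all_iff.2 hsuppAll
    have hall3 : ∀ᵐ y ∂μ, ∀ i : Fin N, t i = 0 → 0 ≤ σ i * f i y :=
      ae_all_iff.2 fun i => by
        by_cases h : t i = 0
        · exact (htzero i h).mono fun y hy _ => hy
        · exact Eventually.of_forall fun y h' => absurd h' h
    filter_upwards [hall1, hall2, hall3] with y e1 e2 e3
    set β : ℕ → ℝ := fun n => b (n+1) y with hβ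
    have h0 : ∀ n, 0 ≤ β n := fun n => by
      rw [hβ]; simp only []; rw [e1 n]; exact le_max_right _ _
    by_cases hex : ∀ i : Fin N, f i y = 0
    · have hconst : ∀ n, β (n+1) = β n := by
        intro n
        have hz : ∑ i, c (n+1) i * f i y = 0 :=
          Finset.sum_eq_zero fun i _ => by rw [hex i, mul_zero]
        have hb' : β (n+1) = max (β n - ∑ i, c (n+1) i * f i y) 0 := e1 (n+1)
        rw [hb', hz, sub_zero, max_eq_left (h0 n)]
      have hval : ∀ n, β n = β 0 := by
        intro n; induction n with
        | zero => rfl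
        | succ m ih => rw [hconst m, ih]
      constructor
      · intro n
        refine ⟨h0 n, ?_⟩
        have hv' : β n = β 0 := hval n
        rw [hβ] at hv'; simp only [] at hv'
        rw [hv']
        exact hDnn y
      · exact ⟨β 0, tendsto_const_nhds.congr fun n => (hval n).symm⟩
    · push_neg at hex
      obtain ⟨i, hi⟩ := hex
      have hred : ∀ n, β (n+1) = max (β n - c (n+1) i * f i y) 0 := by
        intro n
        have hz : ∑ j, c (n+1) j * f j y = c (n+1) i * f i y :=
          Finset.sum_eq_single i (fun j _ hj => by rw [e2 i j hj hi, mul_zero])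
            (fun hmem => absurd (Finset.mem_univ i) hmem)
        have hb' : β (n+1) = max (β n - ∑ j, c (n+1) j * f j y) 0 := e1 (n+1)
        rw [hb', hz]
      set w : ℝ := σ i * f i y with hwdef
      have hw : w ≠ 0 := mul_ne_zero (hσne i) hi
      have hcfw : ∀ n, c (n+1) i * f i y = (σ i * c (n+1) i) * w := fun n => by
        rw [hwdef]; linear_combination (-(c (n+1) i * f i y)) * hσsq i
      rcases lt_or_gt_of_ne hw with hwneg | hwpos
      · -- w < 0 : monotone increasing case
        have hiT : t i ≠ 0 := fun h => by linarith [e3 i h]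
        have hstep : ∀ n, β (n+1) = β n + (σ i * c (n+1) i) * (-w) := by
          intro n
          rw [hred n, hcfw n]
          have h1 : β n - σ i * c (n+1) i * w = β n + σ i * c (n+1) i * (-w) := by ring
          rw [h1, max_eq_left]
          have := mul_nonneg (hσc n i) (by linarith : (0:ℝ) ≤ -w)
          linarith [h0 n]
        have hmono' : Monotone β := monotone_nat_of_le_succ fun n => by
          rw [hstep n]
          have := mul_nonneg (hσc n i) (by linarith : (0:ℝ) ≤ -w)
          linarith
        have hpart : ∀ M, β M = β 0 + (∑ n ∈ Finset.range M, σ i * c (n+1) i) * (-w) := by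
          intro M
          induction M with
          | zero => simp
          | succ m ih => rw [hstep m, ih, Finset.sum_range_succ]; ring
        have hbd : ∀ M, β M ≤ Dfun y := by
          intro M
          rw [hpart M]
          have h1 : ∑ n ∈ Finset.range M, σ i * c (n+1) i ≤ S :=
            (Finset.sum_le_sum fun n _ => hsingle n i hiT).trans (hKpart M)
          have h3 : -w ≤ ∑ j, max (-(σ j * f j y)) 0 := by
            have hmax : -w = max (-w) 0 := (max_eq_left (by linarith)).symm
            rw [hmax, hwdef]
            exact Finset.single_le_sum (f := fun j => max (-(σ j * f j y)) 0)
              (fun j _ => le_max_right _ _) (Finset.mem_univ i)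
          have h4 : (∑ n ∈ Finset.range M, σ i * c (n+1) i) * (-w) ≤ S * (-w) :=
            mul_le_mul_of_nonneg_right h1 (by linarith)
          have h5 : S * (-w) ≤ S * ∑ j, max (-(σ j * f j y)) 0 :=
            mul_le_mul_of_nonneg_left h3 hS0
          have hβ0 : β 0 = b 1 y := rfl
          rw [hDdef]; simp only []
          linarith
        refine ⟨fun n => ⟨h0 n, hbd n⟩, ?_⟩
        exact ⟨_, tendsto_atTop_ciSup hmono' ⟨Dfun y, by
          rintro x ⟨n, rfl⟩; exact hbd n⟩⟩
      · -- w > 0 : decreasing case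
        have hanti : Antitone β := antitone_nat_of_succ_le fun n => by
          rw [hred n, hcfw n]
          have := mul_nonneg (hσc n i) hwpos.le
          exact max_le (by linarith) (h0 n)
        refine ⟨fun n => ⟨h0 n, ?_⟩, ?_⟩
        · exact le_trans (hanti (Nat.zero_le n)) (hDnn y)
        · exact ⟨_, tendsto_atTop_ciInf hanti ⟨0, by rintro x ⟨n, rfl⟩; exact h0 n⟩⟩
  -- the limit function
  set φ : Y → ℝ := fun y => limUnder atTop (fun n => b (n+1) y) with hφdef
  have hφt : ∀ᵐ y ∂μ, Tendsto (fun n => b (n+1) y) atTop (nhds (φ y)) :=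
    hptwise.mono fun y hy => tendsto_nhds_limUnder hy.2
  have hφb : ∀ᵐ y ∂μ, 0 ≤ φ y ∧ φ y ≤ Dfun y := by
    filter_upwards [hφt, hptwise] with y h1 h2
    exact ⟨ge_of_tendsto' h1 fun n => (h2.1 n).1, le_of_tendsto' h1 fun n => (h2.1 n).2⟩
  have hφmeas : AEStronglyMeasurable φ μ :=
    aestronglyMeasurable_of_tendsto_ae atTop (fun n => Lp.aestronglyMeasurable (b (n+1))) hφt
  have hDae : ⇑(b 1 + S • v) =ᵐ[μ] Dfun := by
    filter_upwards [Lp.coeFn_add (b 1) (S • v), Lp.coeFn_smul S v, hvpt] with y k1 k2 k3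
    rw [hDdef, k1, Pi.add_apply, k2, Pi.smul_apply, smul_eq_mul, k3]
  have hDmem : MemLp Dfun 2 μ := (Lp.memLp (b 1 + S • v)).ae_eq hDae
  have hφmem : MemLp φ 2 μ := by
    refine MemLp.of_le hDmem hφmeas ?_
    filter_upwards [hφb] with y hy
    rw [Real.norm_eq_abs, Real.norm_eq_abs, abs_of_nonneg hy.1]
    exact hy.2.trans (le_abs_self _)
  set h : Lp ℝ 2 μ := hφmem.toLp φ with hhdef
  have hh : ⇑h =ᵐ[μ] φ := hφmem.coeFn_toLp
  -- L² convergence via dominated convergence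
  have hDint : Integrable (fun y => Dfun y * Dfun y) μ := by
    refine (integrableMul' (b 1 + S • v) (b 1 + S • v)).congr ?_
    filter_upwards [hDae] with y k
    rw [k]
  have hT2 : Tendsto (fun n => ∫ y, (b (n+1) y - φ y) * (b (n+1) y - φ y) ∂μ)
      atTop (nhds 0) := by
    have := tendsto_integral_of_dominated_convergence (μ := μ)
      (F := fun n y => (b (n+1) y - φ y) * (b (n+1) y - φ y)) (f := fun _ => (0:ℝ))
      (bound := fun y => Dfun y * Dfun y)
      (fun n => ((Lp.aestronglyMeasurable (b (n+1))).sub hφmeas).mul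
        ((Lp.aestronglyMeasurable (b (n+1))).sub hφmeas))
      hDint
      (fun n => by
        filter_upwards [hptwise, hφb] with y k1 k2
        have h1 := (k1.1 n).1
        have h2 := (k1.1 n).2
        have h3 := k2.1
        have h4 := k2.2
        rw [Real.norm_eq_abs, abs_of_nonneg (mul_self_nonneg _)]
        nlinarith [mul_nonneg (by linarith : (0:ℝ) ≤ Dfun y - b (n+1) y + φ y)
          (by linarith : (0:ℝ) ≤ Dfun y + b (n+1) y - φ y)])
      (by
        filter_upwards [hφt] with y hy
        have := (hy.sub (tendsto_const_nhds (x := φ y))).mul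
          (hy.sub (tendsto_const_nhds (x := φ y)))
        simpa using this)
    simpa using this
  have hnormsq : ∀ n, ‖b (n+1) - h‖^2 = ∫ y, (b (n+1) y - φ y) * (b (n+1) y - φ y) ∂μ := by
    intro n
    rw [← real_inner_self_eq_norm_sq, innerL2']
    refine integral_congr_ae ?_
    filter_upwards [Lp.coeFn_sub (b (n+1)) h, hh] with y k1 k2
    rw [k1, Pi.sub_apply, k2]
  have hbconv1 : Tendsto (fun n => b (n+1)) atTop (nhds h) := by
    rw [tendsto_iff_norm_sub_tendsto_zero]
    have hsq : Tendsto (fun n => ‖b (n+1) - h‖^2) atTop (nhds 0) := by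
      simp_rw [hnormsq]; exact hT2
    have h2 : Tendsto (fun n => Real.sqrt (‖b (n+1) - h‖^2)) atTop (nhds (Real.sqrt 0)) :=
      (Real.continuous_sqrt.tendsto 0).comp hsq
    rw [Real.sqrt_zero] at h2
    exact h2.congr fun n => Real.sqrt_sq (norm_nonneg _)
  have hbfull : Tendsto b atTop (nhds h) := (tendsto_add_atTop_iff_nat 1).mp hbconv1
  have hcl : ∀ i, Tendsto (fun n => c n i) atTop (nhds ⟪h, f i⟫) := by
    intro i
    rw [hcdef]
    exact hbfull.inner tendsto_const_nhds
  have hσclim : ∀ i, 0 ≤ σ i * ⟪h, f i⟫ := by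
    intro i
    have h1 : Tendsto (fun n => σ i * c (n+1) i) atTop (nhds (σ i * ⟪h, f i⟫)) :=
      tendsto_const_nhds.mul ((hcl i).comp (tendsto_add_atTop_nat 1))
    exact ge_of_tendsto' h1 fun n => hσc n i
  have hfix : ∀ᵐ y ∂μ, φ y = max (φ y - ∑ i, ⟪h, f i⟫ * f i y) 0 := by
    have hall1 : ∀ᵐ y ∂μ, ∀ n, b (n+1) y = max (b n y - ∑ i, c n i * f i y) 0 :=
      ae_all_iff.2 fun n => (hrec n).mono fun y hy => hy.1
    filter_upwards [hφt, hall1] with y hy he1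
    have l1 : Tendsto (fun n => b (n+2) y) atTop (nhds (φ y)) :=
      hy.comp (tendsto_add_atTop_nat 1)
    have l2 : Tendsto (fun n => max (b (n+1) y - ∑ i, c (n+1) i * f i y) 0) atTop
        (nhds (max (φ y - ∑ i, ⟪h, f i⟫ * f i y) 0)) := by
      refine Tendsto.max ?_ tendsto_const_nhds
      refine hy.sub (tendsto_finset_sum _ fun i _ => ?_)
      exact ((hcl i).comp (tendsto_add_atTop_nat 1)).mul_const _
    exact tendsto_nhds_unique l1 (l2.congr fun n => (he1 (n+1)).symm)
  have hinner0 : ∀ i, ⟪h, f i⟫ = 0 := by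
    intro i
    by_contra hne
    have hσpos : 0 < σ i * ⟪h, f i⟫ :=
      lt_of_le_of_ne (hσclim i) (Ne.symm (mul_ne_zero (hσne i) hne))
    have hzero_ae : ∀ᵐ y ∂μ, φ y * f i y = 0 := by
      filter_upwards [hfix, hφb, hsuppAll i] with y hfx hφ0 he2
      by_cases hFi : f i y = 0
      · rw [hFi, mul_zero]
      have hsum : ∑ j, (⟪h, f j⟫ : ℝ) * f j y = ⟪h, f i⟫ * f i y :=
        Finset.sum_eq_single i (fun j _ hj => by rw [he2 j hj hFi, mul_zero])
          (fun hmem => absurd (Finset.mem_univ i) hmem)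
      rw [hsum] at hfx
      have hPid : (⟪h, f i⟫ : ℝ) * f i y = (σ i * ⟪h, f i⟫) * (σ i * f i y) := by
        linear_combination (-(⟪h, f i⟫ : ℝ) * f i y) * hσsq i
      rcases lt_trichotomy (σ i * f i y) 0 with hw | hw | hw
      · exfalso
        have hP : (⟪h, f i⟫ : ℝ) * f i y < 0 := by
          rw [hPid]; exact mul_neg_of_pos_of_neg hσpos hw
        rw [max_eq_left (by linarith [hφ0.1])] at hfx
        linarith
      · exact absurd (by
          have := hσne i
          rcases mul_eq_zero.mp hw with h' | h'
          · exact absurd h' this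
          · exact h') hFi
      · have hP : 0 < (⟪h, f i⟫ : ℝ) * f i y := by
          rw [hPid]; exact mul_pos hσpos hw
        have hφ0' : φ y = 0 := by
          rcases le_or_gt (φ y - ⟪h, f i⟫ * f i y) 0 with hc | hc
          · rw [max_eq_right hc] at hfx; exact hfx
          · rw [max_eq_left hc.le] at hfx; linarith
        rw [hφ0', zero_mul]
    refine hne ?_
    rw [innerL2']
    apply integral_eq_zero_of_ae
    filter_upwards [hzero_ae, hh] with y k1 k2
    rw [k2]
    exact k1
  have hpos : 0 ≤ h := by
    rw [← Lp.coeFn_nonneg]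
    filter_upwards [hh, hφb] with y k1 k2
    rw [Pi.zero_apply, k1]
    exact k2.1
  have haconv : Tendsto (fun n => a (n+1)) atTop (nhds h) := by
    have h1 : Tendsto (fun n => b n - ∑ i, c n i • f i) atTop
        (nhds (h - ∑ i : Fin N, (0:ℝ) • f i)) :=
      hbfull.sub (tendsto_finset_sum _ fun i _ => by
        have hteni := (hcl i)
        rw [hinner0 i] at hteni
        exact hteni.smul_const (f i))
    have h2 : (h - ∑ i : Fin N, (0:ℝ) • f i) = h := by simp
    rw [h2] at h1
    refine h1.congr fun n => ?_
    rw [ha n, hcdef]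
  exact ⟨h, hinner0, hpos, (tendsto_add_atTop_iff_nat 1).mp haconv, hbfull⟩
end

section
/- Let X be a Hilbert lattice and let x₁, …, x_N ∈ X be unit vectors that are pairwise disjoint with respect to the lattice structure (|xᵢ| ⊓ |xⱼ| = 0 for i ≠ j; in particular they are orthonormal). Let x⁰ ∈ X and define the alternating projection sequences by c⁰ := x⁰, aⁿ⁺¹ := cⁿ − Σᵢ₌₁^N ⟨cⁿ, xᵢ⟩xᵢ, and cⁿ⁺¹ := (aⁿ⁺¹)⁺, where (·)⁺ denotes the lattice positive part (which is the metric projection onto the cone X⁺). Then there exists z ∈ X with ⟨z, xᵢ⟩ = 0 for all i = 1,…,N and 0 ≤ z, such that both sequences (aⁿ) and (cⁿ) converge in norm to z. -/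
open scoped RealInnerProductSpace
open Filter

section Aux

variable {E : Type*} [NormedAddCommGroup E] [Lattice E] [IsOrderedAddMonoid E] [HasSolidNorm E]
  [InnerProductSpace ℝ E]

/-- In a Hilbert lattice, inner products of nonneg elements are nonneg. -/
lemma HL.inner_nonneg (a b : E) (ha : 0 ≤ a) (hb : 0 ≤ b) : 0 ≤ ⟪a, b⟫ := by
  have h1 : ‖a - b‖ ≤ ‖a + b‖ := by
    apply norm_le_norm_of_abs_le_abs
    rw [abs_of_nonneg (add_nonneg ha hb)]
    calc |a - b| = |a + (-b)| := by rw [sub_eq_add_neg]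
    _ ≤ |a| + |(-b)| := abs_add_le a (-b)
    _ = a + b := by rw [abs_neg, abs_of_nonneg ha, abs_of_nonneg hb]
  have h2 := re_inner_eq_norm_add_mul_self_sub_norm_sub_mul_self_div_four (𝕜 := ℝ) a b
  simp only [RCLike.re_to_real] at h2
  rw [h2]
  nlinarith [norm_nonneg (a - b), norm_nonneg (a + b)]

/-- Disjoint nonneg elements are orthogonal. -/
lemma HL.inner_eq_zero (a b : E) (ha : 0 ≤ a) (hb : 0 ≤ b) (hd : a ⊓ b ≤ 0) :
    ⟪a, b⟫ = 0 := by
  have hd0 : a ⊓ b = 0 := le_antisymm hd (le_inf ha hb)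
  have h1 : ‖a - b‖ = ‖a + b‖ := by
    have habs : |b - a| = a + b := by
      have h := sup_sub_inf_eq_abs_sub a b
      rw [hd0, sub_zero] at h
      rw [← h]
      have h2 : a ⊓ b + (a ⊔ b) = a + b := inf_add_sup a b
      rw [hd0, zero_add] at h2
      exact h2
    have e1 : ‖a - b‖ = ‖b - a‖ := by rw [← norm_neg, neg_sub]
    rw [e1, ← norm_abs_eq_norm (b - a), habs, ← abs_of_nonneg (add_nonneg ha hb),
      norm_abs_eq_norm]
  have h2 := re_inner_eq_norm_add_mul_self_sub_norm_sub_mul_self_div_four (𝕜 := ℝ) a b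
  simp only [RCLike.re_to_real] at h2
  rw [h2, h1]
  ring

/-- A monotone nonneg norm-bounded sequence in a Hilbert lattice converges. -/
lemma HL.exists_tendsto_of_monotone [CompleteSpace E] (w : ℕ → E) (h0 : ∀ n, 0 ≤ w n)
    (hmono : Monotone w) (K : ℝ) (hbdd : ∀ n, ‖w n‖ ≤ K) :
    ∃ l, Tendsto w atTop (nhds l) := by
  set s : ℕ → ℝ := fun n => ‖w n‖ ^ 2 with hs
  have hsmono : Monotone s := by
    intro m n h
    have h1 : ‖w m‖ ≤ ‖w n‖ := by
      apply norm_le_norm_of_abs_le_abs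
      rw [abs_of_nonneg (h0 m), abs_of_nonneg (h0 n)]
      exact hmono h
    have := norm_nonneg (w m)
    simp only [hs]
    nlinarith
  have hsbdd : BddAbove (Set.range s) := by
    refine ⟨K ^ 2, ?_⟩
    rintro y ⟨n, rfl⟩
    have := norm_nonneg (w n)
    have := hbdd n
    simp only [hs]
    nlinarith
  have hconv : Tendsto s atTop (nhds (⨆ n, s n)) := tendsto_atTop_ciSup hsmono hsbdd
  set L : ℝ := ⨆ n, s n with hL
  have hsleL : ∀ n, s n ≤ L := fun n => le_ciSup hsbdd n
  have hcauchy : CauchySeq w := by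
    rw [Metric.cauchySeq_iff']
    intro ε hε
    have hev : ∀ᶠ n in atTop, L - ε ^ 2 < s n := by
      have : Set.Ioi (L - ε ^ 2) ∈ nhds L := Ioi_mem_nhds (by nlinarith)
      exact hconv this
    obtain ⟨N, hN⟩ := hev.exists
    refine ⟨N, fun n hn => ?_⟩
    have hinner : s N ≤ ⟪w n, w N⟫ := by
      have h1 : 0 ≤ ⟪w n - w N, w N⟫ :=
        HL.inner_nonneg _ _ (sub_nonneg.mpr (hmono hn)) (h0 N)
      rw [inner_sub_left] at h1
      have h2 : ⟪w N, w N⟫ = s N := real_inner_self_eq_norm_sq (w N)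
      linarith
    have hsq : ‖w n - w N‖ ^ 2 ≤ s n - s N := by
      rw [norm_sub_sq_real]
      simp only [hs] at *
      linarith
    have hlt : ‖w n - w N‖ ^ 2 < ε ^ 2 := by
      have := hsleL n
      linarith
    rw [dist_eq_norm]
    exact lt_of_pow_lt_pow_left₀ 2 hε.le hlt
  exact cauchySeq_tendsto_of_complete hcauchy

end Aux

set_option maxHeartbeats 1000000 in
/-- In a Hilbert lattice, alternating projections onto the orthogonal complement
of the span of N pairwise disjoint unit vectors and onto the lattice cone converge in norm. -/
theorem alternating_projections_disjoint_hilbert_lattice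
    {X : Type*} [NormedAddCommGroup X] [Lattice X] [IsOrderedAddMonoid X] [HasSolidNorm X]
    [InnerProductSpace ℝ X] [CompleteSpace X]
    [PosSMulStrictMono ℝ X]
    (N : ℕ) (x : Fin N → X)
    (hx : ∀ i, ‖x i‖ = 1)
    (hdisj : ∀ i j : Fin N, i ≠ j → |x i| ⊓ |x j| = 0)
    (x0 : X)
    (a c : ℕ → X)
    (hc0 : c 0 = x0)
    (ha : ∀ n : ℕ, a (n + 1) = c n - ∑ i : Fin N, ⟪c n, x i⟫ • x i)
    (hc : ∀ n : ℕ, c (n + 1) = a (n + 1) ⊔ 0) :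
    ∃ z : X,
      (∀ i : Fin N, ⟪z, x i⟫ = 0) ∧ 0 ≤ z ∧
      Tendsto a atTop (nhds z) ∧ Tendsto c atTop (nhds z) := by
  classical
  -- positive and negative parts of the x i
  set u : Fin N → X := fun i => (x i)⁺ with hu_def
  set v : Fin N → X := fun i => (x i)⁻ with hv_def
  have hu0 : ∀ i, 0 ≤ u i := fun i => posPart_nonneg _
  have hv0 : ∀ i, 0 ≤ v i := fun i => negPart_nonneg _
  have hxuv : ∀ i, x i = u i - v i := fun i => (posPart_sub_negPart (x i)).symm
  have huabs : ∀ i, u i ≤ |x i| := fun i => by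
    show (x i)⁺ ≤ |x i|
    rw [posPart_def]; exact sup_le (le_abs_self _) (abs_nonneg _)
  have hvabs : ∀ i, v i ≤ |x i| := fun i => by
    show (x i)⁻ ≤ |x i|
    rw [negPart_def]; exact sup_le (neg_le_abs _) (abs_nonneg _)
  -- cross orthogonality
  have hOrtho : ∀ (i j : Fin N) (y w : X), i ≠ j → 0 ≤ y → y ≤ |x i| → 0 ≤ w → w ≤ |x j| →
      ⟪y, w⟫ = 0 := by
    intro i j y w hij hy hyle hw hwle
    apply HL.inner_eq_zero _ _ hy hw
    calc y ⊓ w ≤ |x i| ⊓ |x j| := inf_le_inf hyle hwle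
    _ ≤ 0 := le_of_eq (hdisj i j hij)
  have huv : ∀ i, ⟪u i, v i⟫ = 0 := fun i =>
    HL.inner_eq_zero _ _ (hu0 i) (hv0 i) (le_of_eq (posPart_inf_negPart_eq_zero (x i)))
  have hvu : ∀ i, ⟪v i, u i⟫ = 0 := fun i => by rw [real_inner_comm]; exact huv i
  -- p and q
  set p : Fin N → ℝ := fun i => ‖u i‖ ^ 2 with hp_def
  set q : Fin N → ℝ := fun i => ‖v i‖ ^ 2 with hq_def
  have hp0 : ∀ i, 0 ≤ p i := fun i => sq_nonneg _
  have hq0 : ∀ i, 0 ≤ q i := fun i => sq_nonneg _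
  have hpq : ∀ i, p i + q i = 1 := by
    intro i
    have h1 : ‖x i‖ ^ 2 = 1 := by rw [hx i]; norm_num
    have h2 : ‖u i - v i‖ ^ 2 = ‖u i‖ ^ 2 - 2 * ⟪u i, v i⟫ + ‖v i‖ ^ 2 :=
      norm_sub_sq_real _ _
    rw [← hxuv i, h1, huv i] at h2
    simp only [hp_def, hq_def]
    linarith
  have hp1 : ∀ i, p i ≤ 1 := fun i => by have := hpq i; have := hq0 i; linarith
  have hq1 : ∀ i, q i ≤ 1 := fun i => by have := hpq i; have := hp0 i; linarith
  have huu : ∀ i, ⟪u i, u i⟫ = p i := fun i => real_inner_self_eq_norm_sq _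
  have hvv : ∀ i, ⟪v i, v i⟫ = q i := fun i => real_inner_self_eq_norm_sq _
  -- orthonormality of the x i
  have hON : ∀ i j, i ≠ j → ⟪x i, x j⟫ = 0 := by
    intro i j hij
    rw [hxuv i, hxuv j, inner_sub_left, inner_sub_right, inner_sub_right]
    rw [hOrtho i j _ _ hij (hu0 i) (huabs i) (hu0 j) (huabs j),
      hOrtho i j _ _ hij (hu0 i) (huabs i) (hv0 j) (hvabs j),
      hOrtho i j _ _ hij (hv0 i) (hvabs i) (hu0 j) (huabs j),
      hOrtho i j _ _ hij (hv0 i) (hvabs i) (hv0 j) (hvabs j)]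
    ring
  have hxx : ∀ i, ⟪x i, x i⟫ = 1 := fun i => by
    rw [real_inner_self_eq_norm_sq, hx i]; norm_num
  -- positivity of c (n+1)
  have hcpos : ∀ n, 0 ≤ c (n + 1) := fun n => by rw [hc n]; exact le_sup_right
  -- lambda and its positive/negative parts
  set lam : ℕ → Fin N → ℝ := fun n i => ⟪c n, x i⟫ with hlam_def
  set lp : ℕ → Fin N → ℝ := fun n i => max (lam n i) 0 with hlp_def
  set lm : ℕ → Fin N → ℝ := fun n i => max (-(lam n i)) 0 with hlm_def
  have hlp0 : ∀ n i, 0 ≤ lp n i := fun n i => le_max_right _ _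
  have hlm0 : ∀ n i, 0 ≤ lm n i := fun n i => le_max_right _ _
  have hllp : ∀ n i, lam n i ≤ lp n i := fun n i => le_max_left _ _
  have hllm : ∀ n i, -(lam n i) ≤ lm n i := fun n i => le_max_left _ _
  -- a (n+1) is orthogonal to each x i
  have haz : ∀ n i, ⟪a (n + 1), x i⟫ = 0 := by
    intro n i
    rw [ha n, inner_sub_left, sum_inner]
    have hsum : ∑ j : Fin N, ⟪⟪c n, x j⟫ • x j, x i⟫ = ⟪c n, x i⟫ := by
      rw [Finset.sum_eq_single i]
      · rw [real_inner_smul_left, hxx i, mul_one]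
      · intro j _ hji
        rw [real_inner_smul_left, hON j i hji, mul_zero]
      · intro h; exact absurd (Finset.mem_univ i) h
    rw [hsum]; ring
  -- e n := negative part of a (n+1)
  set e : ℕ → X := fun n => (a (n + 1))⁻ with he_def
  have he0 : ∀ n, 0 ≤ e n := fun n => negPart_nonneg _
  have hce : ∀ n, c (n + 1) = a (n + 1) + e n := by
    intro n
    rw [hc n, ← posPart_def]
    show (a (n + 1))⁺ = a (n + 1) + (a (n + 1))⁻
    exact eq_add_of_sub_eq (posPart_sub_negPart (a (n + 1)))
  -- scalar smul estimates
  have hsmul_le : ∀ (t s : ℝ) (w : X), t ≤ s → 0 ≤ w → t • w ≤ s • w := by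
    intro t s w hts hw
    have h := smul_nonneg (sub_nonneg.mpr hts) hw
    rw [sub_smul] at h
    exact sub_nonneg.mp h
  -- B n bounds e n from above
  set B : ℕ → X := fun n => ∑ i, (lp n i • u i + lm n i • v i) with hB_def
  have hB0 : ∀ n, 0 ≤ B n := by
    intro n
    apply Finset.sum_nonneg
    intro i _
    exact add_nonneg (smul_nonneg (hlp0 n i) (hu0 i)) (smul_nonneg (hlm0 n i) (hv0 i))
  have hterm_le : ∀ n i, lam n i • x i ≤ lp n i • u i + lm n i • v i := by
    intro n i
    rw [hxuv i, smul_sub]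
    have h1 : lam n i • u i ≤ lp n i • u i := hsmul_le _ _ _ (hllp n i) (hu0 i)
    have h2 : -(lam n i • v i) ≤ lm n i • v i := by
      rw [← neg_smul]
      exact hsmul_le _ _ _ (hllm n i) (hv0 i)
    calc lam n i • u i - lam n i • v i = lam n i • u i + -(lam n i • v i) := by abel
    _ ≤ lp n i • u i + lm n i • v i := add_le_add h1 h2
  have heB : ∀ n, 0 ≤ c n → e n ≤ B n := by
    intro n hcn
    show (a (n + 1))⁻ ≤ B n
    rw [negPart_def]
    apply sup_le _ (hB0 n)
    rw [ha n, neg_sub]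
    calc (∑ i, lam n i • x i) - c n ≤ ∑ i, lam n i • x i := by
          exact sub_le_self _ hcn
    _ ≤ B n := Finset.sum_le_sum (fun i _ => hterm_le n i)
  -- inner products of e n with u i and v i
  have hEu : ∀ n i, 0 ≤ c n → ⟪e n, u i⟫ ≤ lp n i * p i := by
    intro n i hcn
    have h1 : ⟪e n, u i⟫ ≤ ⟪B n, u i⟫ := by
      have h := HL.inner_nonneg (B n - e n) (u i) (sub_nonneg.mpr (heB n hcn)) (hu0 i)
      rw [inner_sub_left] at h
      linarith
    have h2 : ⟪B n, u i⟫ = lp n i * p i := by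
      rw [hB_def]
      rw [sum_inner]
      rw [Finset.sum_eq_single i]
      · rw [inner_add_left, real_inner_smul_left, real_inner_smul_left, huu i, hvu i]
        ring
      · intro j _ hji
        rw [inner_add_left, real_inner_smul_left, real_inner_smul_left,
          hOrtho j i _ _ hji (hu0 j) (huabs j) (hu0 i) (huabs i),
          hOrtho j i _ _ hji (hv0 j) (hvabs j) (hu0 i) (huabs i)]
        ring
      · intro h; exact absurd (Finset.mem_univ i) h
    linarith
  have hEv : ∀ n i, 0 ≤ c n → ⟪e n, v i⟫ ≤ lm n i * q i := by
    intro n i hcn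
    have h1 : ⟪e n, v i⟫ ≤ ⟪B n, v i⟫ := by
      have h := HL.inner_nonneg (B n - e n) (v i) (sub_nonneg.mpr (heB n hcn)) (hv0 i)
      rw [inner_sub_left] at h
      linarith
    have h2 : ⟪B n, v i⟫ = lm n i * q i := by
      rw [hB_def]
      rw [sum_inner]
      rw [Finset.sum_eq_single i]
      · rw [inner_add_left, real_inner_smul_left, real_inner_smul_left, hvv i, huv i]
        ring
      · intro j _ hji
        rw [inner_add_left, real_inner_smul_left, real_inner_smul_left,
          hOrtho j i _ _ hji (hu0 j) (huabs j) (hv0 i) (hvabs i),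
          hOrtho j i _ _ hji (hv0 j) (hvabs j) (hv0 i) (hvabs i)]
        ring
      · intro h; exact absurd (Finset.mem_univ i) h
    linarith
  have hEu0 : ∀ n i, 0 ≤ ⟪e n, u i⟫ := fun n i => HL.inner_nonneg _ _ (he0 n) (hu0 i)
  have hEv0 : ∀ n i, 0 ≤ ⟪e n, v i⟫ := fun n i => HL.inner_nonneg _ _ (he0 n) (hv0 i)
  -- the lambda recursion
  have hlam_e : ∀ n i, lam (n + 1) i = ⟪e n, u i⟫ - ⟪e n, v i⟫ := by
    intro n i
    show ⟪c (n + 1), x i⟫ = ⟪e n, u i⟫ - ⟪e n, v i⟫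
    rw [hce n, inner_add_left, haz n i, zero_add, hxuv i, inner_sub_right]
  have hlam_ub : ∀ n i, 0 ≤ c n → lam (n + 1) i ≤ lp n i * p i := by
    intro n i hcn
    rw [hlam_e n i]
    have := hEu n i hcn
    have := hEv0 n i
    linarith
  have hlam_lb : ∀ n i, 0 ≤ c n → -(lm n i * q i) ≤ lam (n + 1) i := by
    intro n i hcn
    rw [hlam_e n i]
    have := hEv n i hcn
    have := hEu0 n i
    linarith
  have hlp_rec : ∀ n i, 0 ≤ c n → lp (n + 1) i ≤ p i * lp n i := by
    intro n i hcn
    have h1 := hlam_ub n i hcn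
    have h2 : 0 ≤ lp n i * p i := mul_nonneg (hlp0 n i) (hp0 i)
    show max (lam (n + 1) i) 0 ≤ p i * lp n i
    rw [mul_comm]
    exact max_le h1 h2
  have hlm_rec : ∀ n i, 0 ≤ c n → lm (n + 1) i ≤ q i * lm n i := by
    intro n i hcn
    have h1 := hlam_lb n i hcn
    have h2 : 0 ≤ lm n i * q i := mul_nonneg (hlm0 n i) (hq0 i)
    show max (-(lam (n + 1) i)) 0 ≤ q i * lm n i
    rw [mul_comm]
    exact max_le (by linarith) h2
  -- geometric decay
  have hc1pos : ∀ n, 0 ≤ c (1 + n) := fun n => by rw [Nat.add_comm]; exact hcpos n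
  have hgeo_p : ∀ i k, lp (1 + k) i ≤ p i ^ k * lp 1 i := by
    intro i k
    induction k with
    | zero => simp
    | succ k ih =>
      have h1 : lp (1 + (k + 1)) i ≤ p i * lp (1 + k) i := hlp_rec (1 + k) i (hc1pos k)
      calc lp (1 + (k + 1)) i ≤ p i * lp (1 + k) i := h1
      _ ≤ p i * (p i ^ k * lp 1 i) := mul_le_mul_of_nonneg_left ih (hp0 i)
      _ = p i ^ (k + 1) * lp 1 i := by ring
  have hgeo_q : ∀ i k, lm (1 + k) i ≤ q i ^ k * lm 1 i := by
    intro i k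
    induction k with
    | zero => simp
    | succ k ih =>
      have h1 : lm (1 + (k + 1)) i ≤ q i * lm (1 + k) i := hlm_rec (1 + k) i (hc1pos k)
      calc lm (1 + (k + 1)) i ≤ q i * lm (1 + k) i := h1
      _ ≤ q i * (q i ^ k * lm 1 i) := mul_le_mul_of_nonneg_left ih (hq0 i)
      _ = q i ^ (k + 1) * lm 1 i := by ring
  -- the upward push r n
  set r : ℕ → X := fun n => ∑ i, (lm n i • u i + lp n i • v i) with hr_def
  have hr0 : ∀ n, 0 ≤ r n := by
    intro n
    apply Finset.sum_nonneg
    intro i _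
    exact add_nonneg (smul_nonneg (hlm0 n i) (hu0 i)) (smul_nonneg (hlp0 n i) (hv0 i))
  have hterm_le2 : ∀ n i, -(lam n i • x i) ≤ lm n i • u i + lp n i • v i := by
    intro n i
    rw [hxuv i, smul_sub, neg_sub]
    have h1 : -(lam n i • u i) ≤ lm n i • u i := by
      rw [← neg_smul]
      exact hsmul_le _ _ _ (hllm n i) (hu0 i)
    have h2 : lam n i • v i ≤ lp n i • v i := hsmul_le _ _ _ (hllp n i) (hv0 i)
    calc lam n i • v i - lam n i • u i = lam n i • v i + -(lam n i • u i) := by abel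
    _ ≤ lp n i • v i + lm n i • u i := add_le_add h2 h1
    _ = lm n i • u i + lp n i • v i := by abel
  have hcr : ∀ n, 0 ≤ c n → c (n + 1) ≤ c n + r n := by
    intro n hcn
    rw [hc n]
    apply sup_le _ (add_nonneg hcn (hr0 n))
    rw [ha n]
    have h1 : -(∑ i : Fin N, lam n i • x i) ≤ r n := by
      rw [← Finset.sum_neg_distrib]
      exact Finset.sum_le_sum (fun i _ => hterm_le2 n i)
    calc c n - ∑ i : Fin N, lam n i • x i
        = c n + (-(∑ i : Fin N, lam n i • x i)) := by abel
    _ ≤ c n + r n := add_le_add_right h1 _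
  -- norm of r n
  have hrnorm : ∀ n, ‖r n‖ ≤ ∑ i, (lm n i * ‖u i‖ + lp n i * ‖v i‖) := by
    intro n
    refine (norm_sum_le _ _).trans (Finset.sum_le_sum fun i _ => ?_)
    refine (norm_add_le _ _).trans ?_
    rw [norm_smul, norm_smul, Real.norm_eq_abs, Real.norm_eq_abs,
      abs_of_nonneg (hlm0 n i), abs_of_nonneg (hlp0 n i)]
  -- Pythagoras
  have hPyth : ∀ n, ‖a (n + 1)‖ ^ 2 = ‖c n‖ ^ 2 - ∑ i, lam n i ^ 2 := by
    intro n
    have hcP : ⟪c n, ∑ i : Fin N, lam n i • x i⟫ = ∑ i, lam n i ^ 2 := by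
      rw [inner_sum]
      refine Finset.sum_congr rfl fun i _ => ?_
      rw [real_inner_smul_right]
      show lam n i * lam n i = lam n i ^ 2
      ring
    have hPP : ⟪∑ i : Fin N, lam n i • x i, ∑ i : Fin N, lam n i • x i⟫
        = ∑ i, lam n i ^ 2 := by
      rw [sum_inner]
      refine Finset.sum_congr rfl fun j _ => ?_
      rw [real_inner_smul_left, inner_sum]
      rw [Finset.sum_eq_single j]
      · rw [real_inner_smul_right, hxx j]
        show lam n j * (lam n j * 1) = lam n j ^ 2
        ring
      · intro i _ hij
        rw [real_inner_smul_right, hON j i (by exact fun hh => hij hh.symm), mul_zero]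
      · intro h; exact absurd (Finset.mem_univ j) h
    rw [ha n, norm_sub_sq_real, hcP]
    have hPnorm : ‖∑ i : Fin N, lam n i • x i‖ ^ 2 = ∑ i, lam n i ^ 2 := by
      rw [← real_inner_self_eq_norm_sq]
      exact hPP
    rw [hPnorm]
    ring
  have hnormca : ∀ n, ‖c (n + 1)‖ ≤ ‖a (n + 1)‖ := by
    intro n
    rw [hc n]
    apply norm_le_norm_of_abs_le_abs
    rw [abs_of_nonneg (le_sup_right : (0 : X) ≤ a (n + 1) ⊔ 0)]
    exact sup_le (le_abs_self _) (abs_nonneg _)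
  have hnormdec : ∀ n, ‖c (n + 1)‖ ^ 2 + ∑ i, lam n i ^ 2 ≤ ‖c n‖ ^ 2 := by
    intro n
    have h1 : ‖c (n + 1)‖ ^ 2 ≤ ‖a (n + 1)‖ ^ 2 :=
      pow_le_pow_left₀ (norm_nonneg _) (hnormca n) 2
    have h2 := hPyth n
    linarith
  have hsum_nonneg : ∀ n, (0 : ℝ) ≤ ∑ i, lam n i ^ 2 :=
    fun n => Finset.sum_nonneg fun i _ => sq_nonneg _
  have hcnorm_mono : ∀ n, ‖c (n + 1)‖ ≤ ‖c n‖ := by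
    intro n
    have h1 := hnormdec n
    have h2 := hsum_nonneg n
    nlinarith [norm_nonneg (c (n + 1)), norm_nonneg (c n)]
  have hcbound : ∀ n, ‖c (1 + n)‖ ≤ ‖c 1‖ := by
    intro n
    induction n with
    | zero => simp
    | succ n ih =>
      have := hcnorm_mono (1 + n)
      calc ‖c (1 + (n + 1))‖ = ‖c ((1 + n) + 1)‖ := by ring_nf
      _ ≤ ‖c (1 + n)‖ := hcnorm_mono (1 + n)
      _ ≤ ‖c 1‖ := ih
  -- lambda tends to zero
  have hbanti : Antitone (fun n => ‖c n‖ ^ 2) := by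
    apply antitone_nat_of_succ_le
    intro n
    have h1 := hnormdec n
    have h2 := hsum_nonneg n
    show ‖c (n + 1)‖ ^ 2 ≤ ‖c n‖ ^ 2
    linarith
  have hbbdd : BddBelow (Set.range (fun n => ‖c n‖ ^ 2)) := by
    refine ⟨0, ?_⟩
    rintro y ⟨n, rfl⟩
    exact sq_nonneg _
  have hbconv : Tendsto (fun n => ‖c n‖ ^ 2) atTop (nhds (⨅ n, ‖c n‖ ^ 2)) :=
    tendsto_atTop_ciInf hbanti hbbdd
  have hbconv1 : Tendsto (fun n => ‖c (n + 1)‖ ^ 2) atTop (nhds (⨅ n, ‖c n‖ ^ 2)) :=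
    hbconv.comp (tendsto_add_atTop_nat 1)
  have hbdiff : Tendsto (fun n => ‖c n‖ ^ 2 - ‖c (n + 1)‖ ^ 2) atTop (nhds 0) := by
    have := hbconv.sub hbconv1
    simpa using this
  have hlam_to0 : ∀ i, Tendsto (fun n => lam n i) atTop (nhds 0) := by
    intro i
    have hle : ∀ n, ‖lam n i‖ ≤ Real.sqrt (‖c n‖ ^ 2 - ‖c (n + 1)‖ ^ 2) := by
      intro n
      have h1 : lam n i ^ 2 ≤ ∑ j, lam n j ^ 2 :=
        Finset.single_le_sum (fun j _ => sq_nonneg (lam n j)) (Finset.mem_univ i)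
      have h2 := hnormdec n
      have h3 : lam n i ^ 2 ≤ ‖c n‖ ^ 2 - ‖c (n + 1)‖ ^ 2 := by linarith
      calc ‖lam n i‖ = |lam n i| := Real.norm_eq_abs _
      _ = Real.sqrt (lam n i ^ 2) := (Real.sqrt_sq_eq_abs _).symm
      _ ≤ Real.sqrt (‖c n‖ ^ 2 - ‖c (n + 1)‖ ^ 2) := Real.sqrt_le_sqrt h3
    have hg : Tendsto (fun n => Real.sqrt (‖c n‖ ^ 2 - ‖c (n + 1)‖ ^ 2)) atTop (nhds 0) := by
      have := hbdiff.sqrt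
      simpa using this
    exact squeeze_zero_norm hle hg
  -- summability of the upward pushes
  have hgsum : ∀ i, Summable (fun k =>
      q i ^ k * (lm 1 i * ‖u i‖) + p i ^ k * (lp 1 i * ‖v i‖)) := by
    intro i
    apply Summable.add
    · by_cases hui : ‖u i‖ = 0
      · simpa [hui] using summable_zero
      · have hppos : 0 < p i := by
          have : 0 < ‖u i‖ := lt_of_le_of_ne (norm_nonneg _) (Ne.symm hui)
          positivity
        have hqlt : q i < 1 := by have := hpq i; linarith
        exact (summable_geometric_of_lt_one (hq0 i) hqlt).mul_right _
    · by_cases hvi : ‖v i‖ = 0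
      · simpa [hvi] using summable_zero
      · have hqpos : 0 < q i := by
          have : 0 < ‖v i‖ := lt_of_le_of_ne (norm_nonneg _) (Ne.symm hvi)
          positivity
        have hplt : p i < 1 := by have := hpq i; linarith
        exact (summable_geometric_of_lt_one (hp0 i) hplt).mul_right _
  have hrsummable : Summable (fun k => ‖r (1 + k)‖) := by
    have hg : Summable (fun k : ℕ =>
        ∑ i, (q i ^ k * (lm 1 i * ‖u i‖) + p i ^ k * (lp 1 i * ‖v i‖))) :=
      summable_sum (fun i _ => hgsum i)
    have hle : ∀ k : ℕ, ‖r (1 + k)‖ ≤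
        ∑ i, (q i ^ k * (lm 1 i * ‖u i‖) + p i ^ k * (lp 1 i * ‖v i‖)) := by
      intro k
      refine (hrnorm (1 + k)).trans (Finset.sum_le_sum fun i _ => ?_)
      have h1 : lm (1 + k) i * ‖u i‖ ≤ q i ^ k * lm 1 i * ‖u i‖ :=
        mul_le_mul_of_nonneg_right (hgeo_q i k) (norm_nonneg _)
      have h2 : lp (1 + k) i * ‖v i‖ ≤ p i ^ k * lp 1 i * ‖v i‖ :=
        mul_le_mul_of_nonneg_right (hgeo_p i k) (norm_nonneg _)
      nlinarith [h1, h2]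
    exact Summable.of_nonneg_of_le (fun k => norm_nonneg _) hle hg
  have hRsummable : Summable (fun k => r (1 + k)) := Summable.of_norm hrsummable
  -- partial sums of r (1 + k)
  set S : ℕ → X := fun n => ∑ k ∈ Finset.range n, r (1 + k) with hS_def
  set T : X := ∑' k, r (1 + k) with hT_def
  have hStend : Tendsto S atTop (nhds T) := hRsummable.hasSum.tendsto_sum_nat
  -- the monotone auxiliary sequence
  set W : ℕ → X := fun n => c 1 + S n - c (1 + n) with hW_def
  have hWmono : Monotone W := by
    apply monotone_nat_of_le_succ
    intro n
    have hkey : c ((1 + n) + 1) ≤ c (1 + n) + r (1 + n) := hcr (1 + n) (hc1pos n)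
    have hS1 : S (n + 1) = S n + r (1 + n) := Finset.sum_range_succ _ _
    show c 1 + S n - c (1 + n) ≤ c 1 + S (n + 1) - c (1 + (n + 1))
    have heq : c (1 + (n + 1)) = c ((1 + n) + 1) := by ring_nf
    rw [heq, hS1]
    have h2 : c 1 + S n - c (1 + n)
        = (c 1 + (S n + r (1 + n))) - (c (1 + n) + r (1 + n)) := by abel
    rw [h2]
    exact sub_le_sub_left hkey _
  have hW0 : ∀ n, 0 ≤ W n := by
    intro n
    have h0 : W 0 = 0 := by
      show c 1 + S 0 - c (1 + 0) = 0
      have : S 0 = 0 := rfl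
      rw [this]
      have : (1 : ℕ) + 0 = 1 := rfl
      rw [this]
      abel
    rw [← h0]
    exact hWmono (Nat.zero_le n)
  have hWbdd : ∀ n, ‖W n‖ ≤ ‖c 1‖ + (∑' k, ‖r (1 + k)‖) + ‖c 1‖ := by
    intro n
    have h1 : ‖S n‖ ≤ ∑' k, ‖r (1 + k)‖ := by
      calc ‖S n‖ ≤ ∑ k ∈ Finset.range n, ‖r (1 + k)‖ := norm_sum_le _ _
      _ ≤ ∑' k, ‖r (1 + k)‖ :=
        Summable.sum_le_tsum _ (fun k _ => norm_nonneg _) hrsummable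
    calc ‖W n‖ = ‖c 1 + S n - c (1 + n)‖ := rfl
    _ ≤ ‖c 1 + S n‖ + ‖c (1 + n)‖ := norm_sub_le _ _
    _ ≤ ‖c 1‖ + ‖S n‖ + ‖c (1 + n)‖ := by
        have := norm_add_le (c 1) (S n)
        linarith
    _ ≤ ‖c 1‖ + (∑' k, ‖r (1 + k)‖) + ‖c 1‖ := by
        have := hcbound n
        linarith
  obtain ⟨l, hl⟩ := HL.exists_tendsto_of_monotone W hW0 hWmono _ hWbdd
  -- the limit
  set z : X := c 1 + T - l with hz_def
  have hcz : Tendsto (fun n => c (1 + n)) atTop (nhds z) := by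
    have heq : (fun n => c (1 + n)) = fun n => c 1 + S n - W n := by
      funext n
      show c (1 + n) = c 1 + S n - (c 1 + S n - c (1 + n))
      abel
    rw [heq]
    exact (tendsto_const_nhds.add hStend).sub hl
  have hctend : Tendsto c atTop (nhds z) := by
    have heq : (fun n => c (1 + n)) = fun n => c (n + 1) := by
      funext n; rw [Nat.add_comm]
    rw [heq] at hcz
    exact (tendsto_add_atTop_iff_nat 1).mp hcz
  -- inner products of z with the x i vanish
  have hinner_z : ∀ i, ⟪z, x i⟫ = 0 := by
    intro i
    have h1 : Tendsto (fun n => ⟪c n, x i⟫) atTop (nhds ⟪z, x i⟫) :=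
      hctend.inner tendsto_const_nhds
    exact tendsto_nhds_unique h1 (hlam_to0 i)
  -- z is nonnegative
  have hz0 : 0 ≤ z := by
    have h1 : Tendsto (fun n => c (n + 1)) atTop (nhds z) :=
      hctend.comp (tendsto_add_atTop_nat 1)
    exact le_of_tendsto_of_tendsto' tendsto_const_nhds h1 hcpos
  -- a also tends to z
  have hatend : Tendsto a atTop (nhds z) := by
    have h1 : Tendsto (fun n => ∑ i : Fin N, lam n i • x i) atTop (nhds 0) := by
      have h2 : Tendsto (fun n => ∑ i : Fin N, lam n i • x i) atTop
          (nhds (∑ i : Fin N, (0 : ℝ) • x i)) := by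
        apply tendsto_finset_sum
        intro i _
        exact (hlam_to0 i).smul_const (x i)
      simpa using h2
    have h2 : Tendsto (fun n => a (n + 1)) atTop (nhds z) := by
      have heq : (fun n => a (n + 1)) = fun n => c n - ∑ i : Fin N, lam n i • x i := by
        funext n; exact ha n
      rw [heq]
      have := hctend.sub h1
      simpa using this
    exact (tendsto_add_atTop_iff_nat 1).mp h2
  exact ⟨z, hinner_z, hz0, hatend, hctend⟩
end

section
/- Let X := ℓ²(ℕ) and let {v₁, v₂} be an orthonormal system in X such that: (i) all coordinates of v₁ are ≥ 0; (ii) the coordinates of v₂ are definitively of constant sign, i.e. there exists M ∈ ℕ such that either v₂,ₙ ≥ 0 for all n ≥ M or v₂,ₙ ≤ 0 for all n ≥ M; and (iii) supp(v₁) ∩ supp(v₂) is a finite set. Let x ∈ X and define the alternating projection sequences by b⁰ := x, aⁿ⁺¹ := bⁿ − ⟨bⁿ, v₁⟩v₁ − ⟨bⁿ, v₂⟩v₂, and bⁿ⁺¹ := (aⁿ⁺¹)⁺ (coordinatewise positive part). Then there exists y ∈ X with ⟨y, v₁⟩ = ⟨y, v₂⟩ = 0 and yₙ ≥ 0 for all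 n, such that both sequences (aⁿ) and (bⁿ) converge in norm to y. -/
open scoped RealInnerProductSpace
open Filter Topology

noncomputable section
set_option maxHeartbeats 2000000
abbrev X := lp (fun _ : ℕ => ℝ) 2

lemma coord_sub (f g : X) (k : ℕ) : (f - g) k = f k - g k := lp.coeFn_sub f g ▸ rfl
lemma coord_smul (c : ℝ) (f : X) (k : ℕ) : (c • f) k = c * f k := by
  rw [lp.coeFn_smul]; rfl

lemma summable_sq (f : X) : Summable (fun k => (f k)^2) := by
  have h := (lp.memℓp f).summable (p := 2) (by norm_num)
  simp only [ENNReal.toReal_ofNat, Real.rpow_two, Real.norm_eq_abs, sq_abs] at h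
  exact h

lemma norm_sq_eq (f : X) : ‖f‖ ^ 2 = ∑' k, (f k) ^ 2 := by
  have h := lp.norm_rpow_eq_tsum (p := 2) (by norm_num) f
  simp only [ENNReal.toReal_ofNat, Real.rpow_two, Real.norm_eq_abs, sq_abs] at h
  exact_mod_cast h

lemma inner_eq (f g : X) : ⟪f, g⟫ = ∑' k, f k * g k := by
  rw [lp.inner_eq_tsum]; exact tsum_congr fun k => Real.inner_apply _ _

lemma coord_le_norm (f : X) (k : ℕ) : |f k| ≤ ‖f‖ := by
  simpa using lp.norm_apply_le_norm (E := fun _ : ℕ => ℝ) two_ne_zero f k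

lemma norm_le_of_coord (f g : X) (h : ∀ k, |f k| ≤ |g k|) : ‖f‖ ≤ ‖g‖ := by
  have h2 : ‖f‖^2 ≤ ‖g‖^2 := by
    rw [norm_sq_eq, norm_sq_eq]
    exact Summable.tsum_le_tsum (fun k => by
      have := h k; nlinarith [abs_nonneg (f k), abs_nonneg (g k), sq_abs (f k), sq_abs (g k)])
      (summable_sq f) (summable_sq g)
  exact (pow_le_pow_iff_left₀ (norm_nonneg f) (norm_nonneg g) two_ne_zero).1 h2

lemma max_sub_zero (t c : ℝ) : max (t - c) 0 = max t c - c := by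
  rcases le_total t c with h | h
  · simp [max_eq_right, sub_nonpos.2 h, max_eq_right h]
  · simp [max_eq_left, sub_nonneg.2 h, max_eq_left h]

lemma tendsto_zero_of_sq (u : ℕ → ℝ) (hu : ∀ n, 0 ≤ u n)
    (h : Tendsto (fun n => (u n)^2) atTop (𝓝 0)) : Tendsto u atTop (𝓝 0) := by
  have : Tendsto (fun n => Real.sqrt ((u n)^2)) atTop (𝓝 (Real.sqrt 0)) :=
    (Real.continuous_sqrt.tendsto 0).comp h
  simpa [Real.sqrt_sq (hu _)] using this

lemma tendsto_zero_of_sq' (u : ℕ → ℝ)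
    (h : Tendsto (fun n => (u n)^2) atTop (𝓝 0)) : Tendsto u atTop (𝓝 0) := by
  have habs : Tendsto (fun n => |u n|) atTop (𝓝 0) := by
    have : Tendsto (fun n => Real.sqrt ((u n)^2)) atTop (𝓝 (Real.sqrt 0)) :=
      (Real.continuous_sqrt.tendsto 0).comp h
    simpa [Real.sqrt_sq_eq_abs] using this
  exact squeeze_zero_norm (fun n => le_of_eq (Real.norm_eq_abs _)) habs

variable {E : Type*} [NormedAddCommGroup E] [InnerProductSpace ℝ E]

lemma pythagoras (v₁ v₂ : E) (hv₁ : ‖v₁‖ = 1) (hv₂ : ‖v₂‖ = 1)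
    (horth : ⟪v₁, v₂⟫ = 0) (u : E) (c d : ℝ) (hc : ⟪u, v₁⟫ = c) (hd : ⟪u, v₂⟫ = d) :
    ‖u - c • v₁ - d • v₂‖ ^ 2 = ‖u‖ ^ 2 - c ^ 2 - d ^ 2 := by
  have h11 : ⟪v₁, v₁⟫ = 1 := by rw [real_inner_self_eq_norm_sq, hv₁]; norm_num
  have h22 : ⟪v₂, v₂⟫ = 1 := by rw [real_inner_self_eq_norm_sq, hv₂]; norm_num
  have h21 : ⟪v₂, v₁⟫ = 0 := by rw [real_inner_comm]; exact horth
  have hc' : ⟪v₁, u⟫ = c := by rw [real_inner_comm]; exact hc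
  have hd' : ⟪v₂, u⟫ = d := by rw [real_inner_comm]; exact hd
  rw [← real_inner_self_eq_norm_sq, ← real_inner_self_eq_norm_sq]
  simp only [inner_sub_left, inner_sub_right, real_inner_smul_left, real_inner_smul_right,
    hc, hd, hc', hd', h11, h22, horth, h21]
  ring

lemma norm_comb (v₁ v₂ : E) (hv₁ : ‖v₁‖ = 1) (hv₂ : ‖v₂‖ = 1)
    (horth : ⟪v₁, v₂⟫ = 0) (c d : ℝ) : ‖c • v₁ + d • v₂‖ ^ 2 = c ^ 2 + d ^ 2 := by
  have h11 : ⟪v₁, v₁⟫ = 1 := by rw [real_inner_self_eq_norm_sq, hv₁]; norm_num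
  have h22 : ⟪v₂, v₂⟫ = 1 := by rw [real_inner_self_eq_norm_sq, hv₂]; norm_num
  have h21 : ⟪v₂, v₁⟫ = 0 := by rw [real_inner_comm]; exact horth
  rw [← real_inner_self_eq_norm_sq]
  simp only [inner_add_left, inner_add_right, real_inner_smul_left, real_inner_smul_right,
    h11, h22, horth, h21]
  ring

lemma abs_max_sub (t s : ℝ) (hs : 0 ≤ s) : |max t 0 - s| ≤ |t - s| := by
  rcases le_total t 0 with h | h
  · rw [max_eq_right h, abs_of_nonpos (by linarith), abs_of_nonpos (by linarith)]
    linarith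
  · rw [max_eq_left h]

def Bp (β : ℕ → ℝ) (n : ℕ) : ℝ := ∑ j ∈ Finset.Ico 1 n, β j

def Mp (β : ℕ → ℝ) : ℕ → ℝ
  | 0 => Bp β 2
  | 1 => Bp β 2
  | 2 => Bp β 2
  | n + 3 => max (Mp β (n + 2)) (Bp β (n + 3))

lemma Bp_succ (β : ℕ → ℝ) (n : ℕ) (hn : 1 ≤ n) : Bp β (n + 1) = Bp β n + β n := by
  unfold Bp
  rw [Finset.sum_Ico_succ_top hn]

lemma Mp_succ (β : ℕ → ℝ) (n : ℕ) (hn : 2 ≤ n) :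
    Mp β (n + 1) = max (Mp β n) (Bp β (n + 1)) := by
  obtain ⟨m, rfl⟩ := Nat.exists_eq_add_of_le hn
  rw [Nat.add_comm 2 m]
  rfl

lemma Mp_mono (β : ℕ → ℝ) : Monotone (Mp β) := by
  apply monotone_nat_of_le_succ
  intro n
  match n with
  | 0 => exact le_refl _
  | 1 => exact le_refl _
  | n + 2 => rw [Mp_succ β (n+2) (by omega)]; exact le_max_left _ _

lemma Mp_two (β : ℕ → ℝ) : Mp β 2 = Bp β 2 := rfl

lemma Bp_le_Mp (β : ℕ → ℝ) (n : ℕ) (hn : 2 ≤ n) : Bp β n ≤ Mp β n := by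
  match n, hn with
  | 2, _ => exact le_of_eq (Mp_two β).symm
  | (n+3), _ => rw [show n + 3 = (n + 2) + 1 from rfl, Mp_succ β (n+2) (by omega)]
                exact le_max_right _ _

lemma B2_le_Mp (β : ℕ → ℝ) (n : ℕ) (hn : 2 ≤ n) : Bp β 2 ≤ Mp β n := by
  rw [← Mp_two β]; exact Mp_mono β hn

lemma key (v₁ v₂ : X) (hv₁ : ‖v₁‖ = 1) (hv₂ : ‖v₂‖ = 1) (horth : ⟪v₁, v₂⟫ = 0)
    (hpos : ∀ k : ℕ, 0 ≤ v₁ k) (M : ℕ) (hsgn : ∀ n ≥ M, 0 ≤ v₂ n)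
    (hfin : ({k : ℕ | v₁ k ≠ 0} ∩ {k : ℕ | v₂ k ≠ 0}).Finite)
    (a b : ℕ → X)
    (ha : ∀ n : ℕ, a (n + 1) = b n - ⟪b n, v₁⟫ • v₁ - ⟪b n, v₂⟫ • v₂)
    (hb : ∀ (n : ℕ) (k : ℕ), (b (n + 1)) k = max ((a (n + 1)) k) 0) :
    ∃ y : X, ⟪y, v₁⟫ = 0 ∧ ⟪y, v₂⟫ = 0 ∧ (∀ k : ℕ, 0 ≤ y k) ∧
      Tendsto a atTop (𝓝 y) ∧ Tendsto b atTop (𝓝 y) := by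
  set α : ℕ → ℝ := fun n => ⟪b n, v₁⟫ with hαdef
  set β : ℕ → ℝ := fun n => ⟪b n, v₂⟫ with hβdef
  -- basic coordinate facts
  have hb_nonneg : ∀ n k, 0 ≤ b (n + 1) k := fun n k => by
    rw [hb]; exact le_max_right _ _
  have hα_nonneg : ∀ n, 0 ≤ α (n + 1) := by
    intro n
    rw [hαdef]
    dsimp only
    rw [inner_eq]
    exact tsum_nonneg fun k => mul_nonneg (hb_nonneg n k) (hpos k)
  have step1 : ∀ z : X, ⟪z, v₁⟫ = 0 → ⟪z, v₂⟫ = 0 → ∀ n,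
      ‖a (n + 1) - z‖ ^ 2 = ‖b n - z‖ ^ 2 - (α n ^ 2 + β n ^ 2) := by
    intro z h1 h2 n
    have hu1 : ⟪b n - z, v₁⟫ = α n := by rw [inner_sub_left, h1, sub_zero]
    have hu2 : ⟪b n - z, v₂⟫ = β n := by rw [inner_sub_left, h2, sub_zero]
    have heq : a (n + 1) - z = (b n - z) - α n • v₁ - β n • v₂ := by
      rw [ha n]; abel
    rw [heq, pythagoras v₁ v₂ hv₁ hv₂ horth _ _ _ hu1 hu2]
    ring
  have step2 : ∀ z : X, (∀ k, 0 ≤ z k) → ∀ n,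
      ‖b (n + 1) - z‖ ≤ ‖a (n + 1) - z‖ := by
    intro z hz n
    apply norm_le_of_coord
    intro k
    rw [coord_sub, coord_sub, hb n k]
    exact abs_max_sub _ _ (hz k)
  have hz0 : ∀ k, (0 : X) k = 0 := fun k => rfl
  have hstep_norm : ∀ n, ‖a (n + 1)‖ ^ 2 = ‖b n‖ ^ 2 - (α n ^ 2 + β n ^ 2) := by
    intro n
    have := step1 0 (inner_zero_left _) (inner_zero_left _) n
    simpa using this
  have hstep_b : ∀ n, ‖b (n + 1)‖ ≤ ‖a (n + 1)‖ := by
    intro n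
    have := step2 0 (fun k => le_of_eq rfl) n
    simpa using this
  have hstep : ∀ n, ‖b (n + 1)‖ ≤ ‖b n‖ := by
    intro n
    refine (hstep_b n).trans ?_
    have h := hstep_norm n
    have h2 : ‖a (n + 1)‖ ^ 2 ≤ ‖b n‖ ^ 2 := by nlinarith [sq_nonneg (α n), sq_nonneg (β n)]
    exact (pow_le_pow_iff_left₀ (norm_nonneg _) (norm_nonneg _) two_ne_zero).1 h2
  have hbanti : Antitone (fun n => ‖b n‖) := antitone_nat_of_succ_le hstep
  set R : ℝ := ‖b 0‖ with hRdef
  have hbR : ∀ n, ‖b n‖ ≤ R := fun n => hbanti (Nat.zero_le n)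
  -- summability of α² + β²
  have hsq_le : ∀ n, α n ^ 2 + β n ^ 2 ≤ ‖b n‖ ^ 2 - ‖b (n + 1)‖ ^ 2 := by
    intro n
    have h1 := hstep_norm n
    have h2 : ‖b (n + 1)‖ ^ 2 ≤ ‖a (n + 1)‖ ^ 2 :=
      pow_le_pow_left₀ (norm_nonneg _) (hstep_b n) 2
    linarith
  have hsum : Summable (fun n => α n ^ 2 + β n ^ 2) := by
    apply summable_of_sum_range_le (c := R ^ 2)
      (fun n => by positivity)
    intro m
    have : ∑ n ∈ Finset.range m, (α n ^ 2 + β n ^ 2) ≤ ‖b 0‖ ^ 2 - ‖b m‖ ^ 2 := by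
      induction m with
      | zero => simp
      | succ m ih =>
        rw [Finset.sum_range_succ]
        have := hsq_le m
        linarith
    have hm : (0:ℝ) ≤ ‖b m‖ ^ 2 := by positivity
    rw [hRdef]
    linarith
  have hs0 : Tendsto (fun n => α n ^ 2 + β n ^ 2) atTop (𝓝 0) := hsum.tendsto_atTop_zero
  have hα0 : Tendsto α atTop (𝓝 0) := by
    apply tendsto_zero_of_sq'
    exact squeeze_zero (fun n => sq_nonneg _) (fun n => by nlinarith [sq_nonneg (β n)]) hs0
  have hβ0 : Tendsto β atTop (𝓝 0) := by
    apply tendsto_zero_of_sq'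
    exact squeeze_zero (fun n => sq_nonneg _) (fun n => by nlinarith [sq_nonneg (α n)]) hs0
  have hab0 : Tendsto (fun n => ‖a (n + 1) - b n‖) atTop (𝓝 0) := by
    apply tendsto_zero_of_sq _ (fun n => norm_nonneg _)
    have heq : ∀ n, ‖a (n + 1) - b n‖ ^ 2 = α n ^ 2 + β n ^ 2 := by
      intro n
      have : a (n + 1) - b n = -(α n • v₁ + β n • v₂) := by rw [ha n]; abel
      rw [this, norm_neg, norm_comb v₁ v₂ hv₁ hv₂ horth]
    simpa only [heq] using hs0
  -- coordinate recursion
  have hcoord : ∀ n k, b (n + 1) k = max (b n k - α n * v₁ k - β n * v₂ k) 0 := by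
    intro n k
    rw [hb n k, ha n]
    congr 1
  -- choice of N
  obtain ⟨N, hNM, hNS⟩ : ∃ N : ℕ, M ≤ N ∧ ∀ k, N ≤ k → v₁ k ≠ 0 → v₂ k = 0 := by
    refine ⟨max M (hfin.toFinset.sup id + 1), le_max_left _ _, fun k hk h1 => ?_⟩
    by_contra h2
    have hmem : k ∈ hfin.toFinset := hfin.mem_toFinset.2 ⟨h1, h2⟩
    have := Finset.le_sup (f := id) hmem
    simp only [id] at this
    omega
  have hNsgn : ∀ k, N ≤ k → 0 ≤ v₂ k := fun k hk => hsgn k (hNM.trans hk)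
  have hv₁N : ∀ k, N ≤ k → v₂ k ≠ 0 → v₁ k = 0 := by
    intro k hk h2
    by_contra h1
    exact h2 (hNS k hk h1)
  -- class with v₂ k = 0 : coordinates are eventually antitone
  have hAanti : ∀ k, v₂ k = 0 → ∀ n, b (n + 2) k ≤ b (n + 1) k := by
    intro k h2 n
    rw [show n + 2 = (n + 1) + 1 from rfl, hcoord (n + 1) k, h2]
    have : b (n + 1) k - α (n + 1) * v₁ k - β (n + 1) * 0 ≤ b (n + 1) k := by
      have := mul_nonneg (hα_nonneg n) (hpos k)
      linarith
    calc max (b (n + 1) k - α (n + 1) * v₁ k - β (n + 1) * 0) 0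
        ≤ max (b (n + 1) k) 0 := max_le_max this (le_refl 0)
      _ = b (n + 1) k := max_eq_left (hb_nonneg n k)
  have hAanti' : ∀ k, v₂ k = 0 → Antitone (fun n => b (n + 1) k) := by
    intro k h2
    exact antitone_nat_of_succ_le (fun n => hAanti k h2 n)
  have hAconv : ∀ k, v₂ k = 0 → ∃ L, Tendsto (fun n => b n k) atTop (𝓝 L) := by
    intro k h2
    have hbdd : BddBelow (Set.range fun n => b (n + 1) k) := by
      refine ⟨0, ?_⟩
      rintro _ ⟨n, rfl⟩
      exact hb_nonneg n k
    refine ⟨⨅ n, b (n + 1) k, ?_⟩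
    have := tendsto_atTop_ciInf (hAanti' k h2) hbdd
    exact (tendsto_add_atTop_iff_nat 1).1 this
  have hAdom : ∀ k, v₂ k = 0 → ∀ n, b (n + 1) k ≤ b 1 k := by
    intro k h2 n
    exact hAanti' k h2 (Nat.zero_le n)
  -- closed form on the support of v₂ beyond N
  set c : ℕ → ℝ := fun k => b 2 k / v₂ k + Bp β 2 with hcdef
  have hform : ∀ k, N ≤ k → v₂ k ≠ 0 → ∀ n, 2 ≤ n →
      b n k = v₂ k * (max (c k) (Mp β n) - Bp β n) := by
    intro k hk h2
    have hv2pos : 0 < v₂ k := lt_of_le_of_ne (hNsgn k hk) (Ne.symm h2)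
    have hv1z : v₁ k = 0 := hv₁N k hk h2
    intro n hn
    induction n, hn using Nat.le_induction with
    | base =>
      rw [Mp_two β]
      have hck : Bp β 2 ≤ c k := by
        rw [hcdef]
        have : 0 ≤ b 2 k / v₂ k := div_nonneg (hb_nonneg 1 k) hv2pos.le
        dsimp only
        linarith
      rw [max_eq_left hck, hcdef]
      field_simp
      ring
    | succ n hn ih =>
      rw [hcoord n k, ih, hv1z]
      have h1n : 1 ≤ n := by omega
      rw [Bp_succ β n h1n, Mp_succ β n hn]
      have hfac : v₂ k * (max (c k) (Mp β n) - Bp β n) - α n * 0 - β n * v₂ k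
          = v₂ k * (max (c k) (Mp β n) - (Bp β n + β n)) := by ring
      rw [hfac]
      rw [show (0:ℝ) = v₂ k * 0 by ring, ← mul_max_of_nonneg _ _ hv2pos.le]
      congr 1
      rw [show max (c k) (Mp β n) - (Bp β n + β n)
            = max (c k) (Mp β n) - (Bp β n + β n) - 0 by ring]
      rw [show (max (c k) (Mp β n) - (Bp β n + β n) - 0 : ℝ)
            = max (c k) (Mp β n) - (Bp β n + β n) by ring]
      rw [max_sub_zero (max (c k) (Mp β n)) (Bp β n + β n), max_assoc, Bp_succ β n h1n]
  have hMBnonneg : ∀ n, 2 ≤ n → 0 ≤ Mp β n - Bp β n :=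
    fun n hn => sub_nonneg.2 (Bp_le_Mp β n hn)
  obtain ⟨φ₀, hφ₀mono, C, hC0, hBconv, hBdom⟩ :
      ∃ φ₀ : ℕ → ℕ, StrictMono φ₀ ∧ ∃ C : ℝ, 0 ≤ C ∧
        (∀ k, N ≤ k → v₂ k ≠ 0 → ∃ L, Tendsto (fun j => b (φ₀ j) k) atTop (𝓝 L)) ∧
        (∀ k, N ≤ k → v₂ k ≠ 0 → ∀ n, 2 ≤ n → b n k ≤ b 2 k + C * v₂ k) := by
    by_cases hex : ∃ k₀, N ≤ k₀ ∧ v₂ k₀ ≠ 0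
    · obtain ⟨k₀, hk₀, h2₀⟩ := hex
      have hv2pos₀ : 0 < v₂ k₀ := lt_of_le_of_ne (hNsgn k₀ hk₀) (Ne.symm h2₀)
      set C := R / v₂ k₀ with hCdef
      have hC0 : 0 ≤ C := div_nonneg (norm_nonneg _) hv2pos₀.le
      have hMBC : ∀ n, 2 ≤ n → Mp β n - Bp β n ≤ C := by
        intro n hn
        have hform₀ := hform k₀ hk₀ h2₀ n hn
        have hble : b n k₀ ≤ R := le_trans (le_abs_self _) ((coord_le_norm _ _).trans (hbR n))
        have hmb : v₂ k₀ * (Mp β n - Bp β n) ≤ b n k₀ := by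
          rw [hform₀]
          have h := le_max_right (c k₀) (Mp β n)
          have : Mp β n - Bp β n ≤ max (c k₀) (Mp β n) - Bp β n := by linarith
          exact mul_le_mul_of_nonneg_left this hv2pos₀.le
        rw [hCdef, le_div_iff₀ hv2pos₀]
        nlinarith
      have hBdom : ∀ k, N ≤ k → v₂ k ≠ 0 → ∀ n, 2 ≤ n → b n k ≤ b 2 k + C * v₂ k := by
        intro k hk h2 n hn
        have hvp : 0 < v₂ k := lt_of_le_of_ne (hNsgn k hk) (Ne.symm h2)
        rw [hform k hk h2 n hn]
        have hcB : c k - Bp β 2 = b 2 k / v₂ k := by rw [hcdef]; ring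
        have hcB0 : 0 ≤ c k - Bp β 2 := by
          rw [hcB]; exact div_nonneg (hb_nonneg 1 k) hvp.le
        have h1 : max (c k) (Mp β n) - Bp β n ≤ (c k - Bp β 2) + C := by
          rcases max_cases (c k) (Mp β n) with ⟨he, hge⟩ | ⟨he, hle⟩
          · rw [he]
            have hB2M := B2_le_Mp β n hn
            have := hMBC n hn
            linarith
          · rw [he]
            have := hMBC n hn
            linarith
        calc v₂ k * (max (c k) (Mp β n) - Bp β n)
            ≤ v₂ k * ((c k - Bp β 2) + C) := mul_le_mul_of_nonneg_left h1 hvp.le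
          _ = b 2 k + C * v₂ k := by
              rw [hcB]
              field_simp
      by_cases hMb : BddAbove (Set.range (Mp β))
      · have hMtend : Tendsto (Mp β) atTop (𝓝 (⨆ n, Mp β n)) :=
          tendsto_atTop_ciSup (Mp_mono β) hMb
        have hBle : ∀ j, Bp β (j + 2) ∈ Set.Icc (Mp β 2 - C) (⨆ n, Mp β n) := by
          intro j
          constructor
          · have h1 := hMBC (j + 2) (by omega)
            have h2 : Mp β 2 ≤ Mp β (j + 2) := Mp_mono β (by omega)
            linarith
          · exact le_trans (Bp_le_Mp β (j + 2) (by omega)) (le_ciSup hMb (j + 2))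
        obtain ⟨βoo, _, ψ, hψmono, hψtend⟩ :=
          tendsto_subseq_of_bounded (Metric.isBounded_Icc _ _) hBle
        have hmono : StrictMono (fun j => ψ j + 2) := fun i j h => by
          dsimp only; exact Nat.add_lt_add_right (hψmono h) 2
        refine ⟨fun j => ψ j + 2, hmono, C, hC0, ?_, hBdom⟩
        intro k hk h2
        refine ⟨v₂ k * (max (c k) (⨆ n, Mp β n) - βoo), ?_⟩
        have hMc : Tendsto (fun j => Mp β (ψ j + 2)) atTop (𝓝 (⨆ n, Mp β n)) :=
          hMtend.comp hmono.tendsto_atTop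
        have hBc : Tendsto (fun j => Bp β (ψ j + 2)) atTop (𝓝 βoo) := hψtend
        have hlim : Tendsto (fun j => v₂ k * (max (c k) (Mp β (ψ j + 2)) - Bp β (ψ j + 2)))
            atTop (𝓝 (v₂ k * (max (c k) (⨆ n, Mp β n) - βoo))) :=
          (((tendsto_const_nhds.max hMc).sub hBc).const_mul _)
        refine Tendsto.congr (fun j => ?_) hlim
        exact (hform k hk h2 (ψ j + 2) (by omega)).symm
      · have hMtop : Tendsto (Mp β) atTop atTop :=
          tendsto_atTop_atTop_of_monotone' (Mp_mono β) hMb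
        have hdmem : ∀ j, Mp β (j + 2) - Bp β (j + 2) ∈ Set.Icc (0 : ℝ) C :=
          fun j => ⟨hMBnonneg _ (by omega), hMBC _ (by omega)⟩
        obtain ⟨t, _, ψ, hψmono, hψtend⟩ :=
          tendsto_subseq_of_bounded (Metric.isBounded_Icc _ _) hdmem
        have hmono : StrictMono (fun j => ψ j + 2) := fun i j h => by
          dsimp only; exact Nat.add_lt_add_right (hψmono h) 2
        refine ⟨fun j => ψ j + 2, hmono, C, hC0, ?_, hBdom⟩
        intro k hk h2
        refine ⟨v₂ k * t, ?_⟩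
        have hMinf : Tendsto (fun j => Mp β (ψ j + 2)) atTop atTop :=
          hMtop.comp hmono.tendsto_atTop
        have hev : ∀ᶠ j in atTop, c k ≤ Mp β (ψ j + 2) := hMinf.eventually_ge_atTop (c k)
        have hdc : Tendsto (fun j => Mp β (ψ j + 2) - Bp β (ψ j + 2)) atTop (𝓝 t) := hψtend
        have hlim : Tendsto (fun j => v₂ k * (Mp β (ψ j + 2) - Bp β (ψ j + 2)))
            atTop (𝓝 (v₂ k * t)) := hdc.const_mul _
        refine Tendsto.congr' ?_ hlim
        filter_upwards [hev] with j hj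
        rw [hform k hk h2 (ψ j + 2) (by omega), max_eq_right hj]
    · push_neg at hex
      exact ⟨id, strictMono_id, 0, le_refl 0,
        fun k hk h2 => absurd (hex k hk) h2,
        fun k hk h2 => absurd (hex k hk) h2⟩
  have hR0 : 0 ≤ R := norm_nonneg _
  obtain ⟨Lh, _, ψ₁, hψ₁mono, hψ₁tend⟩ :=
    tendsto_subseq_of_bounded (s := Metric.closedBall (0 : Fin N → ℝ) R)
      Metric.isBounded_closedBall (x := fun j => fun i : Fin N => b (φ₀ j) i)
      (fun j => by
        rw [Metric.mem_closedBall, dist_pi_le_iff hR0]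
        intro i
        simp only [Pi.zero_apply, Real.dist_eq, sub_zero]
        exact (coord_le_norm _ _).trans (hbR _))
  set φ : ℕ → ℕ := fun j => φ₀ (ψ₁ (j + 2)) with hφdef
  have hφmono : StrictMono φ := fun i j h => hφ₀mono (hψ₁mono (by omega))
  have hφge2 : ∀ j, 2 ≤ φ j := by
    intro j
    have h1 : ψ₁ (j + 2) ≤ φ₀ (ψ₁ (j + 2)) := hφ₀mono.le_apply
    have h2 : j + 2 ≤ ψ₁ (j + 2) := hψ₁mono.le_apply
    show 2 ≤ φ₀ (ψ₁ (j + 2))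
    omega
  have hφatTop : Tendsto φ atTop atTop := hφmono.tendsto_atTop
  have hψ₁shift : Tendsto (fun j => ψ₁ (j + 2)) atTop atTop :=
    hψ₁mono.tendsto_atTop.comp (tendsto_add_atTop_nat 2)
  have hconv_all : ∀ k, ∃ L, Tendsto (fun j => b (φ j) k) atTop (𝓝 L) := by
    intro k
    by_cases hkN : k < N
    · refine ⟨Lh ⟨k, hkN⟩, ?_⟩
      have hcc : Tendsto (fun m => b (φ₀ (ψ₁ m)) k) atTop (𝓝 (Lh ⟨k, hkN⟩)) :=
        ((continuous_apply (⟨k, hkN⟩ : Fin N)).continuousAt.tendsto).comp hψ₁tend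
      exact hcc.comp (tendsto_add_atTop_nat 2)
    · push_neg at hkN
      by_cases h2 : v₂ k = 0
      · obtain ⟨L, hL⟩ := hAconv k h2
        exact ⟨L, hL.comp hφatTop⟩
      · obtain ⟨L, hL⟩ := hBconv k hkN h2
        exact ⟨L, hL.comp hψ₁shift⟩
  set g : ℕ → ℝ := fun k => if k < N then R else |b 1 k| + |b 2 k| + C * |v₂ k| with hgdef
  have hgnonneg : ∀ k, 0 ≤ g k := by
    intro k
    rw [hgdef]
    dsimp only
    by_cases hkN : k < N
    · rw [if_pos hkN]; exact hR0
    · rw [if_neg hkN]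
      have := abs_nonneg (b 1 k)
      have := abs_nonneg (b 2 k)
      have := mul_nonneg hC0 (abs_nonneg (v₂ k))
      linarith
  have hdom : ∀ j k, |b (φ j) k| ≤ g k := by
    intro j k
    rw [hgdef]
    dsimp only
    by_cases hkN : k < N
    · rw [if_pos hkN]; exact (coord_le_norm _ _).trans (hbR _)
    · rw [if_neg hkN]
      push_neg at hkN
      obtain ⟨m, hm⟩ : ∃ m, φ j = m + 2 := ⟨φ j - 2, by have := hφge2 j; omega⟩
      have hnn : 0 ≤ b (φ j) k := by
        rw [hm]; exact hb_nonneg (m + 1) k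
      rw [abs_of_nonneg hnn]
      by_cases h2 : v₂ k = 0
      · have hle : b (φ j) k ≤ b 1 k := by rw [hm]; exact hAdom k h2 (m + 1)
        have h1 := le_abs_self (b 1 k)
        have h2' := abs_nonneg (b 2 k)
        have h3 := mul_nonneg hC0 (abs_nonneg (v₂ k))
        linarith
      · have hd := hBdom k hkN h2 (φ j) (hφge2 j)
        have h1 := abs_nonneg (b 1 k)
        have h2' := le_abs_self (b 2 k)
        have h3 : C * v₂ k ≤ C * |v₂ k| := mul_le_mul_of_nonneg_left (le_abs_self _) hC0
        linarith
  have hgsq : Summable (fun k => g k ^ 2) := by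
    have hmaj : ∀ k, g k ^ 2 ≤ (if k < N then R ^ 2 else 0)
        + (3 * b 1 k ^ 2 + 3 * b 2 k ^ 2 + 3 * C ^ 2 * v₂ k ^ 2) := by
      intro k
      rw [hgdef]
      dsimp only
      by_cases hkN : k < N
      · rw [if_pos hkN, if_pos hkN]
        nlinarith [sq_nonneg (b 1 k), sq_nonneg (b 2 k), sq_nonneg (v₂ k), sq_nonneg C,
          mul_nonneg (sq_nonneg C) (sq_nonneg (v₂ k))]
      · rw [if_neg hkN, if_neg hkN]
        nlinarith [sq_nonneg (|b 1 k| - |b 2 k|), sq_nonneg (|b 1 k| - C * |v₂ k|),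
          sq_nonneg (|b 2 k| - C * |v₂ k|), sq_abs (b 1 k), sq_abs (b 2 k), sq_abs (v₂ k),
          abs_nonneg (b 1 k), abs_nonneg (b 2 k), abs_nonneg (v₂ k), hC0]
    apply Summable.of_nonneg_of_le (fun k => sq_nonneg _) hmaj
    apply Summable.add
    · exact summable_of_ne_finset_zero (s := Finset.range N)
        (fun k hk => by rw [if_neg (by simpa using hk)])
    · exact (((summable_sq (b 1)).mul_left 3).add ((summable_sq (b 2)).mul_left 3)).add
        ((summable_sq v₂).mul_left (3 * C ^ 2))
  -- construct the limit
  choose y₀ hy₀ using hconv_all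
  have hy₀bd : ∀ k, |y₀ k| ≤ g k := by
    intro k
    have habs : Tendsto (fun j => |b (φ j) k|) atTop (𝓝 |y₀ k|) :=
      (continuous_abs.continuousAt.tendsto).comp (hy₀ k)
    exact le_of_tendsto habs (Eventually.of_forall fun j => hdom j k)
  have hy₀mem : Memℓp y₀ 2 := by
    apply memℓp_gen
    have hsummy : Summable (fun k => (y₀ k) ^ 2) := by
      refine Summable.of_nonneg_of_le (fun k => sq_nonneg _) (fun k => ?_) hgsq
      have h1 := hy₀bd k
      nlinarith [abs_nonneg (y₀ k), sq_abs (y₀ k), hgnonneg k]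
    simpa only [ENNReal.toReal_ofNat, Real.rpow_two, Real.norm_eq_abs, sq_abs] using hsummy
  set y : X := ⟨y₀, hy₀mem⟩ with hydef
  have hyk : ∀ k, y k = y₀ k := fun k => rfl
  have hbφy : Tendsto (fun j => ‖b (φ j) - y‖) atTop (𝓝 0) := by
    apply tendsto_zero_of_sq _ (fun j => norm_nonneg _)
    have hrw : ∀ j, ‖b (φ j) - y‖ ^ 2 = ∑' k, (b (φ j) k - y₀ k) ^ 2 := by
      intro j
      rw [norm_sq_eq]
      congr 1
    simp only [hrw]
    rw [show (0 : ℝ) = ∑' (_ : ℕ), (0 : ℝ) from tsum_zero.symm]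
    apply tendsto_tsum_of_dominated_convergence (bound := fun k => (2 * g k) ^ 2)
    · exact (hgsq.mul_left 4).congr (fun k => by ring)
    · intro k
      have h1 : Tendsto (fun j => b (φ j) k - y₀ k) atTop (𝓝 0) := by
        simpa using (hy₀ k).sub_const (y₀ k)
      simpa using h1.pow 2
    · apply Eventually.of_forall
      intro j k
      have h1 : |b (φ j) k - y₀ k| ≤ 2 * g k := by
        have := abs_sub (b (φ j) k) (y₀ k)
        have := hdom j k
        have := hy₀bd k
        linarith
      have h2 : (b (φ j) k - y₀ k) ^ 2 ≤ (2 * g k) ^ 2 := by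
        rw [← sq_abs (b (φ j) k - y₀ k)]
        exact pow_le_pow_left₀ (abs_nonneg _) h1 2
      rw [Real.norm_eq_abs, abs_of_nonneg (sq_nonneg _)]
      exact h2
  have hbφ : Tendsto (fun j => b (φ j)) atTop (𝓝 y) :=
    tendsto_iff_norm_sub_tendsto_zero.2 hbφy
  have hy1 : ⟪y, v₁⟫ = 0 := by
    have h1 : Tendsto (fun j => (⟪b (φ j), v₁⟫ : ℝ)) atTop (𝓝 ⟪y, v₁⟫) :=
      hbφ.inner tendsto_const_nhds
    have h2 : Tendsto (fun j => (⟪b (φ j), v₁⟫ : ℝ)) atTop (𝓝 0) := hα0.comp hφatTop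
    exact tendsto_nhds_unique h1 h2
  have hy2 : ⟪y, v₂⟫ = 0 := by
    have h1 : Tendsto (fun j => (⟪b (φ j), v₂⟫ : ℝ)) atTop (𝓝 ⟪y, v₂⟫) :=
      hbφ.inner tendsto_const_nhds
    have h2 : Tendsto (fun j => (⟪b (φ j), v₂⟫ : ℝ)) atTop (𝓝 0) := hβ0.comp hφatTop
    exact tendsto_nhds_unique h1 h2
  have hynn : ∀ k, 0 ≤ y k := by
    intro k
    refine ge_of_tendsto (hy₀ k) (Eventually.of_forall fun j => ?_)
    obtain ⟨m, hm⟩ : ∃ m, φ j = m + 2 := ⟨φ j - 2, by have := hφge2 j; omega⟩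
    rw [hm]
    exact hb_nonneg (m + 1) k
  have hfej : ∀ n, ‖b (n + 1) - y‖ ≤ ‖b n - y‖ := by
    intro n
    refine (step2 y hynn n).trans ?_
    have h := step1 y hy1 hy2 n
    have h2 : ‖a (n + 1) - y‖ ^ 2 ≤ ‖b n - y‖ ^ 2 := by
      nlinarith [sq_nonneg (α n), sq_nonneg (β n)]
    exact (pow_le_pow_iff_left₀ (norm_nonneg _) (norm_nonneg _) two_ne_zero).1 h2
  have hdanti : Antitone (fun n => ‖b n - y‖) := antitone_nat_of_succ_le hfej
  have hdbdd : BddBelow (Set.range fun n => ‖b n - y‖) := by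
    refine ⟨0, ?_⟩
    rintro _ ⟨n, rfl⟩
    exact norm_nonneg _
  have hdtend := tendsto_atTop_ciInf hdanti hdbdd
  have hiInf0 : (⨅ n, ‖b n - y‖) = 0 :=
    tendsto_nhds_unique (hdtend.comp hφatTop) hbφy
  have hbtend : Tendsto b atTop (𝓝 y) :=
    tendsto_iff_norm_sub_tendsto_zero.2 (hiInf0 ▸ hdtend)
  have hatend : Tendsto a atTop (𝓝 y) := by
    rw [← tendsto_add_atTop_iff_nat 1]
    apply tendsto_iff_norm_sub_tendsto_zero.2
    have hby0 : Tendsto (fun n => ‖b n - y‖) atTop (𝓝 0) := hiInf0 ▸ hdtend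
    have hsum0 : Tendsto (fun n => ‖a (n + 1) - b n‖ + ‖b n - y‖) atTop (𝓝 0) := by
      simpa using hab0.add hby0
    refine squeeze_zero (fun n => norm_nonneg _) (fun n => ?_) hsum0
    calc ‖a (n + 1) - y‖ = ‖(a (n + 1) - b n) + (b n - y)‖ := by rw [sub_add_sub_cancel]
      _ ≤ ‖a (n + 1) - b n‖ + ‖b n - y‖ := norm_add_le _ _
  exact ⟨y, hy1, hy2, hynn, hatend, hbtend⟩

/-- Alternating projections in ℓ²(ℕ) for an orthonormal system {v₁, v₂} where
v₁ lies in the nonnegative cone, v₂ has coordinates of definitively constant sign, and the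
supports of v₁ and v₂ have finite intersection, converge in norm. -/
theorem alternating_projections_finite_support_intersection_l2
    (v₁ v₂ : lp (fun _ : ℕ => ℝ) 2)
    (hv₁ : ‖v₁‖ = 1) (hv₂ : ‖v₂‖ = 1) (horth : ⟪v₁, v₂⟫ = 0)
    (hpos : ∀ k : ℕ, 0 ≤ v₁ k)
    (hsign : ∃ M : ℕ, (∀ n ≥ M, 0 ≤ v₂ n) ∨ (∀ n ≥ M, v₂ n ≤ 0))
    (hfin : ({k : ℕ | v₁ k ≠ 0} ∩ {k : ℕ | v₂ k ≠ 0}).Finite)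
    (x : lp (fun _ : ℕ => ℝ) 2)
    (a b : ℕ → lp (fun _ : ℕ => ℝ) 2)
    (hb0 : b 0 = x)
    (ha : ∀ n : ℕ, a (n + 1) = b n - ⟪b n, v₁⟫ • v₁ - ⟪b n, v₂⟫ • v₂)
    (hb : ∀ (n : ℕ) (k : ℕ), (b (n + 1)) k = max ((a (n + 1)) k) 0) :
    ∃ y : lp (fun _ : ℕ => ℝ) 2,
      ⟪y, v₁⟫ = 0 ∧ ⟪y, v₂⟫ = 0 ∧ (∀ k : ℕ, 0 ≤ y k) ∧
      Tendsto a atTop (nhds y) ∧ Tendsto b atTop (nhds y) := by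
  obtain ⟨M, hM | hM⟩ := hsign
  · exact key v₁ v₂ hv₁ hv₂ horth hpos M hM hfin a b ha hb
  · have hneg : ∀ k : ℕ, (-v₂ : lp (fun _ : ℕ => ℝ) 2) k = -(v₂ k) := by
      intro k
      rw [lp.coeFn_neg]
      rfl
    have hv₂' : ‖(-v₂ : lp (fun _ : ℕ => ℝ) 2)‖ = 1 := by rw [norm_neg]; exact hv₂
    have horth' : ⟪v₁, -v₂⟫ = 0 := by rw [inner_neg_right, horth, neg_zero]
    have hM' : ∀ n ≥ M, 0 ≤ (-v₂ : lp (fun _ : ℕ => ℝ) 2) n := by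
      intro n hn
      rw [hneg]
      linarith [hM n hn]
    have hfin' : ({k : ℕ | v₁ k ≠ 0} ∩ {k : ℕ | (-v₂ : lp (fun _ : ℕ => ℝ) 2) k ≠ 0}).Finite := by
      refine hfin.subset ?_
      intro k hk
      refine ⟨hk.1, ?_⟩
      have := hk.2
      simp only [Set.mem_setOf_eq, hneg, neg_ne_zero] at this ⊢
      exact this
    have ha' : ∀ n : ℕ, a (n + 1) = b n - ⟪b n, v₁⟫ • v₁ - ⟪b n, -v₂⟫ • (-v₂) := by
      intro n
      rw [ha n]
      congr 1
      rw [inner_neg_right, neg_smul, smul_neg, neg_neg]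
    obtain ⟨y, hy1, hy2, hynn, hta, htb⟩ :=
      key v₁ (-v₂) hv₁ hv₂' horth' hpos M hM' hfin' a b ha' hb
    refine ⟨y, hy1, ?_, hynn, hta, htb⟩
    rw [inner_neg_right, neg_eq_zero] at hy2
    exact hy2
end
end

section
/- Let X be a Hilbert lattice and let (xⁿ) be a norm-bounded sequence in X that is decreasing with respect to the lattice order, i.e. xⁿ⁺¹ ≤ xⁿ for every n. Then (xⁿ) converges in norm. -/
open Filter

private lemma inner_nonneg_of_nonneg
    {X : Type*} [NormedAddCommGroup X] [Lattice X] [IsOrderedAddMonoid X]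
    [HasSolidNorm X] [InnerProductSpace ℝ X]
    {u v : X} (hu : 0 ≤ u) (hv : 0 ≤ v) : 0 ≤ (inner ℝ u v : ℝ) := by
  have habs : |u - v| ≤ |u + v| := by
    rw [abs_of_nonneg (by positivity : (0:X) ≤ u + v)]
    calc |u - v| ≤ |u| + |-v| := by rw [sub_eq_add_neg]; exact abs_add_le u (-v)
    _ = u + v := by rw [abs_neg, abs_of_nonneg hu, abs_of_nonneg hv]
  have hn : ‖u - v‖ ≤ ‖u + v‖ := norm_le_norm_of_abs_le_abs habs
  have h1 := norm_sub_sq_real u v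
  have h2 := norm_add_sq_real u v
  nlinarith [norm_nonneg (u - v), norm_nonneg (u + v)]

/-- In a Hilbert lattice, a norm-bounded decreasing sequence converges in norm. -/
theorem hilbert_lattice_decreasing_bounded_converges
    {X : Type*} [NormedAddCommGroup X] [Lattice X] [IsOrderedAddMonoid X]
    [HasSolidNorm X] [InnerProductSpace ℝ X] [CompleteSpace X]
    [PosSMulStrictMono ℝ X] [PosSMulReflectLT ℝ X]
    (x : ℕ → X)
    (hbd : ∃ C : ℝ, ∀ n : ℕ, ‖x n‖ ≤ C)
    (hdec : ∀ n : ℕ, x (n + 1) ≤ x n) :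
    ∃ y : X, Tendsto x atTop (nhds y) := by
  obtain ⟨C, hC⟩ := hbd
  -- the increasing nonnegative sequence y n = x 0 - x n
  set y : ℕ → X := fun n => x 0 - x n with hy
  have hxmono : ∀ {n m : ℕ}, n ≤ m → x m ≤ x n := fun {n m} h =>
    antitone_nat_of_succ_le hdec h
  have hymono : ∀ {n m : ℕ}, n ≤ m → y n ≤ y m := fun {n m} h =>
    sub_le_sub_left (hxmono h) _
  have hypos : ∀ n, 0 ≤ y n := fun n => sub_nonneg.mpr (hxmono (Nat.zero_le n))
  -- a n = ‖y n‖², monotone, bounded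
  set a : ℕ → ℝ := fun n => ‖y n‖ ^ 2 with ha
  have hkey : ∀ {n m : ℕ}, n ≤ m → a n ≤ (inner ℝ (y n) (y m) : ℝ) := by
    intro n m h
    have h1 : (0:ℝ) ≤ inner ℝ (y n) (y m - y n) :=
      inner_nonneg_of_nonneg (hypos n) (sub_nonneg.mpr (hymono h))
    rw [inner_sub_right] at h1
    have := real_inner_self_eq_norm_sq (y n)
    simp only [ha]
    linarith
  have hamono : Monotone a := by
    intro n m h
    have h1 := hkey h
    have h2 := real_inner_le_norm (y n) (y m)
    have h3 : ‖y n‖ ^ 2 ≤ ‖y n‖ * ‖y m‖ := le_trans h1 h2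
    show ‖y n‖ ^ 2 ≤ ‖y m‖ ^ 2
    nlinarith [norm_nonneg (y n), norm_nonneg (y m), sq_nonneg (‖y n‖ - ‖y m‖)]
  have habd : ∀ n, a n ≤ (‖x 0‖ + C) ^ 2 := by
    intro n
    have : ‖y n‖ ≤ ‖x 0‖ + C := (norm_sub_le _ _).trans (by linarith [hC n])
    exact pow_le_pow_left₀ (norm_nonneg _) this 2
  -- a converges to its sup L
  have hbdd : BddAbove (Set.range a) := ⟨(‖x 0‖ + C) ^ 2, by rintro r ⟨n, rfl⟩; exact habd n⟩
  set L : ℝ := ⨆ n, a n with hL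
  have haL : Tendsto a atTop (nhds L) := tendsto_atTop_ciSup hamono hbdd
  have haleL : ∀ n, a n ≤ L := fun n => le_ciSup hbdd n
  -- y is Cauchy
  have hdist : ∀ N n m : ℕ, N ≤ n → N ≤ m → dist (y n) (y m) ≤ Real.sqrt (L - a N) := by
    have key : ∀ n m : ℕ, n ≤ m → dist (y n) (y m) ^ 2 ≤ a m - a n := by
      intro n m h
      rw [dist_eq_norm]
      have := norm_sub_sq_real (y n) (y m)
      have h1 : ‖y n‖ ^ 2 ≤ (inner ℝ (y n) (y m) : ℝ) := hkey h
      calc ‖y n - y m‖ ^ 2 = ‖y n‖^2 - 2 * (inner ℝ (y n) (y m) : ℝ) + ‖y m‖^2 := this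
        _ ≤ ‖y n‖^2 - 2 * ‖y n‖^2 + ‖y m‖^2 := by linarith
        _ = a m - a n := by simp only [ha]; ring
    intro N n m hn hm
    have main : ∀ n m : ℕ, N ≤ n → n ≤ m → dist (y n) (y m) ≤ Real.sqrt (L - a N) := by
      intro n m hn h
      have h2 : dist (y n) (y m) ^ 2 ≤ L - a N := by
        have := key n m h
        have := haleL m
        have := hamono hn
        linarith
      calc dist (y n) (y m) = Real.sqrt (dist (y n) (y m) ^ 2) :=
            (Real.sqrt_sq dist_nonneg).symm
        _ ≤ Real.sqrt (L - a N) := Real.sqrt_le_sqrt h2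
    rcases le_total n m with h | h
    · exact main n m hn h
    · rw [dist_comm]; exact main m n hm h
  have hcauchy : CauchySeq y := by
    apply cauchySeq_of_le_tendsto_0 (fun N => Real.sqrt (L - a N)) (fun n m N hn hm => hdist N n m hn hm)
    have : Tendsto (fun N => L - a N) atTop (nhds 0) := by
      have h0 : Tendsto (fun N => L - a N) atTop (nhds (L - L)) := tendsto_const_nhds.sub haL
      simpa using h0
    simpa [Function.comp_def] using (Real.continuous_sqrt.continuousAt.tendsto.comp this)
  obtain ⟨z, hz⟩ := cauchySeq_tendsto_of_complete hcauchy
  refine ⟨x 0 - z, ?_⟩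
  have : Tendsto (fun n => x 0 - y n) atTop (nhds (x 0 - z)) := tendsto_const_nhds.sub hz
  simpa [hy] using this
end

section
/- Let X be a Hilbert lattice and x ∈ X. Then the positive part x⁺ := x ⊔ 0 is the metric projection of x onto the lattice cone X⁺: one has 0 ≤ x⁺, and ‖x − x⁺‖ ≤ ‖x − b‖ for every b ∈ X with 0 ≤ b. -/
/-- The former Mathlib class `OrderedSMul` (removed), with its original fields. -/
class OrderedSMul (R M : Type*) [Semiring R] [PartialOrder R] [AddCommMonoid M] [PartialOrder M]
    [SMulWithZero R M] : Prop where
  smul_lt_smul_of_pos : ∀ {a b : M} {c : R}, a < b → 0 < c → c • a < c • b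
  lt_of_smul_lt_smul_of_pos : ∀ {a b : M} {c : R}, c • a < c • b → 0 < c → a < b

/-- In a Hilbert lattice, the positive part x⁺ = x ⊔ 0 is the metric projection
of x onto the lattice cone. -/
theorem hilbert_lattice_posPart_is_projection
    {X : Type*} [NormedAddCommGroup X] [Lattice X] [IsOrderedAddMonoid X] [HasSolidNorm X] [InnerProductSpace ℝ X] [CompleteSpace X]
    [OrderedSMul ℝ X]
    (x : X) :
    0 ≤ x ⊔ 0 ∧ ∀ b : X, 0 ≤ b → ‖x - (x ⊔ 0)‖ ≤ ‖x - b‖ := by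
  refine ⟨le_sup_right, fun b hb => ?_⟩
  have h : x ⊓ 0 + x ⊔ 0 = x := by simpa using inf_add_sup x 0
  have h1 : x - (x ⊔ 0) = x ⊓ 0 := (eq_sub_of_add_eq h).symm
  rw [h1]
  have h2 : |x ⊓ 0| ≤ |x - b| := by
    rw [abs_of_nonpos inf_le_right, abs_sub_comm]
    calc -(x ⊓ 0) = (-x) ⊔ 0 := by rw [neg_inf, neg_zero]
    _ ≤ (b - x) ⊔ 0 := sup_le_sup_right (by simpa using hb) 0
    _ ≤ |b - x| := sup_le (le_abs_self _) (abs_nonneg _)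
  exact HasSolidNorm.solid h2
end

section
/- Let X be a real Hilbert space and A, B ⊆ X nonempty closed convex sets with A ∩ B ≠ ∅. Let b⁰ ∈ X and let (aⁿ), (bⁿ) be alternating projection sequences: for every n ≥ 0, aⁿ⁺¹ ∈ A satisfies ‖bⁿ − aⁿ⁺¹‖ ≤ ‖bⁿ − z‖ for all z ∈ A, and bⁿ⁺¹ ∈ B satisfies ‖aⁿ⁺¹ − bⁿ⁺¹‖ ≤ ‖aⁿ⁺¹ − z‖ for all z ∈ B. Then there exists x ∈ A ∩ B such that both (aⁿ) and (bⁿ) converge weakly to x, i.e. ⟨aⁿ, w⟩ → ⟨x, w⟩ and ⟨bⁿ, w⟩ → ⟨x, w⟩ for every w ∈ X. -/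
open scoped RealInnerProductSpace
open Filter

section Aux

variable {X : Type*} [NormedAddCommGroup X] [InnerProductSpace ℝ X]

/-- Minimizing the distance over a convex set yields the variational inequality. -/
lemma min_inner_le_zero' {K : Set X} (hK : Convex ℝ K) {x y : X} (hy : y ∈ K)
    (hmin : ∀ z ∈ K, ‖x - y‖ ≤ ‖x - z‖) : ∀ z ∈ K, ⟪x - y, z - y⟫ ≤ 0 := by
  have h : ‖x - y‖ = ⨅ w : K, ‖x - w‖ := by
    haveI : Nonempty K := ⟨⟨y, hy⟩⟩
    refine le_antisymm (le_ciInf fun w => hmin w w.2) ?_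
    exact ciInf_le ⟨0, Set.forall_mem_range.2 fun _ => norm_nonneg _⟩ (⟨y, hy⟩ : K)
  exact (norm_eq_iInf_iff_real_inner_le_zero hK hy).1 h

/-- Strong Pythagorean-type inequality for minimizers over convex sets. -/
lemma min_sq_le' {K : Set X} (hK : Convex ℝ K) {x y : X} (hy : y ∈ K)
    (hmin : ∀ z ∈ K, ‖x - y‖ ≤ ‖x - z‖) :
    ∀ z ∈ K, ‖y - z‖ ^ 2 + ‖x - y‖ ^ 2 ≤ ‖x - z‖ ^ 2 := by
  intro z hz
  have h := min_inner_le_zero' hK hy hmin z hz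
  have hd : x - z = (x - y) + (y - z) := by abel
  have hin : ⟪x - y, y - z⟫ = - ⟪x - y, z - y⟫ := by
    rw [← inner_neg_right, neg_sub]
  rw [hd, norm_add_sq_real]
  nlinarith [h, hin]

/-- Along any ultrafilter, a bounded sequence in a complete real inner product space has a
weak cluster point. -/
lemma ultrafilter_weak_cluster [CompleteSpace X] (u : ℕ → X) (M : ℝ) (hM : ∀ n, ‖u n‖ ≤ M)
    (U : Ultrafilter ℕ) :
    ∃ x : X, ∀ w : X, Tendsto (fun n => ⟪u n, w⟫) (U : Filter ℕ) (nhds ⟪x, w⟫) := by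
  have key : ∀ w : X, ∃ L : ℝ, |L| ≤ M * ‖w‖ ∧
      Tendsto (fun n => ⟪u n, w⟫) (U : Filter ℕ) (nhds L) := by
    intro w
    have hmem : ∀ n, ⟪u n, w⟫ ∈ Set.Icc (-(M * ‖w‖)) (M * ‖w‖) := by
      intro n
      have h1 := abs_real_inner_le_norm (u n) w
      have h2 : ‖u n‖ * ‖w‖ ≤ M * ‖w‖ :=
        mul_le_mul_of_nonneg_right (hM n) (norm_nonneg _)
      have := abs_le.1 (h1.trans h2)
      exact ⟨this.1, this.2⟩
    obtain ⟨L, hLmem, hle⟩ := (isCompact_Icc (a := -(M * ‖w‖)) (b := M * ‖w‖)).ultrafilter_le_nhds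
      (U.map fun n => ⟪u n, w⟫) (by
        rw [Ultrafilter.coe_map, le_principal_iff, mem_map]
        exact Filter.univ_mem' hmem)
    refine ⟨L, abs_le.2 ⟨hLmem.1, hLmem.2⟩, ?_⟩
    rwa [Ultrafilter.coe_map] at hle
  choose L hLb hLt using key
  have hadd : ∀ w w', L (w + w') = L w + L w' := by
    intro w w'
    refine tendsto_nhds_unique (hLt (w + w')) ?_
    have := (hLt w).add (hLt w')
    simpa [inner_add_right] using this
  have hsmul : ∀ (c : ℝ) w, L (c • w) = c * L w := by
    intro c w
    refine tendsto_nhds_unique (hLt (c • w)) ?_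
    have := (hLt w).const_mul c
    simpa [inner_smul_right] using this
  let f : X →ₗ[ℝ] ℝ :=
    { toFun := L
      map_add' := hadd
      map_smul' := hsmul }
  let F : X →L[ℝ] ℝ := LinearMap.mkContinuous f M (fun w => by
    rw [Real.norm_eq_abs]; exact hLb w)
  refine ⟨(InnerProductSpace.toDual ℝ X).symm F, fun w => ?_⟩
  have hx : ⟪(InnerProductSpace.toDual ℝ X).symm F, w⟫ = F w :=
    InnerProductSpace.toDual_symm_apply
  rw [hx]
  exact hLt w

/-- The weak cluster point of a sequence in a closed convex set belongs to the set. -/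
lemma mem_of_weak_cluster [CompleteSpace X] {K : Set X} (hKne : K.Nonempty)
    (hKc : IsClosed K) (hKconv : Convex ℝ K) (l : Filter ℕ) [l.NeBot] (u : ℕ → X)
    (hu : ∀ᶠ n in l, u n ∈ K) {x : X}
    (hx : ∀ w, Tendsto (fun n => ⟪u n, w⟫) l (nhds ⟪x, w⟫)) : x ∈ K := by
  obtain ⟨p, hpK, hp⟩ := exists_norm_eq_iInf_of_complete_convex hKne hKc.isComplete hKconv x
  have hvar := (norm_eq_iInf_iff_real_inner_le_zero hKconv hpK).1 hp
  have eq1 : ∀ v : X, ⟪x - p, v - p⟫ = ⟪v, x - p⟫ - ⟪x - p, p⟫ := by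
    intro v
    rw [inner_sub_right, real_inner_comm (x - p) v]
  have h1 : Tendsto (fun n => ⟪x - p, u n - p⟫) l (nhds ⟪x - p, x - p⟫) := by
    rw [show ⟪x - p, x - p⟫ = ⟪x, x - p⟫ - ⟪x - p, p⟫ from eq1 x]
    simp only [eq1]
    exact (hx (x - p)).sub tendsto_const_nhds
  have h2 : ⟪x - p, x - p⟫ ≤ 0 :=
    le_of_tendsto h1 (hu.mono fun n hn => hvar _ hn)
  have h3 : x - p = 0 := real_inner_self_nonpos.1 h2
  have : x = p := by rwa [sub_eq_zero] at h3
  rwa [this]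

end Aux

/-- Bregman's theorem: alternating projection sequences between two nonempty
closed convex sets with nonempty intersection in a real Hilbert space converge weakly to a
point of the intersection. -/
theorem alternating_projections_weak_convergence
    {X : Type*} [NormedAddCommGroup X] [InnerProductSpace ℝ X] [CompleteSpace X]
    (A B : Set X)
    (hA : A.Nonempty) (hB : B.Nonempty)
    (hAclosed : IsClosed A) (hBclosed : IsClosed B)
    (hAconv : Convex ℝ A) (hBconv : Convex ℝ B)
    (hAB : (A ∩ B).Nonempty)
    (a b : ℕ → X)
    (haA : ∀ n : ℕ, a (n + 1) ∈ A)
    (hbB : ∀ n : ℕ, b (n + 1) ∈ B)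
    (haproj : ∀ n : ℕ, ∀ z ∈ A, ‖b n - a (n + 1)‖ ≤ ‖b n - z‖)
    (hbproj : ∀ n : ℕ, ∀ z ∈ B, ‖a (n + 1) - b (n + 1)‖ ≤ ‖a (n + 1) - z‖) :
    ∃ x ∈ A ∩ B,
      (∀ w : X, Tendsto (fun n => ⟪a n, w⟫) atTop (nhds ⟪x, w⟫)) ∧
      (∀ w : X, Tendsto (fun n => ⟪b n, w⟫) atTop (nhds ⟪x, w⟫)) := by
  obtain ⟨y₀, hy₀A, hy₀B⟩ := hAB
  -- Pythagorean inequalities for the two projection steps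
  have key1 : ∀ n : ℕ, ∀ y ∈ A,
      ‖a (n + 1) - y‖ ^ 2 + ‖b n - a (n + 1)‖ ^ 2 ≤ ‖b n - y‖ ^ 2 :=
    fun n y hy => min_sq_le' hAconv (haA n) (haproj n) y hy
  have key2 : ∀ n : ℕ, ∀ y ∈ B,
      ‖b (n + 1) - y‖ ^ 2 + ‖a (n + 1) - b (n + 1)‖ ^ 2 ≤ ‖a (n + 1) - y‖ ^ 2 :=
    fun n y hy => min_sq_le' hBconv (hbB n) (hbproj n) y hy
  -- the squared distances to any point of A ∩ B are nonincreasing, hence converge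
  have hchain : ∀ y ∈ A ∩ B, ∀ n : ℕ,
      ‖b (n + 1) - y‖ ^ 2 ≤ ‖a (n + 1) - y‖ ^ 2 ∧ ‖a (n + 1) - y‖ ^ 2 ≤ ‖b n - y‖ ^ 2 := by
    intro y hy n
    have h1 := key1 n y hy.1
    have h2 := key2 n y hy.2
    constructor
    · nlinarith [sq_nonneg ‖a (n + 1) - b (n + 1)‖]
    · nlinarith [sq_nonneg ‖b n - a (n + 1)‖]
  have hconv : ∀ y ∈ A ∩ B, ∃ ℓ : ℝ,
      Tendsto (fun n => ‖b n - y‖ ^ 2) atTop (nhds ℓ) := by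
    intro y hy
    refine ⟨_, tendsto_atTop_ciInf (antitone_nat_of_succ_le fun n => ?_) ⟨0, ?_⟩⟩
    · exact (hchain y hy n).1.trans (hchain y hy n).2
    · rintro _ ⟨n, rfl⟩; positivity
  -- the gaps tend to zero
  obtain ⟨ℓ₀, hℓ₀⟩ := hconv y₀ ⟨hy₀A, hy₀B⟩
  have hdiff : Tendsto (fun n => ‖b n - y₀‖ ^ 2 - ‖b (n + 1) - y₀‖ ^ 2) atTop (nhds 0) := by
    have h2 : Tendsto (fun n => ‖b (n + 1) - y₀‖ ^ 2) atTop (nhds ℓ₀) :=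
      hℓ₀.comp (tendsto_add_atTop_nat 1)
    simpa using hℓ₀.sub h2
  have hgapsq : Tendsto (fun n => ‖b n - a (n + 1)‖ ^ 2 + ‖a (n + 1) - b (n + 1)‖ ^ 2)
      atTop (nhds 0) := by
    refine squeeze_zero (fun n => by positivity) (fun n => ?_) hdiff
    have h1 := key1 n y₀ hy₀A
    have h2 := key2 n y₀ hy₀B
    linarith
  have hg1sq : Tendsto (fun n => ‖b n - a (n + 1)‖ ^ 2) atTop (nhds 0) :=
    squeeze_zero (fun n => by positivity)
      (fun n => by nlinarith [sq_nonneg ‖a (n + 1) - b (n + 1)‖]) hgapsq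
  have hg1 : Tendsto (fun n => ‖b n - a (n + 1)‖) atTop (nhds 0) := by
    have h := (Real.continuous_sqrt.tendsto' 0 0 (by simp)).comp hg1sq
    have heq : ∀ n : ℕ, Real.sqrt (‖b n - a (n + 1)‖ ^ 2) = ‖b n - a (n + 1)‖ :=
      fun n => Real.sqrt_sq (norm_nonneg _)
    simpa only [Function.comp_def, heq] using h
  -- boundedness of (b n)
  have hbnorm_anti : ∀ n : ℕ, ‖b n - y₀‖ ^ 2 ≤ ‖b 0 - y₀‖ ^ 2 := by
    intro n
    induction n with
    | zero => exact le_refl _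
    | succ m ih =>
        exact ((hchain y₀ ⟨hy₀A, hy₀B⟩ m).1.trans (hchain y₀ ⟨hy₀A, hy₀B⟩ m).2).trans ih
  set M : ℝ := ‖b 0 - y₀‖ + ‖y₀‖ with hMdef
  have hMb : ∀ n, ‖b n‖ ≤ M := by
    intro n
    have h1 : ‖b n - y₀‖ ≤ ‖b 0 - y₀‖ := by
      have := hbnorm_anti n
      nlinarith [norm_nonneg (b n - y₀), norm_nonneg (b 0 - y₀)]
    calc ‖b n‖ = ‖(b n - y₀) + y₀‖ := by rw [sub_add_cancel]
      _ ≤ ‖b n - y₀‖ + ‖y₀‖ := norm_add_le _ _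
      _ ≤ M := by rw [hMdef]; linarith
  -- if b converges weakly to x' along a filter ≤ atTop, so does (a (· + 1))
  have hshift : ∀ (l : Filter ℕ), l ≤ atTop → ∀ x' : X,
      (∀ w, Tendsto (fun n => ⟪b n, w⟫) l (nhds ⟪x', w⟫)) →
      ∀ w, Tendsto (fun n => ⟪a (n + 1), w⟫) l (nhds ⟪x', w⟫) := by
    intro l hl x' hb' w
    have h0 : Tendsto (fun n => ⟪a (n + 1) - b n, w⟫) atTop (nhds 0) := by
      refine squeeze_zero_norm (fun n => ?_) (by simpa using hg1.mul_const ‖w‖)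
      calc ‖⟪a (n + 1) - b n, w⟫‖ ≤ ‖a (n + 1) - b n‖ * ‖w‖ := by
            simpa [Real.norm_eq_abs] using abs_real_inner_le_norm (a (n + 1) - b n) w
        _ = ‖b n - a (n + 1)‖ * ‖w‖ := by rw [norm_sub_rev]
    have h := (hb' w).add (h0.mono_left hl)
    have heq : ∀ n : ℕ, ⟪b n, w⟫ + ⟪a (n + 1) - b n, w⟫ = ⟪a (n + 1), w⟫ := by
      intro n
      rw [← inner_add_left]
      congr 1
      abel
    simpa only [heq, add_zero] using h
  -- every weak cluster point along an ultrafilter extending atTop lies in A ∩ B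
  have hclusterAB : ∀ (U : Ultrafilter ℕ), (U : Filter ℕ) ≤ atTop → ∀ x' : X,
      (∀ w, Tendsto (fun n => ⟪b n, w⟫) (U : Filter ℕ) (nhds ⟪x', w⟫)) → x' ∈ A ∩ B := by
    intro U hU x' hx'
    constructor
    · exact mem_of_weak_cluster hA hAclosed hAconv (U : Filter ℕ) (fun n => a (n + 1))
        (Eventually.of_forall haA) (hshift _ hU x' hx')
    · refine mem_of_weak_cluster hB hBclosed hBconv (U : Filter ℕ) b ?_ hx'
      refine ((eventually_ge_atTop 1).filter_mono hU).mono fun n hn => ?_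
      obtain ⟨m, rfl⟩ := Nat.exists_eq_add_of_le hn
      rw [add_comm]
      exact hbB m
  -- the main weak cluster point
  haveI : (atTop : Filter ℕ).NeBot := atTop_neBot
  set U₀ : Ultrafilter ℕ := Ultrafilter.of atTop with hU₀def
  have hU₀ : (U₀ : Filter ℕ) ≤ atTop := Ultrafilter.of_le _
  obtain ⟨x, hx⟩ := ultrafilter_weak_cluster b M hMb U₀
  have hxAB : x ∈ A ∩ B := hclusterAB U₀ hU₀ x hx
  -- whole-sequence weak convergence of b to x
  have hbw : ∀ w : X, Tendsto (fun n => ⟪b n, w⟫) atTop (nhds ⟪x, w⟫) := by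
    intro w
    by_contra hcon
    rw [Metric.tendsto_atTop] at hcon
    push_neg at hcon
    obtain ⟨ε, hε, hfreq⟩ := hcon
    set S : Set ℕ := {n | ε ≤ dist ⟪b n, w⟫ ⟪x, w⟫} with hSdef
    have hfreq' : ∃ᶠ n in atTop, n ∈ S := by
      rw [frequently_atTop]
      intro N
      obtain ⟨n, hn, hd⟩ := hfreq N
      exact ⟨n, hn, hd⟩
    haveI hne : (atTop ⊓ (𝓟 S : Filter ℕ)).NeBot := frequently_mem_iff_neBot.1 hfreq'
    set U' : Ultrafilter ℕ := Ultrafilter.of (atTop ⊓ 𝓟 S) with hU'def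
    have hU'le : (U' : Filter ℕ) ≤ atTop ⊓ 𝓟 S := Ultrafilter.of_le _
    have hU' : (U' : Filter ℕ) ≤ atTop := hU'le.trans inf_le_left
    have hS : S ∈ (U' : Filter ℕ) := le_principal_iff.1 (hU'le.trans inf_le_right)
    obtain ⟨x', hx'⟩ := ultrafilter_weak_cluster b M hMb U'
    have hx'AB : x' ∈ A ∩ B := hclusterAB U' hU' x' hx'
    -- Opial argument: x = x'
    obtain ⟨ℓ₁, h₁⟩ := hconv x hxAB
    obtain ⟨ℓ₂, h₂⟩ := hconv x' hx'AB
    have hterm : Tendsto (fun n => ⟪b n, x - x'⟫) atTop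
        (nhds ((ℓ₂ - ℓ₁ + (‖x‖ ^ 2 - ‖x'‖ ^ 2)) / 2)) := by
      have H : Tendsto
          (fun n => (‖b n - x'‖ ^ 2 - ‖b n - x‖ ^ 2 + (‖x‖ ^ 2 - ‖x'‖ ^ 2)) / 2) atTop
          (nhds ((ℓ₂ - ℓ₁ + (‖x‖ ^ 2 - ‖x'‖ ^ 2)) / 2)) :=
        (((h₂.sub h₁).add_const _).div_const 2)
      have heq : ∀ n : ℕ,
          (‖b n - x'‖ ^ 2 - ‖b n - x‖ ^ 2 + (‖x‖ ^ 2 - ‖x'‖ ^ 2)) / 2 = ⟪b n, x - x'⟫ := by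
        intro n
        rw [inner_sub_right, norm_sub_sq_real, norm_sub_sq_real]
        ring
      simpa only [heq] using H
    have e1 : ⟪x, x - x'⟫ = (ℓ₂ - ℓ₁ + (‖x‖ ^ 2 - ‖x'‖ ^ 2)) / 2 :=
      tendsto_nhds_unique (hx (x - x')) (hterm.mono_left hU₀)
    have e2 : ⟪x', x - x'⟫ = (ℓ₂ - ℓ₁ + (‖x‖ ^ 2 - ‖x'‖ ^ 2)) / 2 :=
      tendsto_nhds_unique (hx' (x - x')) (hterm.mono_left hU')
    have hxx' : x = x' := by
      have h0 : ⟪x - x', x - x'⟫ = 0 := by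
        rw [inner_sub_left, e1, e2, sub_self]
      have := real_inner_self_nonpos.1 (le_of_eq h0)
      rwa [sub_eq_zero] at this
    -- contradiction with the frequent ε-separation
    have hdist : Tendsto (fun n => dist ⟪b n, w⟫ ⟪x, w⟫) (U' : Filter ℕ) (nhds 0) := by
      have := (hx' w).dist (tendsto_const_nhds (x := ⟪x, w⟫) (f := (U' : Filter ℕ)))
      rw [← hxx'] at this
      simpa using this
    have hεle : ε ≤ 0 :=
      ge_of_tendsto hdist (eventually_of_mem hS fun n hn => hn)
    linarith
  refine ⟨x, hxAB, ?_, hbw⟩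
  intro w
  have h := hshift atTop le_rfl x hbw w
  exact (tendsto_add_atTop_iff_nat 1).1 h
end

section
/- Let X be a Hilbert lattice and let v₁, …, v_N be an orthonormal system in X such that span{v₁, …, v_N} ∩ X⁺ = {0}, i.e. the only element of the linear span of the vᵢ that lies in the lattice cone is 0. Let x⁰ ∈ X and define the alternating projection sequences by b⁰ := x⁰, aⁿ⁺¹ := bⁿ − Σᵢ₌₁^N ⟨bⁿ, vᵢ⟩vᵢ, and bⁿ⁺¹ := (aⁿ⁺¹)⁺ (lattice positive part). Then there exists y ∈ X with ⟨y, vᵢ⟩ = 0 for all i = 1,…,N and 0 ≤ y, such that both sequences (aⁿ) and (bⁿ) converge in norm to y. -/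
open scoped RealInnerProductSpace
open Filter



set_option linter.unusedSectionVars false

section Aux
variable {X : Type*} [NormedAddCommGroup X] [Lattice X] [HasSolidNorm X]
    [IsOrderedAddMonoid X] [InnerProductSpace ℝ X]
    [PosSMulStrictMono ℝ X] [PosSMulReflectLT ℝ X]

lemma my_norm_le_norm_add {z k : X} (hz : 0 ≤ z) (hk : 0 ≤ k) : ‖z‖ ≤ ‖z + k‖ :=
  HasSolidNorm.solid (by
    rw [abs_of_nonneg hz, abs_of_nonneg (add_nonneg hz hk)]
    exact le_add_of_nonneg_right hk)

-- test posPart API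
example (x : X) : x⁺ - x⁻ = x := posPart_sub_negPart x
example (x : X) : x⁺ = x ⊔ 0 := posPart_def x
example (x : X) : x⁻ = -x ⊔ 0 := negPart_def x
example (x : X) : 0 ≤ x⁻ := negPart_nonneg x
example (x y : X) (h : x ≤ y) : y⁻ ≤ x⁻ := negPart_anti h
example (x : X) : x⁺ + x⁻ = |x| := posPart_add_negPart x

-- norm of negPart is ≤ distance to any nonneg element
lemma my_negPart_norm_le {x k : X} (hk : 0 ≤ k) : ‖x⁻‖ ≤ ‖x - k‖ := by
  have h1 : x⁻ ≤ (x - k)⁻ := negPart_anti (by simpa using hk)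
  have h2 : (x - k)⁻ ≤ |x - k| := by
    rw [← posPart_add_negPart (x - k)]
    exact le_add_of_nonneg_left (posPart_nonneg _)
  have h3 : |x⁻| ≤ |x - k| := by rw [abs_of_nonneg (negPart_nonneg x)]; exact h1.trans h2
  exact HasSolidNorm.solid h3

end Aux

section Aux2
variable {X : Type*} [NormedAddCommGroup X] [Lattice X] [HasSolidNorm X]
    [IsOrderedAddMonoid X] [InnerProductSpace ℝ X]
    [PosSMulStrictMono ℝ X] [PosSMulReflectLT ℝ X]

lemma my_inner_nonneg {z k : X} (hz : 0 ≤ z) (hk : 0 ≤ k) : 0 ≤ ⟪z, k⟫ := by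
  by_contra h
  push_neg at h
  have hk0 : k ≠ 0 := by rintro rfl; simp at h
  have hknorm : (0:ℝ) < ‖k‖ := norm_pos_iff.mpr hk0
  set c : ℝ := ⟪z, k⟫ with hc
  set t : ℝ := -c / ‖k‖ ^ 2 with ht
  have htpos : 0 < t := div_pos (neg_pos.2 h) (by positivity)
  have h1 : ‖z‖ ≤ ‖z + t • k‖ := my_norm_le_norm_add hz (smul_nonneg htpos.le hk)
  have h2 : ‖z + t • k‖ ^ 2 = ‖z‖ ^ 2 + 2 * (t * c) + t ^ 2 * ‖k‖ ^ 2 := by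
    rw [norm_add_sq_real, real_inner_smul_right, norm_smul, Real.norm_eq_abs, mul_pow, sq_abs]
  have h3 : ‖z‖ ^ 2 ≤ ‖z + t • k‖ ^ 2 := by
    have := norm_nonneg z
    nlinarith
  rw [h2] at h3
  have h4 : 0 ≤ 2 * (t * c) + t ^ 2 * ‖k‖ ^ 2 := by linarith
  have hcne : c ≠ 0 := ne_of_lt h
  have h5 : 2 * (t * c) + t ^ 2 * ‖k‖ ^ 2 = -(c ^ 2 / ‖k‖ ^ 2) := by
    rw [ht]; field_simp; ring
  have h6 : 0 < c ^ 2 / ‖k‖ ^ 2 := by positivity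
  linarith [h4, h5.symm ▸ h4]

lemma my_inner_posPart_negPart (x : X) : ⟪x⁺, x⁻⟫ = 0 := by
  have hge : 0 ≤ ⟪x⁺, x⁻⟫ := my_inner_nonneg (posPart_nonneg x) (negPart_nonneg x)
  set I : ℝ := ⟪x⁺, x⁻⟫ with hI
  have key : ∀ ε : ℝ, 0 < ε → ε ≤ 1 → I ≤ ε * ‖x⁺‖ ^ 2 / 2 := by
    intro ε hε hε1
    have hk : (0:X) ≤ (1 - ε) • x⁺ := smul_nonneg (by linarith) (posPart_nonneg x)
    have hxk : x - (1 - ε) • x⁺ = ε • x⁺ - x⁻ := by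
      have step : x - (1 - ε) • x⁺ = (x⁺ - x⁻) - (1 - ε) • x⁺ := by
        rw [posPart_sub_negPart]
      rw [step, sub_smul, one_smul]; abel
    have h1 : ‖x⁻‖ ≤ ‖ε • x⁺ - x⁻‖ := by
      have := my_negPart_norm_le (x := x) hk
      rwa [hxk] at this
    have h2 : ‖ε • x⁺ - x⁻‖ ^ 2 = ε ^ 2 * ‖x⁺‖ ^ 2 - 2 * (ε * I) + ‖x⁻‖ ^ 2 := by
      rw [norm_sub_sq_real, real_inner_smul_left, norm_smul, Real.norm_eq_abs, mul_pow, sq_abs]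
    have h3 : ‖x⁻‖ ^ 2 ≤ ‖ε • x⁺ - x⁻‖ ^ 2 := by
      have := norm_nonneg (x⁻)
      nlinarith
    nlinarith
  have hle : I ≤ 0 := by
    by_contra h
    push_neg at h
    rcases eq_or_ne (‖x⁺‖) 0 with h0 | h0
    · have := key 1 one_pos le_rfl
      rw [h0] at this
      nlinarith
    · have hp : (0:ℝ) < ‖x⁺‖ ^ 2 := by positivity
      set ε : ℝ := min 1 (I / ‖x⁺‖ ^ 2) with hε
      have hε0 : 0 < ε := lt_min one_pos (by positivity)
      have hε1 : ε ≤ 1 := min_le_left _ _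
      have h2 := key ε hε0 hε1
      have h3 : ε * ‖x⁺‖ ^ 2 ≤ I := by
        calc ε * ‖x⁺‖ ^ 2 ≤ (I / ‖x⁺‖ ^ 2) * ‖x⁺‖ ^ 2 :=
              mul_le_mul_of_nonneg_right (min_le_right _ _) hp.le
          _ = I := by field_simp
      nlinarith
  linarith

lemma my_norm_sq_decomp (x : X) : ‖x‖ ^ 2 = ‖x⁺‖ ^ 2 + ‖x⁻‖ ^ 2 := by
  conv_lhs => rw [← posPart_sub_negPart x]
  rw [norm_sub_sq_real, my_inner_posPart_negPart]
  ring

end Aux2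

section Aux3
variable {X : Type*} [NormedAddCommGroup X] [Lattice X] [HasSolidNorm X]
    [IsOrderedAddMonoid X] [InnerProductSpace ℝ X]
    [PosSMulStrictMono ℝ X] [PosSMulReflectLT ℝ X]

lemma my_exists_delta {N : ℕ} (v : Fin N → X)
    (hspan : ∀ x ∈ Submodule.span ℝ (Set.range v), 0 ≤ x → x = 0) :
    ∃ δ : ℝ, 0 < δ ∧ ∀ u ∈ Submodule.span ℝ (Set.range v), ∀ k : X, 0 ≤ k →
      δ * ‖u‖ ≤ ‖u - k‖ := by
  classical
  set K : Set X := {x | 0 ≤ x} with hK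
  have hKne : K.Nonempty := ⟨0, le_refl 0⟩
  have hKcl : IsClosed K := isClosed_nonneg
  set W := Submodule.span ℝ (Set.range v) with hW
  haveI : FiniteDimensional ℝ W := FiniteDimensional.span_of_finite ℝ (Set.finite_range v)
  set f : W → ℝ := fun w => Metric.infDist (w : X) K with hf
  have hfc : Continuous f := (Metric.continuous_infDist_pt K).comp continuous_subtype_val
  have hpos : ∀ w : W, ‖w‖ = 1 → 0 < f w := by
    intro w hw1
    rcases lt_or_eq_of_le (Metric.infDist_nonneg (x := (w : X)) (s := K)) with h | h
    · exact h
    · exfalso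
      have hmem : (w : X) ∈ K := (hKcl.mem_iff_infDist_zero hKne).mpr h.symm
      have : (w : X) = 0 := hspan _ w.2 hmem
      have : ‖w‖ = 0 := by
        rw [show ‖w‖ = ‖(w : X)‖ from rfl, this, norm_zero]
      rw [this] at hw1; norm_num at hw1
  by_cases hS : (Metric.sphere (0 : W) 1).Nonempty
  · obtain ⟨w₀, hw₀S, hmin⟩ :=
      (isCompact_sphere (0 : W) 1).exists_isMinOn hS hfc.continuousOn
    have hw₀ : ‖w₀‖ = 1 := by simpa using hw₀S
    refine ⟨f w₀, hpos w₀ hw₀, ?_⟩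
    intro u hu k hk
    rcases eq_or_ne u 0 with rfl | hu0
    · simp
    · have hun : (0:ℝ) < ‖u‖ := norm_pos_iff.mpr hu0
      set w : W := ⟨u, hu⟩ with hwdef
      have hwne : w ≠ 0 := by
        intro h
        apply hu0
        simpa [hwdef, Subtype.ext_iff] using h
      set w' : W := ‖w‖⁻¹ • w with hw'
      have hw'S : w' ∈ Metric.sphere (0 : W) 1 := by
        simp only [mem_sphere_iff_norm, sub_zero, hw']
        exact norm_smul_inv_norm (𝕜 := ℝ) hwne
      have h1 : f w₀ ≤ f w' := hmin hw'S
      have hkmem : ‖u‖⁻¹ • k ∈ K := smul_nonneg (by positivity) hk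
      have h2 : f w' ≤ dist ((w' : X)) (‖u‖⁻¹ • k) := Metric.infDist_le_dist_of_mem hkmem
      have hww : ‖w‖ = ‖u‖ := rfl
      have h3 : (w' : X) = ‖u‖⁻¹ • u := by
        rw [hw']
        simp [hww, hwdef]
      have h4 : dist ((w' : X)) (‖u‖⁻¹ • k) = ‖u‖⁻¹ * ‖u - k‖ := by
        rw [h3, dist_eq_norm, ← smul_sub, norm_smul, Real.norm_eq_abs,
          abs_of_pos (by positivity)]
      have h5 : f w₀ ≤ ‖u‖⁻¹ * ‖u - k‖ := by
        calc f w₀ ≤ f w' := h1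
          _ ≤ _ := h2.trans_eq h4
      calc f w₀ * ‖u‖ ≤ (‖u‖⁻¹ * ‖u - k‖) * ‖u‖ := by
            exact mul_le_mul_of_nonneg_right h5 hun.le
        _ = ‖u - k‖ := by field_simp
  · refine ⟨1, one_pos, ?_⟩
    intro u hu k hk
    rcases eq_or_ne u 0 with rfl | hu0
    · simp
    · exfalso
      apply hS
      have hwne : (⟨u, hu⟩ : W) ≠ 0 := by
        intro h; apply hu0; simpa [Subtype.ext_iff] using h
      refine ⟨‖(⟨u, hu⟩ : W)‖⁻¹ • ⟨u, hu⟩, ?_⟩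
      simp only [mem_sphere_iff_norm, sub_zero]
      exact norm_smul_inv_norm (𝕜 := ℝ) hwne

end Aux3

/-- Bauschke–Borwein condition span{v₁,…,v_N} ∩ X⁺ = {0}: if the only element
of the span of the orthonormal system lying in the lattice cone is 0, then the alternating
projection sequences converge in norm. -/
theorem alternating_projections_span_meets_cone_trivially
    {X : Type*} [NormedAddCommGroup X] [Lattice X] [HasSolidNorm X]
    [IsOrderedAddMonoid X] [InnerProductSpace ℝ X] [CompleteSpace X]
    [PosSMulStrictMono ℝ X] [PosSMulReflectLT ℝ X]
    (N : ℕ) (v : Fin N → X)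
    (hon : Orthonormal ℝ v)
    (hspan : ∀ x ∈ Submodule.span ℝ (Set.range v), 0 ≤ x → x = 0)
    (x0 : X)
    (a b : ℕ → X)
    (hb0 : b 0 = x0)
    (ha : ∀ n : ℕ, a (n + 1) = b n - ∑ i : Fin N, ⟪b n, v i⟫ • v i)
    (hb : ∀ n : ℕ, b (n + 1) = a (n + 1) ⊔ 0) :
    ∃ y : X,
      (∀ i : Fin N, ⟪y, v i⟫ = 0) ∧ 0 ≤ y ∧
      Tendsto a atTop (nhds y) ∧ Tendsto b atTop (nhds y) := by
  classical
  set Q : X → X := fun x => ∑ i : Fin N, ⟪x, v i⟫ • v i with hQdef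
  have haQ : ∀ n : ℕ, a (n + 1) = b n - Q (b n) := ha
  have hQv : ∀ (x : X) (i : Fin N), ⟪Q x, v i⟫ = ⟪x, v i⟫ := by
    intro x i
    simpa using hon.inner_left_fintype (fun j => ⟪x, v j⟫) i
  have haperp : ∀ (n : ℕ) (i : Fin N), ⟪a (n + 1), v i⟫ = 0 := by
    intro n i
    rw [haQ, inner_sub_left, hQv, sub_self]
  have hperpQ : ∀ w : X, (∀ i, ⟪w, v i⟫ = 0) → ∀ x : X, ⟪w, Q x⟫ = 0 := by
    intro w hw x
    simp [hQdef, inner_sum, real_inner_smul_right, hw]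
  have hbQperp : ∀ (n : ℕ) (i : Fin N), ⟪b n - Q (b n), v i⟫ = 0 := by
    intro n i
    rw [inner_sub_left, hQv, sub_self]
  have hQmem : ∀ x : X, Q x ∈ Submodule.span ℝ (Set.range v) := fun x =>
    Submodule.sum_mem _ fun i _ => Submodule.smul_mem _ _ (Submodule.subset_span ⟨i, rfl⟩)
  set r : ℕ → X := fun n => (a (n + 1))⁻ with hrdef
  have hr0 : ∀ n, 0 ≤ r n := fun n => negPart_nonneg _
  have hbpos : ∀ n, b (n + 1) = (a (n + 1))⁺ := fun n => by rw [hb, posPart_def]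
  have hbr : ∀ n, b (n + 1) = a (n + 1) + r n := by
    intro n
    rw [hbpos, hrdef]
    exact eq_add_of_sub_eq (posPart_sub_negPart _)
  have hpyth : ∀ n, ‖b n‖ ^ 2 = ‖a (n + 1)‖ ^ 2 + ‖Q (b n)‖ ^ 2 := by
    intro n
    have hb' : b n = a (n + 1) + Q (b n) := by rw [haQ]; abel
    have hinner : ⟪a (n + 1), Q (b n)⟫ = 0 := hperpQ _ (haperp n) _
    conv_lhs => rw [hb']
    rw [norm_add_sq_real, hinner]; ring
  have hdecomp : ∀ n, ‖a (n + 1)‖ ^ 2 = ‖b (n + 1)‖ ^ 2 + ‖r n‖ ^ 2 := by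
    intro n
    rw [hbpos, hrdef]
    exact my_norm_sq_decomp _
  set B : ℕ → ℝ := fun n => ‖b n‖ ^ 2 with hBdef
  have hdrop : ∀ n, ‖Q (b n)‖ ^ 2 + ‖r n‖ ^ 2 = B n - B (n + 1) := by
    intro n
    have h1 := hpyth n
    have h2 := hdecomp n
    simp only [hBdef]
    linarith
  have hBanti : Antitone B := antitone_nat_of_succ_le fun n => by
    nlinarith [hdrop n, sq_nonneg ‖Q (b n)‖, sq_nonneg ‖r n‖]
  have hBtend : Tendsto B atTop (nhds (⨅ n, B n)) := by
    refine tendsto_atTop_ciInf hBanti ⟨0, ?_⟩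
    rintro x ⟨n, rfl⟩
    exact sq_nonneg _
  have hdiff0 : Tendsto (fun n => B n - B (n + 1)) atTop (nhds 0) := by
    have h2 : Tendsto (fun n => B (n + 1)) atTop (nhds (⨅ n, B n)) :=
      hBtend.comp (tendsto_add_atTop_nat 1)
    simpa using hBtend.sub h2
  have hQn0 : Tendsto (fun n => ‖Q (b n)‖) atTop (nhds 0) := by
    have hsq : Tendsto (fun n => ‖Q (b n)‖ ^ 2) atTop (nhds 0) :=
      squeeze_zero (fun n => sq_nonneg _)
        (fun n => by nlinarith [hdrop n, sq_nonneg ‖r n‖]) hdiff0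
    have h1 : Tendsto (fun n => Real.sqrt (‖Q (b n)‖ ^ 2)) atTop (nhds (Real.sqrt 0)) :=
      (Real.continuous_sqrt.tendsto 0).comp hsq
    simpa [Real.sqrt_sq (norm_nonneg _)] using h1
  have hrn0 : Tendsto (fun n => ‖r n‖) atTop (nhds 0) := by
    have hsq : Tendsto (fun n => ‖r n‖ ^ 2) atTop (nhds 0) :=
      squeeze_zero (fun n => sq_nonneg _)
        (fun n => by nlinarith [hdrop n, sq_nonneg ‖Q (b n)‖]) hdiff0
    have h1 : Tendsto (fun n => Real.sqrt (‖r n‖ ^ 2)) atTop (nhds (Real.sqrt 0)) :=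
      (Real.continuous_sqrt.tendsto 0).comp hsq
    simpa [Real.sqrt_sq (norm_nonneg _)] using h1
  have htel : ∀ n m, n ≤ m →
      b m - b n = (∑ j ∈ Finset.Ico n m, r j) - ∑ j ∈ Finset.Ico n m, Q (b j) := by
    intro n m h
    induction m, h using Nat.le_induction with
    | base => simp
    | succ m hm ih =>
      rw [Finset.sum_Ico_succ_top hm, Finset.sum_Ico_succ_top hm]
      have hstep : b (m + 1) = b m - Q (b m) + r m := by rw [hbr, haQ]
      have h2 : b (m + 1) - b n = (r m - Q (b m)) + (b m - b n) := by rw [hstep]; abel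
      rw [h2, ih]; abel
  obtain ⟨δ, hδpos, hδ⟩ := my_exists_delta v hspan
  set M : ℝ := 2 * ‖b 0‖ / δ with hM
  have hMnonneg : 0 ≤ M := by positivity
  have hbnorm : ∀ n, ‖b n‖ ≤ ‖b 0‖ := by
    intro n
    have h1 : B n ≤ B 0 := hBanti (Nat.zero_le n)
    simp only [hBdef] at h1
    nlinarith [norm_nonneg (b n), norm_nonneg (b 0)]
  have hSsum : ∀ n m, n ≤ m → ‖∑ j ∈ Finset.Ico n m, Q (b j)‖ ≤ M := by
    intro n m h
    set u := ∑ j ∈ Finset.Ico n m, Q (b j) with hu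
    set R := ∑ j ∈ Finset.Ico n m, r j with hR
    have huW : u ∈ Submodule.span ℝ (Set.range v) := Submodule.sum_mem _ fun j _ => hQmem _
    have hRpos : (0:X) ≤ R := Finset.sum_nonneg fun j _ => hr0 j
    have huk : u - R = b n - b m := by
      calc u - R = -(R - u) := by abel
        _ = -(b m - b n) := by rw [← htel n m h]
        _ = b n - b m := by abel
    have hδu := hδ u huW R hRpos
    rw [huk] at hδu
    have h2 : δ * ‖u‖ ≤ 2 * ‖b 0‖ := by
      refine hδu.trans ?_
      calc ‖b n - b m‖ ≤ ‖b n‖ + ‖b m‖ := norm_sub_le _ _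
        _ ≤ 2 * ‖b 0‖ := by linarith [hbnorm n, hbnorm m]
    rw [hM, le_div_iff₀ hδpos]
    linarith [h2, mul_comm δ ‖u‖]
  have hbn0 : ∀ n, 0 ≤ b (n + 1) := fun n => by rw [hb]; exact le_sup_right
  have hkey : ∀ n m, 1 ≤ n → n ≤ m → ‖b m - b n‖ ^ 2 ≤ 2 * M * ‖Q (b n)‖ := by
    intro n m hn1 hnm
    obtain ⟨n', rfl⟩ : ∃ n', n = n' + 1 := ⟨n - 1, by omega⟩
    set u := ∑ j ∈ Finset.Ico (n' + 1) m, Q (b j) with hu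
    set R := ∑ j ∈ Finset.Ico (n' + 1) m, r j with hR
    have hRpos : (0:X) ≤ R := Finset.sum_nonneg fun j _ => hr0 j
    have hbm : b m = b (n' + 1) + R - u := by
      have h := htel (n' + 1) m hnm
      calc b m = b (n' + 1) + (b m - b (n' + 1)) := by abel
        _ = b (n' + 1) + (R - u) := by rw [h]
        _ = b (n' + 1) + R - u := by abel
    have hinner1 : 0 ≤ ⟪b (n' + 1), R⟫ := my_inner_nonneg (hbn0 n') hRpos
    have hinner2 : ⟪b (n' + 1) - Q (b (n' + 1)), u⟫ = 0 := by
      rw [hu, inner_sum]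
      refine Finset.sum_eq_zero fun j _ => ?_
      exact hperpQ _ (hbQperp (n' + 1)) _
    have hinner3 : ⟪b (n' + 1), u⟫ ≤ ‖Q (b (n' + 1))‖ * M := by
      have hsplit : ⟪b (n' + 1), u⟫ = ⟪Q (b (n' + 1)), u⟫ := by
        have h4 : b (n' + 1) = (b (n' + 1) - Q (b (n' + 1))) + Q (b (n' + 1)) := by abel
        conv_lhs => rw [h4]
        rw [inner_add_left, hinner2, zero_add]
      rw [hsplit]
      calc ⟪Q (b (n' + 1)), u⟫ ≤ ‖Q (b (n' + 1))‖ * ‖u‖ := real_inner_le_norm _ _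
        _ ≤ ‖Q (b (n' + 1))‖ * M := by
            exact mul_le_mul_of_nonneg_left (hSsum _ _ hnm) (norm_nonneg _)
    have hib : ‖b (n' + 1)‖ ^ 2 - ‖Q (b (n' + 1))‖ * M ≤ ⟪b (n' + 1), b m⟫ := by
      rw [hbm, inner_sub_right, inner_add_right, real_inner_self_eq_norm_sq]
      linarith [hinner1, hinner3]
    have hBm' : ‖b m‖ ^ 2 ≤ ‖b (n' + 1)‖ ^ 2 := hBanti hnm
    have hexp : ‖b m - b (n' + 1)‖ ^ 2 =
        ‖b m‖ ^ 2 - 2 * ⟪b m, b (n' + 1)⟫ + ‖b (n' + 1)‖ ^ 2 := norm_sub_sq_real _ _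
    rw [hexp, real_inner_comm]
    linarith [hib, hBm', mul_comm M ‖Q (b (n' + 1))‖]
  have hcauchy : CauchySeq b := by
    rw [Metric.cauchySeq_iff']
    intro ε hε
    have htend : Tendsto (fun n => 2 * M * ‖Q (b n)‖) atTop (nhds 0) := by
      simpa using hQn0.const_mul (2 * M)
    have hev : ∀ᶠ n in atTop, 2 * M * ‖Q (b n)‖ < ε ^ 2 :=
      htend.eventually_lt_const (by positivity)
    obtain ⟨N₀, hN₀⟩ := (hev.and (eventually_ge_atTop 1)).exists
    refine ⟨N₀, fun n hn => ?_⟩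
    rw [dist_eq_norm]
    have h1 := hkey N₀ n hN₀.2 hn
    have h2 : ‖b n - b N₀‖ ^ 2 < ε ^ 2 := lt_of_le_of_lt h1 hN₀.1
    exact lt_of_pow_lt_pow_left₀ 2 hε.le h2
  obtain ⟨y, hy⟩ := cauchySeq_tendsto_of_complete hcauchy
  have hQ0 : Tendsto (fun n => Q (b n)) atTop (nhds 0) :=
    tendsto_zero_iff_norm_tendsto_zero.mpr hQn0
  have haten' : Tendsto (fun n => a (n + 1)) atTop (nhds y) := by
    have h1 : Tendsto (fun n => b n - Q (b n)) atTop (nhds (y - 0)) := hy.sub hQ0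
    rw [sub_zero] at h1
    have h2 : (fun n => a (n + 1)) = fun n => b n - Q (b n) := funext fun n => haQ n
    rw [h2]
    exact h1
  have haten : Tendsto a atTop (nhds y) := (tendsto_add_atTop_iff_nat 1).mp haten'
  have hyperp : ∀ i, ⟪y, v i⟫ = 0 := by
    intro i
    have h1 : Tendsto (fun n => ⟪a (n + 1), v i⟫) atTop (nhds ⟪y, v i⟫) :=
      haten'.inner tendsto_const_nhds
    have h2 : (fun n => ⟪a (n + 1), v i⟫) = fun _ => (0:ℝ) := funext fun n => haperp n i
    rw [h2] at h1
    exact (tendsto_nhds_unique tendsto_const_nhds h1).symm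
  have hypos : 0 ≤ y := by
    have h1 : Tendsto (fun n => b (n + 1)) atTop (nhds y) := hy.comp (tendsto_add_atTop_nat 1)
    exact le_of_tendsto_of_tendsto' tendsto_const_nhds h1 hbn0
  exact ⟨y, hyperp, hypos, haten, hy⟩
end
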